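/- arXiv:2501.00161 — 8 statements merged into one kernel-verified Lean document; each statement's English description precedes it below -/
import Mathlib

section
/- Let G and H be graphs, let (X_u)_{u ∈ V(H)} be an induced minor model of H in G, and let u ∈ V(H) be a vertex with exactly two neighbors v and w in H such that the bag X_u is minimal. Then there is a unique vertex x_v ∈ X_u having a neighbor in X_v and a unique vertex x_w ∈ X_u having a neighbor in X_w, and the subgraph of G induced by X_u is a path whose endpoints are x_v and x_w. -/
/-- `X` is an induced minor model of `H` in `G`: the bags are nonempty, pairwise
disjoint, each induces a connected subgraph of `G`, and two distinct bags are joined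
by an edge of `G` iff the corresponding vertices are adjacent in `H`. -/
def IsIMModel {V W : Type} (G : SimpleGraph V) (H : SimpleGraph W) (X : W → Set V) : Prop :=
  (∀ u, (X u).Nonempty) ∧
  (∀ u v : W, u ≠ v → Disjoint (X u) (X v)) ∧
  (∀ u, (G.induce (X u)).Connected) ∧
  (∀ u v : W, u ≠ v → ((∃ x ∈ X u, ∃ y ∈ X v, G.Adj x y) ↔ H.Adj u v))

/-- `H` is an induced minor of `G`. -/
def IsInducedMinor {V W : Type} (H : SimpleGraph W) (G : SimpleGraph V) : Prop :=
  ∃ X : W → Set V, IsIMModel G H X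

/-- `H` is an induced subgraph of `G`. -/
def IsInducedSubgraph {V W : Type} (H : SimpleGraph W) (G : SimpleGraph V) : Prop :=
  ∃ f : W → V, Function.Injective f ∧ ∀ x y : W, G.Adj (f x) (f y) ↔ H.Adj x y

/-- The bag `X u` is minimal: replacing it by any proper subset never yields again an
induced minor model of `H` in `G`. -/
def MinimalBag {V W : Type} [DecidableEq W] (G : SimpleGraph V) (H : SimpleGraph W)
    (X : W → Set V) (u : W) : Prop :=
  ∀ Y : Set V, Y ⊂ X u → ¬ IsIMModel G H (Function.update X u Y)

namespace StmtAux

open SimpleGraph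

variable {V : Type} {G : SimpleGraph V}

/-- Lift a walk whose support lies in `Y` to the induced subgraph on `Y`. -/
def toInduce {Y : Set V} : ∀ {a b : V} (p : G.Walk a b) (h : ∀ x ∈ p.support, x ∈ Y),
    (G.induce Y).Walk ⟨a, h a p.start_mem_support⟩ ⟨b, h b p.end_mem_support⟩
  | _, _, SimpleGraph.Walk.nil, _ => SimpleGraph.Walk.nil
  | _, _, SimpleGraph.Walk.cons hadj q, h =>
      SimpleGraph.Walk.cons (by simpa using hadj)
        (toInduce q (fun x hx => h x (by simp [Walk.support_cons, hx])))

/-- Push a walk in the induced subgraph down to `G`. -/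
def ofInduce {Y : Set V} : ∀ {a b : ↥Y}, (G.induce Y).Walk a b → G.Walk a.val b.val
  | _, _, SimpleGraph.Walk.nil => SimpleGraph.Walk.nil
  | _, _, SimpleGraph.Walk.cons hadj q => SimpleGraph.Walk.cons (by simpa using hadj) (ofInduce q)

theorem support_ofInduce {Y : Set V} : ∀ {a b : ↥Y} (p : (G.induce Y).Walk a b),
    (ofInduce p).support = p.support.map Subtype.val
  | _, _, SimpleGraph.Walk.nil => by simp [ofInduce]
  | _, _, SimpleGraph.Walk.cons hadj q => by
      simp [ofInduce, Walk.support_cons, support_ofInduce q]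

theorem edges_ofInduce {Y : Set V} : ∀ {a b : ↥Y} (p : (G.induce Y).Walk a b),
    (ofInduce p).edges = p.edges.map (Sym2.map Subtype.val)
  | _, _, SimpleGraph.Walk.nil => by simp [ofInduce]
  | _, _, SimpleGraph.Walk.cons hadj q => by
      simp [ofInduce, Walk.edges_cons, edges_ofInduce q]

/-- The induced subgraph on the support of a walk is connected. -/
theorem induce_support_connected [DecidableEq V] {a b : V} (p : G.Walk a b) :
    (G.induce {x | x ∈ p.support}).Connected := by
  rw [SimpleGraph.connected_iff]
  refine ⟨?_, ⟨⟨a, p.start_mem_support⟩⟩⟩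
  rintro ⟨x, hx⟩ ⟨y, hy⟩
  have hx' : x ∈ p.support := hx
  have hy' : y ∈ p.support := hy
  have h : ∀ z ∈ ((p.takeUntil x hx').reverse.append (p.takeUntil y hy')).support,
      z ∈ {x | x ∈ p.support} := by
    intro z hz
    rw [Walk.mem_support_append_iff] at hz
    rcases hz with hz | hz
    · rw [Walk.support_reverse, List.mem_reverse] at hz
      exact p.support_takeUntil_subset hx' hz
    · exact p.support_takeUntil_subset hy' hz
  exact ⟨toInduce ((p.takeUntil x hx').reverse.append (p.takeUntil y hy')) h⟩

theorem edge_getVert_mem : ∀ {a b : V} (p : G.Walk a b) {i : ℕ}, i < p.length →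
    s(p.getVert i, p.getVert (i + 1)) ∈ p.edges
  | _, _, SimpleGraph.Walk.nil, i, h => absurd h (by simp)
  | _, _, SimpleGraph.Walk.cons hadj q, 0, h => by
      simp [Walk.getVert_zero, Walk.getVert_cons_succ, Walk.edges_cons]
  | _, _, SimpleGraph.Walk.cons hadj q, (i + 1), h => by
      rw [Walk.getVert_cons_succ, Walk.getVert_cons_succ, Walk.edges_cons]
      exact List.mem_cons_of_mem _ (edge_getVert_mem q (by simpa [Walk.length_cons] using h))

theorem getVert_takeUntil_length [DecidableEq V] {a b x : V} (p : G.Walk a b)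
    (hx : x ∈ p.support) : p.getVert (p.takeUntil x hx).length = x := by
  have h : ((p.takeUntil x hx).append (p.dropUntil x hx)).getVert (p.takeUntil x hx).length
      = x := by
    rw [Walk.getVert_append]
    simp
  rwa [p.take_spec hx] at h

theorem length_takeUntil_eq_dist [DecidableEq V] (hc : G.Connected) {a b x : V} (p : G.Walk a b)
    (hp : p.length = G.dist a b) (hx : x ∈ p.support) :
    (p.takeUntil x hx).length = G.dist a x := by
  have h1 : G.dist a x ≤ (p.takeUntil x hx).length := SimpleGraph.dist_le _
  have h2 : G.dist x b ≤ (p.dropUntil x hx).length := SimpleGraph.dist_le _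
  have h3 : (p.takeUntil x hx).length + (p.dropUntil x hx).length = p.length := by
    have h := congrArg Walk.length (p.take_spec hx)
    rw [Walk.length_append] at h
    exact h
  have h4 := hc.dist_triangle (u := a) (v := x) (w := b)
  omega

/-- A shortest walk is an induced path: adjacent support vertices are joined by a walk edge. -/
theorem shortest_induced [DecidableEq V] (hc : G.Connected) {a b : V}
    (p : G.Walk a b) (hp : p.length = G.dist a b) {x y : V}
    (hx : x ∈ p.support) (hy : y ∈ p.support) (hadj : G.Adj x y) :
    s(x, y) ∈ p.edges := by
  have key : ∀ {x y : V} (hx : x ∈ p.support) (hy : y ∈ p.support), G.Adj x y →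
      (p.takeUntil x hx).length < (p.takeUntil y hy).length → s(x, y) ∈ p.edges := by
    intro x y hx hy hadj hlt
    have hgx := getVert_takeUntil_length p hx
    have hgy := getVert_takeUntil_length p hy
    have hdi := length_takeUntil_eq_dist hc p hp hx
    have hdj := length_takeUntil_eq_dist hc p hp hy
    have hxy : G.dist x y = 1 := SimpleGraph.dist_eq_one_iff_adj.mpr hadj
    have htri := hc.dist_triangle (u := a) (v := x) (w := y)
    have hij : (p.takeUntil y hy).length = (p.takeUntil x hx).length + 1 := by omega
    have hjlen : (p.takeUntil y hy).length ≤ p.length := p.length_takeUntil_le hy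
    have hilt : (p.takeUntil x hx).length < p.length := by omega
    have hmem := edge_getVert_mem p hilt
    rw [hgx, ← hij, hgy] at hmem
    exact hmem
  rcases lt_trichotomy (p.takeUntil x hx).length (p.takeUntil y hy).length with h | h | h
  · exact key hx hy hadj h
  · exfalso
    apply hadj.ne
    have hgx := getVert_takeUntil_length p hx
    have hgy := getVert_takeUntil_length p hy
    rw [← hgx, ← hgy, h]
  · rw [Sym2.eq_swap]
    exact key hy hx hadj.symm h

theorem not_start_mem_dropUntil_support [DecidableEq V] {a b x : V}
    (p : G.Walk a b) (hp : p.IsPath) (hx : x ∈ p.support) (hxa : x ≠ a) :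
    a ∉ (p.dropUntil x hx).support := by
  intro ha
  have hnd : p.support.Nodup := hp.support_nodup
  rw [← p.take_spec hx, Walk.support_append] at hnd
  have hdisj := List.disjoint_of_nodup_append hnd
  have h1 : a ∈ (p.takeUntil x hx).support := Walk.start_mem_support _
  have h2 : a ∈ (p.dropUntil x hx).support.tail := by
    rw [(p.dropUntil x hx).support_eq_cons] at ha
    rcases List.mem_cons.mp ha with h | h
    · exact absurd h.symm hxa
    · exact h
  exact hdisj h1 h2

theorem not_end_mem_takeUntil_support [DecidableEq V] {a b x : V}
    (p : G.Walk a b) (hp : p.IsPath) (hx : x ∈ p.support) (hxb : x ≠ b) :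
    b ∉ (p.takeUntil x hx).support := by
  intro hb
  have hnd : p.support.Nodup := hp.support_nodup
  rw [← p.take_spec hx, Walk.support_append] at hnd
  have hdisj := List.disjoint_of_nodup_append hnd
  have h2 : b ∈ (p.dropUntil x hx).support.tail := by
    have hbm : b ∈ (p.dropUntil x hx).support := Walk.end_mem_support _
    rw [(p.dropUntil x hx).support_eq_cons] at hbm
    rcases List.mem_cons.mp hbm with h | h
    · exact absurd h.symm hxb
    · exact h
  exact hdisj hb h2

/-- Replacing the bag of `u` by a connected subset that still attaches to both `X v` and
`X w` yields again an induced minor model. -/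
theorem model_update {W : Type} [DecidableEq W] {H : SimpleGraph W}
    {X : W → Set V} (hX : IsIMModel G H X) {u v w : W}
    (hnbr : H.neighborSet u = {v, w}) {Y : Set V} (hYsub : Y ⊆ X u)
    (hYconn : (G.induce Y).Connected)
    (hv : ∃ x ∈ Y, ∃ y ∈ X v, G.Adj x y) (hw : ∃ x ∈ Y, ∃ y ∈ X w, G.Adj x y) :
    IsIMModel G H (Function.update X u Y) := by
  obtain ⟨hne, hdisj, hconn, hadj⟩ := hX
  have hYne : Y.Nonempty := by obtain ⟨x, hx, _⟩ := hv; exact ⟨x, hx⟩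
  have hmem : ∀ t : W, H.Adj u t → t = v ∨ t = w := by
    intro t ht
    have : t ∈ H.neighborSet u := ht
    rw [hnbr] at this
    simpa using this
  have hatt : ∀ t : W, H.Adj u t → ∃ x ∈ Y, ∃ y ∈ X t, G.Adj x y := by
    intro t ht
    rcases hmem t ht with rfl | rfl
    · exact hv
    · exact hw
  refine ⟨?_, ?_, ?_, ?_⟩
  · intro t
    rcases eq_or_ne t u with rfl | h
    · rw [Function.update_self]; exact hYne
    · rw [Function.update_of_ne h]; exact hne t
  · intro s t hst
    rcases eq_or_ne s u with rfl | hs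
    · rw [Function.update_self, Function.update_of_ne (Ne.symm hst)]
      exact (hdisj s t hst).mono_left hYsub
    · rcases eq_or_ne t u with rfl | ht
      · rw [Function.update_self, Function.update_of_ne hs]
        exact (hdisj s t hst).mono_right hYsub
      · rw [Function.update_of_ne hs, Function.update_of_ne ht]
        exact hdisj s t hst
  · intro t
    rcases eq_or_ne t u with rfl | h
    · rw [Function.update_self]; exact hYconn
    · rw [Function.update_of_ne h]; exact hconn t
  · intro s t hst
    rcases eq_or_ne s u with rfl | hs
    · rw [Function.update_self, Function.update_of_ne (Ne.symm hst)]
      constructor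
      · rintro ⟨x, hx, y, hy, hxy⟩
        exact (hadj s t hst).mp ⟨x, hYsub hx, y, hy, hxy⟩
      · exact hatt t
    · rcases eq_or_ne t u with rfl | ht
      · rw [Function.update_self, Function.update_of_ne hs]
        constructor
        · rintro ⟨x, hx, y, hy, hxy⟩
          exact ((hadj t s (Ne.symm hst)).mp ⟨y, hYsub hy, x, hx, hxy.symm⟩).symm
        · intro h
          obtain ⟨x, hx, y, hy, hxy⟩ := hatt s h.symm
          exact ⟨y, hy, x, hx, hxy.symm⟩
      · rw [Function.update_of_ne hs, Function.update_of_ne ht]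
        exact hadj s t hst

end StmtAux

open SimpleGraph StmtAux in
/-- If `u` has exactly the two neighbors `v ≠ w` in `H` and its bag `X u` is minimal, then
there is a unique vertex `xv ∈ X u` with a neighbor in `X v`, a unique vertex `xw ∈ X u`
with a neighbor in `X w`, and `G[X u]` is a path with endpoints `xv` and `xw`. -/
theorem stmt1 {V W : Type} [Fintype V] [Fintype W] [DecidableEq W]
    (G : SimpleGraph V) (H : SimpleGraph W) (X : W → Set V)
    (hX : IsIMModel G H X) (u v w : W) (hvw : v ≠ w)
    (hnbr : H.neighborSet u = {v, w})
    (hmin : MinimalBag G H X u) :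
    ∃ xv xw : V, xv ∈ X u ∧ xw ∈ X u ∧
      (∃ y ∈ X v, G.Adj xv y) ∧
      (∀ z ∈ X u, (∃ y ∈ X v, G.Adj z y) → z = xv) ∧
      (∃ y ∈ X w, G.Adj xw y) ∧
      (∀ z ∈ X u, (∃ y ∈ X w, G.Adj z y) → z = xw) ∧
      ∃ p : G.Walk xv xw, p.IsPath ∧
        (∀ z : V, z ∈ p.support ↔ z ∈ X u) ∧
        (∀ x y : V, x ∈ X u → y ∈ X u → (G.Adj x y ↔ s(x, y) ∈ p.edges)) := by
  classical
  have huv : H.Adj u v := by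
    have h : v ∈ H.neighborSet u := by rw [hnbr]; exact Set.mem_insert _ _
    exact h
  have huw : H.Adj u w := by
    have h : w ∈ H.neighborSet u := by rw [hnbr]; exact Set.mem_insert_iff.mpr (Or.inr rfl)
    exact h
  obtain ⟨a, haX, ya, hyaX, haya⟩ := (hX.2.2.2 u v huv.ne).mpr huv
  obtain ⟨b, hbX, yb, hybX, hbyb⟩ := (hX.2.2.2 u w huw.ne).mpr huw
  have hGc : (G.induce (X u)).Connected := hX.2.2.1 u
  obtain ⟨q, hqlen⟩ := hGc.exists_walk_length_eq_dist ⟨a, haX⟩ ⟨b, hbX⟩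
  have hqpath : q.IsPath := q.isPath_of_length_eq_dist hqlen
  set P : G.Walk a b := ofInduce q with hPdef
  have hPsupp : P.support = q.support.map Subtype.val := support_ofInduce q
  have hPpath : P.IsPath := by
    apply SimpleGraph.Walk.IsPath.mk'
    rw [hPsupp]
    exact hqpath.support_nodup.map Subtype.val_injective
  have hYsub : {x | x ∈ P.support} ⊆ X u := by
    intro z hz
    have hz' : z ∈ P.support := hz
    rw [hPsupp] at hz'
    obtain ⟨z', _, rfl⟩ := List.mem_map.mp hz'
    exact z'.2
  have hmodel := model_update hX hnbr hYsub (induce_support_connected P)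
    ⟨a, P.start_mem_support, ya, hyaX, haya⟩ ⟨b, P.end_mem_support, yb, hybX, hbyb⟩
  have hYeq : {x | x ∈ P.support} = X u := by
    by_contra hne'
    exact hmin _ (hYsub.ssubset_of_ne hne') hmodel
  have hsupp : ∀ z : V, z ∈ P.support ↔ z ∈ X u := fun z => by
    constructor
    · intro hz; exact hYsub hz
    · intro hz; rw [← hYeq] at hz; exact hz
  refine ⟨a, b, haX, hbX, ⟨ya, hyaX, haya⟩, ?_, ⟨yb, hybX, hbyb⟩, ?_, P, hPpath, hsupp, ?_⟩
  · -- uniqueness of the attachment to X v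
    intro z hzX hzv
    by_contra hza
    have hzP : z ∈ P.support := (hsupp z).mpr hzX
    have hY'sub : {x | x ∈ (P.dropUntil z hzP).support} ⊆ X u := fun x hx =>
      (hsupp x).mp (P.support_dropUntil_subset hzP hx)
    have hmodel' := model_update hX hnbr hY'sub (induce_support_connected (P.dropUntil z hzP))
      ⟨z, (P.dropUntil z hzP).start_mem_support, hzv⟩
      ⟨b, (P.dropUntil z hzP).end_mem_support, yb, hybX, hbyb⟩
    have hprop : {x | x ∈ (P.dropUntil z hzP).support} ≠ X u := by
      intro heq
      have ha' : a ∈ {x | x ∈ (P.dropUntil z hzP).support} := by rw [heq]; exact haX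
      exact not_start_mem_dropUntil_support P hPpath hzP hza ha'
    exact hmin _ (hY'sub.ssubset_of_ne hprop) hmodel'
  · -- uniqueness of the attachment to X w
    intro z hzX hzw
    by_contra hzb
    have hzP : z ∈ P.support := (hsupp z).mpr hzX
    have hY'sub : {x | x ∈ (P.takeUntil z hzP).support} ⊆ X u := fun x hx =>
      (hsupp x).mp (P.support_takeUntil_subset hzP hx)
    have hmodel' := model_update hX hnbr hY'sub (induce_support_connected (P.takeUntil z hzP))
      ⟨a, (P.takeUntil z hzP).start_mem_support, ya, hyaX, haya⟩
      ⟨z, (P.takeUntil z hzP).end_mem_support, hzw⟩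
    have hprop : {x | x ∈ (P.takeUntil z hzP).support} ≠ X u := by
      intro heq
      have hb' : b ∈ {x | x ∈ (P.takeUntil z hzP).support} := by rw [heq]; exact hbX
      exact not_end_mem_takeUntil_support P hPpath hzP hzb hb'
    exact hmin _ (hY'sub.ssubset_of_ne hprop) hmodel'
  · -- induced path condition
    intro x y hxX hyX
    constructor
    · intro hadj'
      have hx : x ∈ P.support := (hsupp x).mpr hxX
      have hy : y ∈ P.support := (hsupp y).mpr hyX
      rw [hPsupp] at hx hy
      obtain ⟨x', hx'q, rfl⟩ := List.mem_map.mp hx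
      obtain ⟨y', hy'q, rfl⟩ := List.mem_map.mp hy
      have hadjq : (G.induce (X u)).Adj x' y' := by
        simp only [SimpleGraph.comap_adj]
        exact hadj'
      have hedge := shortest_induced hGc q hqlen hx'q hy'q hadjq
      have : P.edges = q.edges.map (Sym2.map Subtype.val) := edges_ofInduce q
      rw [this]
      exact List.mem_map.mpr ⟨s(x', y'), hedge, Sym2.map_pair_eq _ _ _⟩
    · exact fun h => P.adj_of_mem_edges h
end

section
/- Let H and G be graphs, let P = p_1 p_2 … p_ℓ be an induced path in H all of whose internal vertices p_2, …, p_{ℓ−1} have degree 2 in H (the extremities p_1 and p_ℓ are allowed to be adjacent in H), and let (X_u)_{u ∈ V(H)} be an induced minor model of H in G. Then there exists an induced minor model (X'_u)_{u ∈ V(H)} of H in G with ⋃_{u} X'_u ⊆ ⋃_{u} X_u such that every internal vertex of P has a trivial bag in (X'_u), X'_w = X_w for every vertex w ∈ V(H) ∖ V(P), and X'_e = X_e for at least one of the two extremities e of P. -/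
open SimpleGraph

namespace StmtAux

variable {V : Type} {G : SimpleGraph V}

/-- Prefix of a walk up to index `n`. -/
def wtake : {u v : V} → (p : G.Walk u v) → (n : ℕ) → G.Walk u (p.getVert n)
  | _, _, .nil, _ => .nil
  | _, _, .cons _ _, 0 => Walk.nil
  | _, _, .cons h q, (n + 1) => Walk.cons h (wtake q n)

lemma wtake_length : ∀ {u v : V} (p : G.Walk u v) (n : ℕ), n ≤ p.length →
    (wtake p n).length = n
  | _, _, .nil, n, hn => by
      simp at hn; subst hn; rfl
  | _, _, .cons h q, 0, _ => by simp [wtake]; rfl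
  | _, _, .cons h q, (n+1), hn => by
      simp only [wtake, Walk.length_cons]
      exact congrArg (· + 1) (wtake_length q n (by simpa using hn))

lemma wtake_getVert : ∀ {u v : V} (p : G.Walk u v) (n i : ℕ), i ≤ n →
    (wtake p n).getVert i = p.getVert i
  | _, _, .nil, n, i, _ => by
      cases n <;> cases i <;> simp [wtake, Walk.getVert]
  | _, _, .cons h q, 0, i, hi => by
      simp at hi; subst hi; simp [wtake]; rfl
  | _, _, .cons h q, (n+1), 0, _ => by simp [wtake]
  | _, _, .cons h q, (n+1), (i+1), hi => by
      simp only [wtake, Walk.getVert_cons_succ]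
      exact wtake_getVert q n i (by omega)

lemma length_drop : ∀ {u v : V} (p : G.Walk u v) (n : ℕ),
    (p.drop n).length = p.length - n
  | _, _, .nil, n => by
      cases n
      · rw [Walk.drop.eq_def]; rfl
      · rw [Walk.drop.eq_def]; exact (Nat.zero_sub _).symm
  | _, _, .cons h q, 0 => by rw [Walk.drop.eq_def]; simp
  | _, _, .cons h q, (n+1) => by
      rw [Walk.drop.eq_def]
      show (q.drop n).length = _
      rw [length_drop q n]
      simp

lemma getVert_drop : ∀ {u v : V} (p : G.Walk u v) (n i : ℕ),
    (p.drop n).getVert i = p.getVert (n + i)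
  | _, _, .nil, n, i => by
      cases n <;> cases i <;> (rw [Walk.drop.eq_def]; try rfl)
  | _, _, .cons h q, 0, i => by rw [Walk.drop.eq_def]; simp
  | _, _, .cons h q, (n+1), i => by
      rw [Walk.drop.eq_def]
      show (q.drop n).getVert i = _
      rw [getVert_drop q n i]
      have : n + 1 + i = (n + i) + 1 := by omega
      rw [this, Walk.getVert_cons_succ]

lemma getVert_inj : ∀ {u v : V} (p : G.Walk u v), p.IsPath → ∀ i j, i ≤ p.length →
    j ≤ p.length → p.getVert i = p.getVert j → i = j
  | _, _, .nil, _, i, j, hi, hj, _ => by simp at hi hj; omega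
  | _, _, .cons h q, hp, 0, 0, _, _, _ => rfl
  | u, v, .cons h q, hp, 0, (j+1), hi, hj, hij => by
      rw [Walk.cons_isPath_iff] at hp
      exact absurd (Walk.mem_support_iff_exists_getVert.2
        ⟨j, by simpa [Walk.getVert_cons_succ] using hij.symm, by simpa using hj⟩) hp.2
  | u, v, .cons h q, hp, (i+1), 0, hi, hj, hij => by
      rw [Walk.cons_isPath_iff] at hp
      exact absurd (Walk.mem_support_iff_exists_getVert.2
        ⟨i, by simpa [Walk.getVert_cons_succ] using hij, by simpa using hi⟩) hp.2
  | _, _, .cons h q, hp, (i+1), (j+1), hi, hj, hij => by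
      rw [Walk.cons_isPath_iff] at hp
      have := getVert_inj q hp.1 i j (by simpa using hi) (by simpa using hj)
        (by simpa [Walk.getVert_cons_succ] using hij)
      omega

lemma mem_edges_exists : ∀ {u v : V} (p : G.Walk u v) (e : Sym2 V), e ∈ p.edges →
    ∃ i < p.length, e = s(p.getVert i, p.getVert (i+1))
  | _, _, .nil, e, he => by simp at he
  | u, v, .cons h q, e, he => by
      simp only [Walk.edges_cons, List.mem_cons] at he
      rcases he with he | he
      · exact ⟨0, by simp, by simpa [Walk.getVert_cons_succ, Walk.getVert_zero] using he⟩
      · obtain ⟨i, hi, hei⟩ := mem_edges_exists q e he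
        exact ⟨i + 1, by simpa using Nat.succ_lt_succ hi,
          by simpa [Walk.getVert_cons_succ] using hei⟩

lemma reach_of_induce {s : Set V} (hs : (G.induce s).Connected) {G' : SimpleGraph V}
    (hsub : ∀ a b, a ∈ s → b ∈ s → G.Adj a b → G'.Adj a b) {x y : V}
    (hx : x ∈ s) (hy : y ∈ s) : G'.Reachable x y := by
  let f : G.induce s →g G' :=
    { toFun := Subtype.val,
      map_rel' := fun {a b} hab => hsub a b a.2 b.2 hab }
  exact (hs.preconnected ⟨x, hx⟩ ⟨y, hy⟩).map f

lemma connected_singleton (z : V) : (G.induce {z}).Connected := by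
  have : Nonempty ({z} : Set V) := ⟨⟨z, rfl⟩⟩
  constructor
  rintro ⟨a, ha⟩ ⟨b, hb⟩
  simp only [Set.mem_singleton_iff] at ha hb
  subst ha; subst hb
  exact Reachable.refl _

lemma connected_insert {s : Set V} (hs : (G.induce s).Connected) {x y : V}
    (hy : y ∈ s) (hadj : G.Adj x y) : (G.induce (insert x s)).Connected := by
  have hsub : s ⊆ insert x s := Set.subset_insert x s
  have : Nonempty (insert x s : Set V) := ⟨⟨y, hsub hy⟩⟩
  constructor
  rintro ⟨a, ha⟩ ⟨b, hb⟩
  have key : ∀ c (hc : c ∈ insert x s),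
      (G.induce (insert x s)).Reachable ⟨c, hc⟩ ⟨y, hsub hy⟩ := by
    intro c hc
    rcases Set.mem_insert_iff.1 hc with rfl | hc'
    · exact Adj.reachable (by simpa using hadj)
    · exact Reachable.map (G.induceHomOfLE hsub).toHom
        (hs.preconnected ⟨c, hc'⟩ ⟨y, hy⟩)
  exact (key a ha).trans (key b hb).symm

/-- Auxiliary graph. -/
def auxG (G : SimpleGraph V) (A B S' : Set V) : SimpleGraph V where
  Adj x y := G.Adj x y ∧ x ∈ S' ∧ y ∈ S' ∧ ¬(x ∈ A ∧ y ∈ B) ∧ ¬(x ∈ B ∧ y ∈ A)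
  symm := ⟨by
    rintro x y ⟨h, hx, hy, h1, h2⟩
    exact ⟨h.symm, hy, hx, fun ⟨a, b⟩ => h2 ⟨b, a⟩, fun ⟨a, b⟩ => h1 ⟨b, a⟩⟩⟩
  loopless := ⟨fun x ⟨h, _⟩ => G.loopless.irrefl x h⟩

@[simp] lemma auxG_adj {G : SimpleGraph V} {A B S' : Set V} {x y : V} :
    (auxG G A B S').Adj x y ↔
      G.Adj x y ∧ x ∈ S' ∧ y ∈ S' ∧ ¬(x ∈ A ∧ y ∈ B) ∧ ¬(x ∈ B ∧ y ∈ A) := Iff.rfl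

end StmtAux



/-- Let `p` be an induced path in `H` (its two extremities are allowed to be adjacent)
all of whose internal vertices have degree 2 in `H`, and let `X` be an induced minor
model of `H` in `G`. Then there is an induced minor model `X'` of `H` in `G` included
in `X` whose bags at internal vertices of `p` are trivial, which agrees with `X`
outside of `p`, and agrees with `X` on at least one extremity of `p`. -/
theorem stmt2 {V W : Type} [Fintype V] [Fintype W]
    (H : SimpleGraph W) (G : SimpleGraph V)
    (e₁ e₂ : W) (p : H.Walk e₁ e₂) (hp : p.IsPath)
    (hind : ∀ x y : W, x ∈ p.support → y ∈ p.support → H.Adj x y →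
      s(x, y) ∈ p.edges ∨ (x = e₁ ∧ y = e₂) ∨ (x = e₂ ∧ y = e₁))
    (hdeg : ∀ x ∈ p.support, x ≠ e₁ → x ≠ e₂ → (H.neighborSet x).ncard = 2)
    (X : W → Set V) (hX : IsIMModel G H X) :
    ∃ X' : W → Set V, IsIMModel G H X' ∧
      ((⋃ w, X' w) ⊆ ⋃ w, X w) ∧
      (∀ x ∈ p.support, x ≠ e₁ → x ≠ e₂ → ∃ z : V, X' x = {z}) ∧
      (∀ w : W, w ∉ p.support → X' w = X w) ∧
      (X' e₁ = X e₁ ∨ X' e₂ = X e₂) := by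
  classical
  obtain ⟨hne, hdisj, hconn, hiff⟩ := hX
  by_cases hllow : p.length ≤ 1
  · refine ⟨X, ⟨hne, hdisj, hconn, hiff⟩, subset_rfl, ?_, fun w _ => rfl, Or.inl rfl⟩
    intro x hx hx1 hx2
    rw [SimpleGraph.Walk.mem_support_iff_exists_getVert] at hx
    obtain ⟨m, hm, hmle⟩ := hx
    rcases Nat.eq_zero_or_pos m with rfl | hm1
    · rw [p.getVert_zero] at hm; exact absurd hm.symm hx1
    · have : p.getVert m = e₂ := p.getVert_of_length_le (by omega)
      rw [this] at hm; exact absurd hm.symm hx2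
  push_neg at hllow
  have hl2 : 2 ≤ p.length := hllow
  set L := p.length with hLdef
  -- basic facts about the path
  have hv0 : p.getVert 0 = e₁ := p.getVert_zero
  have hvL : p.getVert L = e₂ := p.getVert_length
  have hinj : ∀ i j, i ≤ L → j ≤ L → p.getVert i = p.getVert j → i = j :=
    fun i j hi hj h => StmtAux.getVert_inj p hp i j hi hj h
  have hvmem : ∀ i, i ≤ L → p.getVert i ∈ p.support :=
    fun i hi => SimpleGraph.Walk.mem_support_iff_exists_getVert.2 ⟨i, rfl, hi⟩
  have he12 : e₁ ≠ e₂ := by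
    intro h
    have := hinj 0 L (by omega) (by omega) (by rw [hv0, hvL, h])
    omega
  have hHadj : ∀ i, i < L → H.Adj (p.getVert i) (p.getVert (i+1)) :=
    fun i hi => p.adj_getVert_succ hi
  have hHchar : ∀ i j, i ≤ L → j ≤ L → H.Adj (p.getVert i) (p.getVert j) →
      j = i + 1 ∨ i = j + 1 ∨ (i = 0 ∧ j = L) ∨ (i = L ∧ j = 0) := by
    intro i j hi hj hadj
    rcases hind _ _ (hvmem i hi) (hvmem j hj) hadj with hmem | ⟨h1, h2⟩ | ⟨h1, h2⟩
    · obtain ⟨k, hk, hek⟩ := StmtAux.mem_edges_exists p _ hmem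
      rw [Sym2.eq_iff] at hek
      rcases hek with ⟨hik, hjk⟩ | ⟨hik, hjk⟩
      · have h1 := hinj i k hi (by omega) hik
        have h2 := hinj j (k+1) hj (by omega) hjk
        omega
      · have h1 := hinj i (k+1) hi (by omega) hik
        have h2 := hinj j k hj (by omega) hjk
        omega
    · have := hinj i 0 hi (by omega) (by rw [hv0]; exact h1)
      have := hinj j L hj (by omega) (by rw [hvL]; exact h2)
      omega
    · have := hinj i L hi (by omega) (by rw [hvL]; exact h1)
      have := hinj j 0 hj (by omega) (by rw [hv0]; exact h2)
      omega
  have hHout : ∀ w, w ∉ p.support → ∀ i, 1 ≤ i → i < L → ¬ H.Adj w (p.getVert i) := by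
    intro w hw i hi1 hi2 hadj
    have hne1 : p.getVert i ≠ e₁ := by
      intro h
      have := hinj i 0 (by omega) (by omega) (by rw [hv0]; exact h); omega
    have hne2 : p.getVert i ≠ e₂ := by
      intro h
      have := hinj i L (by omega) (by omega) (by rw [hvL]; exact h); omega
    have hcard := hdeg (p.getVert i) (hvmem i (by omega)) hne1 hne2
    have hm1 : p.getVert (i-1) ∈ H.neighborSet (p.getVert i) := by
      have := hHadj (i-1) (by omega)
      have heq : i - 1 + 1 = i := by omega
      rw [heq] at this
      exact this.symm
    have hm2 : p.getVert (i+1) ∈ H.neighborSet (p.getVert i) := hHadj i (by omega)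
    have hsub : ({p.getVert (i-1), p.getVert (i+1)} : Set W) ⊆ H.neighborSet (p.getVert i) := by
      intro z hz
      rcases hz with rfl | hz
      · exact hm1
      · rw [Set.mem_singleton_iff] at hz; subst hz; exact hm2
    have hne' : p.getVert (i-1) ≠ p.getVert (i+1) := by
      intro h
      have := hinj (i-1) (i+1) (by omega) (by omega) h; omega
    have hpair : ({p.getVert (i-1), p.getVert (i+1)} : Set W).ncard = 2 := Set.ncard_pair hne'
    have heq : ({p.getVert (i-1), p.getVert (i+1)} : Set W) = H.neighborSet (p.getVert i) :=
      Set.eq_of_subset_of_ncard_le hsub (by rw [hcard, hpair]) (Set.toFinite _)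
    have hwmem : w ∈ H.neighborSet (p.getVert i) := hadj.symm
    rw [← heq] at hwmem
    rcases hwmem with rfl | hwm
    · exact hw (hvmem (i-1) (by omega))
    · rw [Set.mem_singleton_iff] at hwm; subst hwm
      exact hw (hvmem (i+1) (by omega))
  -- the auxiliary graph
  set S' : Set V := {x | (∃ i, 1 ≤ i ∧ i < L ∧ x ∈ X (p.getVert i)) ∨ x ∈ X e₁ ∨ x ∈ X e₂}
    with hS'def
  set G' := StmtAux.auxG G (X e₁) (X e₂) S' with hG'def
  have hvne : ∀ i j, i ≤ L → j ≤ L → i ≠ j → Disjoint (X (p.getVert i)) (X (p.getVert j)) :=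
    fun i j hi hj hij => hdisj _ _ (fun h => hij (hinj i j hi hj h))
  have hAB : Disjoint (X e₁) (X e₂) := hdisj _ _ he12
  have hIA : ∀ i, 1 ≤ i → i < L → ∀ x ∈ X (p.getVert i), x ∉ X e₁ := by
    intro i h1 h2 x hx hA
    have hA' : x ∈ X (p.getVert 0) := by rw [hv0]; exact hA
    exact Set.disjoint_left.mp (hvne i 0 (by omega) (by omega) (by omega)) hx hA'
  have hIB : ∀ i, 1 ≤ i → i < L → ∀ x ∈ X (p.getVert i), x ∉ X e₂ := by
    intro i h1 h2 x hx hB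
    have hB' : x ∈ X (p.getVert L) := by rw [hvL]; exact hB
    exact Set.disjoint_left.mp (hvne i L (by omega) (by omega) (by omega)) hx hB'
  -- existence of a walk in G' from X e₁ to X e₂
  have hmemS'I : ∀ i, 1 ≤ i → i < L → ∀ x ∈ X (p.getVert i), x ∈ S' := by
    intro i h1 h2 x hx; rw [hS'def]; exact Or.inl ⟨i, h1, h2, hx⟩
  have hmemS'A : ∀ x ∈ X e₁, x ∈ S' := by
    intro x hx; rw [hS'def]; exact Or.inr (Or.inl hx)
  have hmemS'B : ∀ x ∈ X e₂, x ∈ S' := by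
    intro x hx; rw [hS'def]; exact Or.inr (Or.inr hx)
  have hmkG' : ∀ x y, G.Adj x y → x ∈ S' → y ∈ S' → ¬(x ∈ X e₁ ∧ y ∈ X e₂) →
      ¬(x ∈ X e₂ ∧ y ∈ X e₁) → G'.Adj x y := by
    intro x y h1 h2 h3 h4 h5
    rw [hG'def, StmtAux.auxG_adj]
    exact ⟨h1, h2, h3, h4, h5⟩
  have hreachbag : ∀ i, 1 ≤ i → i < L → ∀ x ∈ X (p.getVert i), ∀ y ∈ X (p.getVert i),
      G'.Reachable x y := by
    intro i h1 h2 x hx y hy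
    exact StmtAux.reach_of_induce (hconn (p.getVert i))
      (fun c d hC hD hcd => hmkG' c d hcd (hmemS'I i h1 h2 c hC) (hmemS'I i h1 h2 d hD)
        (fun h => hIA i h1 h2 c hC h.1) (fun h => hIB i h1 h2 c hC h.1)) hx hy
  have hedgebags : ∀ i, i < L → ∃ x ∈ X (p.getVert i), ∃ y ∈ X (p.getVert (i+1)), G.Adj x y :=
    fun i hi => (hiff _ _ (fun h => by have := hinj i (i+1) (by omega) (by omega) h; omega)).mpr
      (hHadj i hi)
  have hexists : ∃ m : ℕ, ∃ a ∈ X e₁, ∃ b ∈ X e₂, ∃ w : G'.Walk a b, w.length = m := by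
    have claim : ∀ i, 1 ≤ i → i < L → ∃ y ∈ X (p.getVert i), ∃ a ∈ X e₁, G'.Reachable a y := by
      intro i
      induction i with
      | zero => omega
      | succ k ih =>
        intro _ hkL
        rcases Nat.eq_zero_or_pos k with rfl | hk1
        · obtain ⟨x, hx, y, hy, hxy⟩ := hedgebags 0 (by omega)
          rw [hv0] at hx
          have hadj : G'.Adj x y := hmkG' x y hxy (hmemS'A x hx)
            (hmemS'I 1 (by omega) (by omega) y hy)
            (fun h => hIB 1 (by omega) (by omega) y hy h.2)
            (fun h => Set.disjoint_left.mp hAB hx h.1)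
          exact ⟨y, hy, x, hx, hadj.reachable⟩
        · obtain ⟨y, hy, a', ha', hr⟩ := ih (by omega) (by omega)
          obtain ⟨x', hx', y', hy', hxy⟩ := hedgebags k (by omega)
          have hadj : G'.Adj x' y' := hmkG' x' y' hxy
            (hmemS'I k (by omega) (by omega) x' hx')
            (hmemS'I (k+1) (by omega) (by omega) y' hy')
            (fun h => hIA k (by omega) (by omega) x' hx' h.1)
            (fun h => hIB k (by omega) (by omega) x' hx' h.1)
          exact ⟨y', hy', a', ha',
            (hr.trans (hreachbag k (by omega) (by omega) y hy x' hx')).trans hadj.reachable⟩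
    obtain ⟨y, hy, a', ha', hr⟩ := claim (L-1) (by omega) (by omega)
    obtain ⟨x', hx', y', hy', hxy⟩ := hedgebags (L-1) (by omega)
    have hy'B : y' ∈ X e₂ := by
      have heq : L - 1 + 1 = L := by omega
      rw [heq, hvL] at hy'; exact hy'
    have hadj : G'.Adj x' y' := hmkG' x' y' hxy
      (hmemS'I (L-1) (by omega) (by omega) x' hx') (hmemS'B y' hy'B)
      (fun h => hIA (L-1) (by omega) (by omega) x' hx' h.1)
      (fun h => hIB (L-1) (by omega) (by omega) x' hx' h.1)
    have hreach : G'.Reachable a' y' :=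
      (hr.trans (hreachbag (L-1) (by omega) (by omega) y hy x' hx')).trans hadj.reachable
    obtain ⟨w⟩ := hreach
    exact ⟨w.length, a', ha', y', hy'B, w, rfl⟩
  set n := Nat.find hexists with hndef
  have hmin : ∀ m, m < n → ¬ ∃ a ∈ X e₁, ∃ b ∈ X e₂, ∃ w : G'.Walk a b, w.length = m :=
    fun m hm => Nat.find_min hexists hm
  obtain ⟨a, ha, b, hb, q0, hq0⟩ := Nat.find_spec hexists
  set q := q0.bypass with hqdef
  have hqpath : q.IsPath := q0.bypass_isPath
  have hqlen : q.length = n := by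
    have h1 : q.length ≤ n := by rw [hndef, ← hq0]; exact q0.length_bypass_le
    rcases Nat.lt_or_ge q.length n with h | h
    · exact absurd ⟨a, ha, b, hb, q, rfl⟩ (hmin _ h)
    · omega
  have hg0 : q.getVert 0 = a := q.getVert_zero
  have hgn : q.getVert n = b := by rw [← hqlen]; exact q.getVert_length
  have hn2 : 2 ≤ n := by
    by_contra hcon
    push_neg at hcon
    have hn0 : n ≠ 0 := by
      intro h0
      have : a = b := q.eq_of_length_eq_zero (by omega)
      subst this
      exact Set.disjoint_left.mp hAB ha hb
    have hadj := q.adj_getVert_succ (i := 0) (by omega)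
    rw [hg0] at hadj
    have hb1 : q.getVert 1 = b := by rw [show (1:ℕ) = n from by omega]; exact hgn
    rw [hb1] at hadj
    exact hadj.2.2.2.1 ⟨ha, hb⟩
  have hG'adj : ∀ j, j < n → G'.Adj (q.getVert j) (q.getVert (j+1)) :=
    fun j hj => q.adj_getVert_succ (by omega)
  have hGadj : ∀ j, j < n → G.Adj (q.getVert j) (q.getVert (j+1)) :=
    fun j hj => (hG'adj j hj).1
  have hgS' : ∀ j, j ≤ n → q.getVert j ∈ S' := by
    intro j hj
    rcases Nat.lt_or_ge j n with h | h
    · exact (hG'adj j h).2.1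
    · have : j = n := by omega
      rw [this, hgn]; exact Or.inr (Or.inr hb)
  have hginj : ∀ j k, j ≤ n → k ≤ n → q.getVert j = q.getVert k → j = k :=
    fun j k hj hk h => StmtAux.getVert_inj q hqpath j k (by omega) (by omega) h
  have hnotA : ∀ j, 1 ≤ j → j ≤ n - 1 → q.getVert j ∉ X e₁ := by
    intro j h1 h2 hA
    exact hmin (n - j) (by omega)
      ⟨q.getVert j, hA, b, hb, q.drop j, by rw [StmtAux.length_drop, hqlen]⟩
  have hnotB : ∀ j, 1 ≤ j → j ≤ n - 1 → q.getVert j ∉ X e₂ := by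
    intro j h1 h2 hB
    exact hmin j (by omega)
      ⟨a, ha, q.getVert j, hB, StmtAux.wtake q j, StmtAux.wtake_length q j (by omega)⟩
  have hgI : ∀ j, 1 ≤ j → j ≤ n - 1 → ∃ i, 1 ≤ i ∧ i < L ∧ q.getVert j ∈ X (p.getVert i) := by
    intro j h1 h2
    rcases hgS' j (by omega) with h | h | h
    · exact h
    · exact absurd h (hnotA j h1 h2)
    · exact absurd h (hnotB j h1 h2)
  have hnotadjA : ∀ j, 2 ≤ j → j ≤ n - 1 → ∀ x ∈ X e₁, ¬ G.Adj x (q.getVert j) := by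
    intro j h2 hj x hx hadj
    have hG'' : G'.Adj x (q.getVert j) := hmkG' _ _ hadj (hmemS'A x hx) (hgS' j (by omega))
      (fun h => hnotB j (by omega) hj h.2) (fun h => Set.disjoint_left.mp hAB hx h.1)
    refine hmin (n - j + 1) (by omega) ⟨x, hx, b, hb, Walk.cons hG'' (q.drop j), ?_⟩
    rw [Walk.length_cons, StmtAux.length_drop, hqlen]
  have hnotadjB : ∀ j, 1 ≤ j → j ≤ n - 2 → ∀ y ∈ X e₂, ¬ G.Adj (q.getVert j) y := by
    intro j h1 hj y hy hadj
    have hG'' : G'.Adj (q.getVert j) y := hmkG' _ _ hadj (hgS' j (by omega)) (hmemS'B y hy)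
      (fun h => hnotA j h1 (by omega) h.1) (fun h => hnotB j h1 (by omega) h.1)
    refine hmin (j + 1) (by omega) ⟨a, ha, y, hy, (StmtAux.wtake q j).concat hG'', ?_⟩
    rw [Walk.length_concat, StmtAux.wtake_length q j (by omega)]
  have hchord : ∀ j k, j + 2 ≤ k → k ≤ n → ¬(j = 0 ∧ k = n) →
      ¬ G.Adj (q.getVert j) (q.getVert k) := by
    intro j k hjk hkn hne0 hadj
    have hc1 : ¬(q.getVert j ∈ X e₁ ∧ q.getVert k ∈ X e₂) := by
      rintro ⟨hjA, hkB⟩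
      rcases Nat.eq_zero_or_pos j with rfl | hj1
      · have hkn' : k ≠ n := fun h => hne0 ⟨rfl, h⟩
        exact hnotB k (by omega) (by omega) hkB
      · exact hnotA j hj1 (by omega) hjA
    have hc2 : ¬(q.getVert j ∈ X e₂ ∧ q.getVert k ∈ X e₁) := by
      rintro ⟨hjB, hkA⟩
      rcases Nat.eq_zero_or_pos j with rfl | hj1
      · rw [hg0] at hjB; exact Set.disjoint_left.mp hAB ha hjB
      · exact hnotB j hj1 (by omega) hjB
    have hG'' : G'.Adj (q.getVert j) (q.getVert k) :=
      hmkG' _ _ hadj (hgS' j (by omega)) (hgS' k hkn) hc1 hc2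
    refine hmin (j + 1 + (n - k)) (by omega) ⟨a, ha, b, hb,
      (StmtAux.wtake q j).append (Walk.cons hG'' (q.drop k)), ?_⟩
    rw [Walk.length_append, Walk.length_cons, StmtAux.wtake_length q j (by omega),
      StmtAux.length_drop, hqlen]
    omega
  -- the bag function
  set f : ℕ → ℕ := fun j => if h : 1 ≤ j ∧ j ≤ n - 1 then (hgI j h.1 h.2).choose else 0
    with hfdef
  have hf : ∀ j, 1 ≤ j → j ≤ n - 1 →
      1 ≤ f j ∧ f j < L ∧ q.getVert j ∈ X (p.getVert (f j)) := by
    intro j h1 h2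
    have : f j = (hgI j h1 h2).choose := by
      simp only [hfdef]; rw [dif_pos (⟨h1, h2⟩ : 1 ≤ j ∧ j ≤ n - 1)]
    rw [this]
    exact (hgI j h1 h2).choose_spec
  have hf1 : f 1 = 1 := by
    obtain ⟨hs1, hs2, hs3⟩ := hf 1 (by omega) (by omega)
    have hadj : G.Adj a (q.getVert 1) := by
      have := hGadj 0 (by omega); rw [hg0] at this; exact this
    have hne' : e₁ ≠ p.getVert (f 1) := by
      intro h
      have := hinj 0 (f 1) (by omega) (by omega) (by rw [hv0]; exact h)
      omega
    have hH : H.Adj e₁ (p.getVert (f 1)) :=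
      (hiff _ _ hne').mp ⟨a, ha, q.getVert 1, hs3, hadj⟩
    have hH' : H.Adj (p.getVert 0) (p.getVert (f 1)) := by rw [hv0]; exact hH
    rcases hHchar 0 (f 1) (by omega) (by omega) hH' with h | h | h | h <;> omega
  have hfn : f (n-1) = L - 1 := by
    obtain ⟨hs1, hs2, hs3⟩ := hf (n-1) (by omega) (by omega)
    have hadj : G.Adj (q.getVert (n-1)) b := by
      have := hGadj (n-1) (by omega)
      have heq : n - 1 + 1 = n := by omega
      rw [heq, hgn] at this; exact this
    have hne' : p.getVert (f (n-1)) ≠ e₂ := by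
      intro h
      have := hinj (f (n-1)) L (by omega) (by omega) (by rw [hvL]; exact h)
      omega
    have hH : H.Adj (p.getVert (f (n-1))) e₂ :=
      (hiff _ _ hne').mp ⟨q.getVert (n-1), hs3, b, hb, hadj⟩
    have hH' : H.Adj (p.getVert (f (n-1))) (p.getVert L) := by rw [hvL]; exact hH
    rcases hHchar (f (n-1)) L (by omega) (by omega) hH' with h | h | h | h <;> omega
  have hfstep : ∀ j, 1 ≤ j → j + 1 ≤ n - 1 → f (j+1) ≤ f j + 1 := by
    intro j h1 h2
    obtain ⟨ha1, ha2, ha3⟩ := hf j h1 (by omega)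
    obtain ⟨hb1, hb2, hb3⟩ := hf (j+1) (by omega) h2
    by_cases heq : p.getVert (f j) = p.getVert (f (j+1))
    · have := hinj (f j) (f (j+1)) (by omega) (by omega) heq; omega
    · have hH : H.Adj (p.getVert (f j)) (p.getVert (f (j+1))) :=
        (hiff _ _ heq).mp ⟨q.getVert j, ha3, q.getVert (j+1), hb3, hGadj j (by omega)⟩
      rcases hHchar (f j) (f (j+1)) (by omega) (by omega) hH with h | h | h | h <;> omega
  have hnL : L ≤ n := by
    have key : ∀ j, 1 ≤ j → j ≤ n - 1 → f j ≤ j := by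
      intro j
      induction j with
      | zero => omega
      | succ k ih =>
        intro _ hk
        rcases Nat.eq_zero_or_pos k with rfl | hk1
        · exact hf1.le
        · have h5 := ih (by omega) (by omega)
          have h6 := hfstep k (by omega) (by omega)
          omega
    have := key (n-1) (by omega) (by omega)
    rw [hfn] at this
    omega
  -- the new model
  set T : Set V := {x | x ∈ X e₂ ∨ ∃ j, L ≤ j ∧ j ≤ n - 1 ∧ q.getVert j = x} with hTdef
  set X' : W → Set V := fun x =>
    if x = e₂ then T
    else if h : ∃ i, 1 ≤ i ∧ i < L ∧ p.getVert i = x then {q.getVert h.choose} else X x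
    with hX'def
  have hX'e₂ : X' e₂ = T := by rw [hX'def]; simp
  have hX'int : ∀ i, 1 ≤ i → i < L → X' (p.getVert i) = {q.getVert i} := by
    intro i h1 h2
    have hne2 : p.getVert i ≠ e₂ := by
      intro h
      have := hinj i L (by omega) (by omega) (by rw [hvL]; exact h); omega
    have hex : ∃ i', 1 ≤ i' ∧ i' < L ∧ p.getVert i' = p.getVert i := ⟨i, h1, h2, rfl⟩
    have hchoose : hex.choose = i := by
      obtain ⟨hc1, hc2, hc3⟩ := hex.choose_spec
      exact hinj _ i (by omega) (by omega) hc3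
    rw [hX'def]
    simp only [if_neg hne2, dif_pos hex, hchoose]
  have hX'e₁ : X' e₁ = X e₁ := by
    have hnex : ¬ ∃ i, 1 ≤ i ∧ i < L ∧ p.getVert i = e₁ := by
      rintro ⟨i, h1, h2, h3⟩
      have := hinj i 0 (by omega) (by omega) (by rw [hv0]; exact h3); omega
    rw [hX'def]
    simp only [if_neg he12, dif_neg hnex]
  have hX'out : ∀ w, w ∉ p.support → X' w = X w := by
    intro w hw
    have hne2 : w ≠ e₂ := by
      intro h; subst h; exact hw p.end_mem_support
    have hnex : ¬ ∃ i, 1 ≤ i ∧ i < L ∧ p.getVert i = w := by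
      rintro ⟨i, h1, h2, h3⟩
      exact hw (h3 ▸ hvmem i (by omega))
    rw [hX'def]
    simp only [if_neg hne2, dif_neg hnex]
  have hclass : ∀ u : W, u ∉ p.support ∨ u = e₁ ∨ u = e₂ ∨
      ∃ i, 1 ≤ i ∧ i < L ∧ p.getVert i = u := by
    intro u
    by_cases hs : u ∈ p.support
    · rw [SimpleGraph.Walk.mem_support_iff_exists_getVert] at hs
      obtain ⟨i, hi, hile⟩ := hs
      rcases Nat.eq_zero_or_pos i with rfl | h1
      · right; left; rw [← hi]; exact hv0
      · rcases Nat.lt_or_ge i L with h2 | h2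
        · right; right; right; exact ⟨i, h1, h2, hi⟩
        · right; right; left
          have hiL : i = L := by omega
          subst hiL
          rw [← hi]; exact hvL
    · left; exact hs
  have hqnotbag : ∀ (w : W), (w ∉ p.support ∨ w = e₁ ∨ w = e₂) → ∀ j, 1 ≤ j → j ≤ n - 1 →
      q.getVert j ∉ X w := by
    intro w hw j h1 h2 hmem
    obtain ⟨hf1', hf2', hf3'⟩ := hf j h1 h2
    have hwne : w ≠ p.getVert (f j) := by
      rcases hw with hw | rfl | rfl
      · intro h; subst h; exact hw (hvmem _ (by omega))
      · intro h
        have := hinj 0 (f j) (by omega) (by omega) (by rw [hv0]; exact h); omega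
      · intro h
        have := hinj L (f j) (by omega) (by omega) (by rw [hvL]; exact h); omega
    exact Set.disjoint_left.mp (hdisj w _ hwne) hmem hf3'
  have hgLT : q.getVert L ∈ T := by
    rw [hTdef]
    rcases Nat.lt_or_ge L n with h | h
    · exact Or.inr ⟨L, le_refl L, by omega, rfl⟩
    · have hLn : L = n := by omega
      left
      rw [hLn, hgn]; exact hb
  -- components of the model property
  have hNE : ∀ u, (X' u).Nonempty := by
    intro u
    rcases hclass u with h | h | h | ⟨i, h1, h2, hvi⟩
    · rw [hX'out u h]; exact hne u
    · rw [h, hX'e₁]; exact hne e₁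
    · rw [h, hX'e₂]
      obtain ⟨z, hz⟩ := hne e₂
      exact ⟨z, by rw [hTdef]; exact Or.inl hz⟩
    · rw [← hvi, hX'int i h1 h2]; exact ⟨_, rfl⟩
  have dq : ∀ (w : W), (w ∉ p.support ∨ w = e₁ ∨ w = e₂) → ∀ i, 1 ≤ i → i < L →
      Disjoint (X w) (X' (p.getVert i)) := by
    intro w hw i h1 h2
    rw [hX'int i h1 h2, Set.disjoint_singleton_right]
    exact fun hmem => hqnotbag w hw i (by omega) (by omega) hmem
  have dT : ∀ (w : W), (w ∉ p.support ∨ w = e₁) → Disjoint (X w) T := by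
    intro w hw
    rw [Set.disjoint_left]
    intro x hx hxT
    rw [hTdef] at hxT
    rcases hxT with hxT | ⟨j, hj1, hj2, rfl⟩
    · have hwne : w ≠ e₂ := by
        rcases hw with hw | rfl
        · intro h; subst h; exact hw p.end_mem_support
        · exact he12
      exact Set.disjoint_left.mp (hdisj w e₂ hwne) hx hxT
    · exact hqnotbag w (by tauto) j (by omega) hj2 hx
  have dTq : ∀ i, 1 ≤ i → i < L → Disjoint T (X' (p.getVert i)) := by
    intro i h1 h2
    rw [hX'int i h1 h2, Set.disjoint_singleton_right]
    intro hmem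
    rw [hTdef] at hmem
    rcases hmem with hmem | ⟨j, hj1, hj2, hj3⟩
    · exact hnotB i (by omega) (by omega) hmem
    · have := hginj j i (by omega) (by omega) hj3
      omega
  have hDISJ : ∀ u u' : W, u ≠ u' → Disjoint (X' u) (X' u') := by
    intro u u' huu'
    rcases hclass u with h | h | h | ⟨i, h1, h2, hvi⟩ <;>
      rcases hclass u' with h' | h' | h' | ⟨i', h1', h2', hvi'⟩
    · rw [hX'out _ h, hX'out _ h']; exact hdisj _ _ huu'
    · rw [h'] at huu'; rw [hX'out _ h, h', hX'e₁]; exact hdisj _ _ huu'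
    · rw [hX'out _ h, h', hX'e₂]; exact dT _ (Or.inl h)
    · rw [hX'out _ h, ← hvi']; exact dq _ (Or.inl h) i' h1' h2'
    · rw [h] at huu'; rw [h, hX'e₁, hX'out _ h']; exact hdisj _ _ huu'
    · exact absurd (h.trans h'.symm) huu'
    · rw [h, hX'e₁, h', hX'e₂]; exact dT e₁ (Or.inr rfl)
    · rw [h, hX'e₁, ← hvi']; exact dq e₁ (Or.inr (Or.inl rfl)) i' h1' h2'
    · rw [h, hX'e₂, hX'out _ h']; exact (dT _ (Or.inl h')).symm
    · rw [h, hX'e₂, h', hX'e₁]; exact (dT e₁ (Or.inr rfl)).symm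
    · exact absurd (h.trans h'.symm) huu'
    · rw [h, hX'e₂, ← hvi']; exact dTq i' h1' h2'
    · rw [← hvi, hX'out _ h']; exact (dq _ (Or.inl h') i h1 h2).symm
    · rw [← hvi, h', hX'e₁]; exact (dq e₁ (Or.inr (Or.inl rfl)) i h1 h2).symm
    · rw [← hvi, h', hX'e₂]; exact (dTq i h1 h2).symm
    · rw [← hvi, ← hvi', hX'int i h1 h2, hX'int i' h1' h2']
      have hii : i ≠ i' := by
        intro hh
        apply huu'
        rw [← hvi, ← hvi', hh]
      rw [Set.disjoint_singleton_right, Set.mem_singleton_iff]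
      intro hh
      exact hii ((hginj i' i (by omega) (by omega) hh).symm)
  have hCONN : ∀ u, (G.induce (X' u)).Connected := by
    intro u
    rcases hclass u with h | h | h | ⟨i, h1, h2, hvi⟩
    · rw [hX'out u h]; exact hconn u
    · rw [h, hX'e₁]; exact hconn e₁
    · rw [h, hX'e₂]
      have key : ∀ d, d ≤ n - L →
          (G.induce {x | x ∈ X e₂ ∨ ∃ j, n - d ≤ j ∧ j ≤ n - 1 ∧ q.getVert j = x}).Connected := by
        intro d
        induction d with
        | zero =>
          intro _
          have hset : {x | x ∈ X e₂ ∨ ∃ j, n - 0 ≤ j ∧ j ≤ n - 1 ∧ q.getVert j = x} = X e₂ := by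
            ext x
            simp only [Set.mem_setOf_eq]
            constructor
            · rintro (hx | ⟨j, hj1, hj2, rfl⟩)
              · exact hx
              · omega
            · exact fun hx => Or.inl hx
          rw [hset]; exact hconn e₂
        | succ d ih =>
          intro hd
          have hset : {x | x ∈ X e₂ ∨ ∃ j, n - (d+1) ≤ j ∧ j ≤ n - 1 ∧ q.getVert j = x} =
              insert (q.getVert (n - (d+1)))
                {x | x ∈ X e₂ ∨ ∃ j, n - d ≤ j ∧ j ≤ n - 1 ∧ q.getVert j = x} := by
            ext x
            simp only [Set.mem_setOf_eq, Set.mem_insert_iff]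
            constructor
            · rintro (hx | ⟨j, hj1, hj2, rfl⟩)
              · exact Or.inr (Or.inl hx)
              · rcases Nat.eq_or_lt_of_le hj1 with heq | hlt
                · left; rw [← heq]
                · exact Or.inr (Or.inr ⟨j, by omega, hj2, rfl⟩)
            · rintro (rfl | hx | ⟨j, hj1, hj2, rfl⟩)
              · exact Or.inr ⟨n - (d+1), le_refl _, by omega, rfl⟩
              · exact Or.inl hx
              · exact Or.inr ⟨j, by omega, hj2, rfl⟩
          rw [hset]
          refine StmtAux.connected_insert (ih (by omega)) (y := q.getVert (n - d)) ?_ ?_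
          · rcases Nat.eq_zero_or_pos d with rfl | hd1
            · exact Or.inl (by simp only [Nat.sub_zero, hgn]; exact hb)
            · exact Or.inr ⟨n - d, le_refl _, by omega, rfl⟩
          · have hadj := hGadj (n - (d+1)) (by omega)
            have heq : n - (d+1) + 1 = n - d := by omega
            rw [heq] at hadj; exact hadj
      have hTset : T = {x | x ∈ X e₂ ∨ ∃ j, n - (n - L) ≤ j ∧ j ≤ n - 1 ∧ q.getVert j = x} := by
        rw [hTdef]
        ext x
        simp only [Set.mem_setOf_eq]
        constructor
        · rintro (hx | ⟨j, hj1, hj2, rfl⟩)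
          · exact Or.inl hx
          · exact Or.inr ⟨j, by omega, hj2, rfl⟩
        · rintro (hx | ⟨j, hj1, hj2, rfl⟩)
          · exact Or.inl hx
          · exact Or.inr ⟨j, by omega, hj2, rfl⟩
      rw [hTset]
      exact key (n - L) (le_refl _)
    · rw [← hvi, hX'int i h1 h2]; exact StmtAux.connected_singleton _
  have hsym : ∀ u u' : W, ((∃ x ∈ X' u, ∃ y ∈ X' u', G.Adj x y) ↔ H.Adj u u') →
      ((∃ x ∈ X' u', ∃ y ∈ X' u, G.Adj x y) ↔ H.Adj u' u) := by
    intro u u' h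
    rw [SimpleGraph.adj_comm, ← h]
    constructor
    · rintro ⟨x, hx, y, hy, hxy⟩; exact ⟨y, hy, x, hx, hxy.symm⟩
    · rintro ⟨x, hx, y, hy, hxy⟩; exact ⟨y, hy, x, hx, hxy.symm⟩
  have cOint : ∀ w, w ∉ p.support → ∀ i, 1 ≤ i → i < L →
      ((∃ x ∈ X' w, ∃ y ∈ X' (p.getVert i), G.Adj x y) ↔ H.Adj w (p.getVert i)) := by
    intro w hw i h1 h2
    rw [hX'out w hw, hX'int i h1 h2]
    constructor
    · rintro ⟨x, hx, y, hy, hxy⟩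
      rw [Set.mem_singleton_iff] at hy; subst hy
      obtain ⟨hf1', hf2', hf3'⟩ := hf i (by omega) (by omega)
      have hwne : w ≠ p.getVert (f i) := fun hh => hw (hh ▸ hvmem _ (by omega))
      exact absurd ((hiff w _ hwne).mp ⟨x, hx, _, hf3', hxy⟩)
        (hHout w hw (f i) (by omega) (by omega))
    · intro hH
      exact absurd hH (hHout w hw i h1 h2)
  have cOe₂ : ∀ w, w ∉ p.support →
      ((∃ x ∈ X' w, ∃ y ∈ X' e₂, G.Adj x y) ↔ H.Adj w e₂) := by
    intro w hw
    rw [hX'out w hw, hX'e₂]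
    have hwne : w ≠ e₂ := fun hh => hw (hh ▸ p.end_mem_support)
    constructor
    · rintro ⟨x, hx, y, hy, hxy⟩
      rw [hTdef] at hy
      rcases hy with hy | ⟨j, hj1, hj2, rfl⟩
      · exact (hiff w e₂ hwne).mp ⟨x, hx, y, hy, hxy⟩
      · obtain ⟨hf1', hf2', hf3'⟩ := hf j (by omega) hj2
        have hwne' : w ≠ p.getVert (f j) := fun hh => hw (hh ▸ hvmem _ (by omega))
        exact absurd ((hiff w _ hwne').mp ⟨x, hx, _, hf3', hxy⟩)
          (hHout w hw (f j) (by omega) (by omega))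
    · intro hH
      obtain ⟨x, hx, y, hy, hxy⟩ := (hiff w e₂ hwne).mpr hH
      exact ⟨x, hx, y, by rw [hTdef]; exact Or.inl hy, hxy⟩
  have cE1E2 : (∃ x ∈ X' e₁, ∃ y ∈ X' e₂, G.Adj x y) ↔ H.Adj e₁ e₂ := by
    rw [hX'e₁, hX'e₂]
    constructor
    · rintro ⟨x, hx, y, hy, hxy⟩
      rw [hTdef] at hy
      rcases hy with hy | ⟨j, hj1, hj2, rfl⟩
      · exact (hiff e₁ e₂ he12).mp ⟨x, hx, y, hy, hxy⟩
      · exact absurd hxy (hnotadjA j (by omega) (by omega) x hx)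
    · intro hH
      obtain ⟨x, hx, y, hy, hxy⟩ := (hiff e₁ e₂ he12).mpr hH
      exact ⟨x, hx, y, by rw [hTdef]; exact Or.inl hy, hxy⟩
  have cE1int : ∀ i, 1 ≤ i → i < L →
      ((∃ x ∈ X' e₁, ∃ y ∈ X' (p.getVert i), G.Adj x y) ↔ H.Adj e₁ (p.getVert i)) := by
    intro i h1 h2
    rw [hX'e₁, hX'int i h1 h2]
    rcases Nat.eq_or_lt_of_le h1 with heq | hgt
    · have hi1 : i = 1 := heq.symm
      subst hi1
      constructor
      · intro _
        have hH := hHadj 0 (by omega)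
        rw [hv0] at hH; exact hH
      · intro _
        refine ⟨a, ha, q.getVert 1, rfl, ?_⟩
        have hG := hGadj 0 (by omega); rw [hg0] at hG; exact hG
    · constructor
      · rintro ⟨x, hx, y, hy, hxy⟩
        rw [Set.mem_singleton_iff] at hy; subst hy
        exact absurd hxy (hnotadjA i (by omega) (by omega) x hx)
      · intro hH
        exfalso
        have hH' : H.Adj (p.getVert 0) (p.getVert i) := by rw [hv0]; exact hH
        rcases hHchar 0 i (by omega) (by omega) hH' with hc | hc | hc | hc <;> omega
  have cE2int : ∀ i, 1 ≤ i → i < L →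
      ((∃ x ∈ X' (p.getVert i), ∃ y ∈ X' e₂, G.Adj x y) ↔ H.Adj (p.getVert i) e₂) := by
    intro i h1 h2
    rw [hX'int i h1 h2, hX'e₂]
    by_cases hiL : i = L - 1
    · subst hiL
      constructor
      · intro _
        have hH := hHadj (L-1) (by omega)
        have heq : L - 1 + 1 = L := by omega
        rw [heq, hvL] at hH; exact hH
      · intro _
        refine ⟨q.getVert (L-1), rfl, q.getVert L, hgLT, ?_⟩
        have hG := hGadj (L-1) (by omega)
        have heq : L - 1 + 1 = L := by omega
        rw [heq] at hG; exact hG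
    · constructor
      · rintro ⟨x, hx, y, hy, hxy⟩
        rw [Set.mem_singleton_iff] at hx; subst hx
        rw [hTdef] at hy
        rcases hy with hy | ⟨j, hj1, hj2, rfl⟩
        · exact absurd hxy (hnotadjB i (by omega) (by omega) y hy)
        · exact absurd hxy (hchord i j (by omega) (by omega) (by omega))
      · intro hH
        exfalso
        have hH' : H.Adj (p.getVert i) (p.getVert L) := by rw [hvL]; exact hH
        rcases hHchar i L (by omega) (by omega) hH' with hc | hc | hc | hc <;> omega
  have cintint : ∀ i i', 1 ≤ i → i < L → 1 ≤ i' → i' < L → i < i' →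
      ((∃ x ∈ X' (p.getVert i), ∃ y ∈ X' (p.getVert i'), G.Adj x y) ↔
        H.Adj (p.getVert i) (p.getVert i')) := by
    intro i i' h1 h2 h1' h2' hii'
    rw [hX'int i h1 h2, hX'int i' h1' h2']
    constructor
    · rintro ⟨x, hx, y, hy, hxy⟩
      rw [Set.mem_singleton_iff] at hx hy; subst hx; subst hy
      have hii : i' = i + 1 := by
        by_contra hne'
        exact hchord i i' (by omega) (by omega) (by omega) hxy
      rw [hii]
      exact hHadj i (by omega)
    · intro hH
      rcases hHchar i i' (by omega) (by omega) hH with hc | hc | hc | hc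
      · exact ⟨q.getVert i, rfl, q.getVert i', rfl, by rw [hc]; exact hGadj i (by omega)⟩
      · omega
      · omega
      · omega
  have hIFF : ∀ u u' : W, u ≠ u' → ((∃ x ∈ X' u, ∃ y ∈ X' u', G.Adj x y) ↔ H.Adj u u') := by
    intro u u' huu'
    rcases hclass u with h | h | h | ⟨i, h1, h2, hvi⟩ <;>
      rcases hclass u' with h' | h' | h' | ⟨i', h1', h2', hvi'⟩
    · rw [hX'out _ h, hX'out _ h']; exact hiff _ _ huu'
    · rw [h'] at huu' ⊢; rw [hX'out _ h, hX'e₁]; exact hiff _ _ huu'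
    · rw [h'] at huu' ⊢; exact cOe₂ u h
    · rw [← hvi']; exact cOint u h i' h1' h2'
    · rw [h] at huu' ⊢; exact hsym _ _ (by rw [hX'out _ h', hX'e₁]; exact hiff _ _ huu'.symm)
    · exact absurd (h.trans h'.symm) huu'
    · rw [h, h']; exact cE1E2
    · rw [h, ← hvi']; exact cE1int i' h1' h2'
    · rw [h]; exact hsym _ _ (cOe₂ u' h')
    · rw [h, h']; exact hsym _ _ cE1E2
    · exact absurd (h.trans h'.symm) huu'
    · rw [h, ← hvi']; exact hsym _ _ (cE2int i' h1' h2')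
    · rw [← hvi]; exact hsym _ _ (cOint u' h' i h1 h2)
    · rw [← hvi, h']; exact hsym _ _ (cE1int i h1 h2)
    · rw [← hvi, h']; exact cE2int i h1 h2
    · have hii : i ≠ i' := by
        intro hh
        apply huu'
        rw [← hvi, ← hvi', hh]
      rw [← hvi, ← hvi']
      rcases Nat.lt_or_ge i i' with hlt | hge
      · exact cintint i i' h1 h2 h1' h2' hlt
      · exact hsym _ _ (cintint i' i h1' h2' h1 h2 (by omega))
  refine ⟨X', ⟨hNE, hDISJ, hCONN, hIFF⟩, ?_, ?_, hX'out, Or.inl hX'e₁⟩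
  · -- union subset
    intro x hx
    rw [Set.mem_iUnion] at hx ⊢
    obtain ⟨u, hu⟩ := hx
    rcases hclass u with h | h | h | ⟨i, h1, h2, hvi⟩
    · rw [hX'out u h] at hu; exact ⟨u, hu⟩
    · rw [h, hX'e₁] at hu; exact ⟨e₁, hu⟩
    · rw [h, hX'e₂, hTdef] at hu
      rcases hu with hu | ⟨j, hj1, hj2, rfl⟩
      · exact ⟨e₂, hu⟩
      · obtain ⟨hf1', hf2', hf3'⟩ := hf j (by omega) hj2
        exact ⟨p.getVert (f j), hf3'⟩
    · rw [← hvi, hX'int i h1 h2] at hu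
      rw [Set.mem_singleton_iff] at hu; subst hu
      obtain ⟨hf1', hf2', hf3'⟩ := hf i (by omega) (by omega)
      exact ⟨p.getVert (f i), hf3'⟩
  · -- trivial internal bags
    intro x hx hx1 hx2
    rcases hclass x with h | h | h | ⟨i, hi1, hi2, rfl⟩
    · exact absurd hx h
    · exact absurd h hx1
    · exact absurd h hx2
    · exact ⟨q.getVert i, hX'int i hi1 hi2⟩
end

section
/- Let H be a forest (an acyclic graph) and let u ∈ V(H) be a vertex of degree d ≥ 3. Let G be the graph obtained from H by deleting u, adding a set K_u of d new pairwise adjacent vertices, and adding a perfect matching between K_u and N_H(u) (each new vertex adjacent to exactly one former neighbor of u, and each former neighbor matched), with no other edges. Then H is an induced minor of G, but H is not an induced subgraph of G. -/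
/-- The graph obtained from `H` by deleting the vertex `u`, adding a clique of new
vertices indexed by the neighbors of `u`, and joining each new vertex to the
corresponding former neighbor of `u` (a perfect matching), with no other edges. -/
def cliqueBlowup {W : Type} (H : SimpleGraph W) (u : W) :
    SimpleGraph ({v : W // v ≠ u} ⊕ {w : W // H.Adj u w}) :=
  SimpleGraph.fromRel fun a b =>
    match a, b with
    | Sum.inl x, Sum.inl y => H.Adj (x : W) (y : W)
    | Sum.inr _, Sum.inr _ => True
    | Sum.inl x, Sum.inr y => (x : W) = (y : W)
    | Sum.inr x, Sum.inl y => (x : W) = (y : W)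

section Aux

variable {W : Type} {H : SimpleGraph W} {u : W}

lemma cb_inl_inl {x y : {v : W // v ≠ u}} :
    (cliqueBlowup H u).Adj (Sum.inl x) (Sum.inl y) ↔ H.Adj x.val y.val := by
  constructor
  · rintro ⟨-, h | h⟩
    · exact h
    · exact h.symm
  · intro h
    exact ⟨fun hc => h.ne (by cases hc; rfl), Or.inl h⟩

lemma cb_inl_inr {x : {v : W // v ≠ u}} {γ : {w : W // H.Adj u w}} :
    (cliqueBlowup H u).Adj (Sum.inl x) (Sum.inr γ) ↔ x.val = γ.val := by
  constructor
  · rintro ⟨-, h | h⟩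
    · exact h
    · exact h.symm
  · intro h
    exact ⟨by simp, Or.inl h⟩

lemma cb_inr_inl {x : {v : W // v ≠ u}} {γ : {w : W // H.Adj u w}} :
    (cliqueBlowup H u).Adj (Sum.inr γ) (Sum.inl x) ↔ x.val = γ.val := by
  constructor
  · rintro ⟨-, h | h⟩
    · exact h.symm
    · exact h
  · intro h
    exact ⟨by simp, Or.inr h⟩

lemma cb_inr_inr {γ δ : {w : W // H.Adj u w}} :
    (cliqueBlowup H u).Adj (Sum.inr γ) (Sum.inr δ) ↔ γ ≠ δ := by
  constructor
  · rintro ⟨h, -⟩ rfl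
    exact h rfl
  · intro h
    exact ⟨fun hc => h (by cases hc; rfl), Or.inl trivial⟩

lemma acyclic_no_triangle (hH : H.IsAcyclic) {x y z : W}
    (hxy : H.Adj x y) (hyz : H.Adj y z) (hxz : H.Adj x z) : False := by
  have hp : (SimpleGraph.Walk.cons hxy (SimpleGraph.Walk.cons hyz SimpleGraph.Walk.nil)).IsPath := by
    simp [SimpleGraph.Walk.isPath_def, hxy.ne, hxz.ne, hyz.ne]
  have h := SimpleGraph.isAcyclic_iff_path_unique.mp hH ⟨_, hp⟩ (SimpleGraph.Path.singleton hxz)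
  have h2 := congrArg (fun p : H.Path x z => p.1.length) h
  simp [SimpleGraph.Path.singleton] at h2

end Aux

/-- If `H` is a forest and `u` is a vertex of `H` of degree at least 3, then `H` is an
induced minor, but not an induced subgraph, of the graph obtained from `H` by replacing
`u` by a clique matched to the neighbors of `u`. -/
theorem stmt4 {W : Type} [Fintype W] (H : SimpleGraph W) (hH : H.IsAcyclic)
    (u : W) (hdeg : 3 ≤ (H.neighborSet u).ncard) :
    IsInducedMinor H (cliqueBlowup H u) ∧
      ¬ IsInducedSubgraph H (cliqueBlowup H u) := by
  classical
  constructor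
  · -- induced minor
    refine ⟨fun v => {p | Sum.elim (fun x => x.val = v) (fun _ => v = u) p}, ?_, ?_, ?_, ?_⟩
    · intro v
      by_cases hv : v = u
      · subst hv
        obtain ⟨w, hw⟩ := Set.nonempty_of_ncard_ne_zero (s := H.neighborSet v) (by omega)
        exact ⟨Sum.inr ⟨w, hw⟩, rfl⟩
      · exact ⟨Sum.inl ⟨v, hv⟩, rfl⟩
    · intro v v' hvv'
      rw [Set.disjoint_left]
      rintro (x | γ) hx hx'
      · exact hvv' (hx.symm.trans hx')
      · exact hvv' (hx.trans hx'.symm)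
    · intro v
      rw [SimpleGraph.connected_iff]
      constructor
      · rintro ⟨pa, hpa⟩ ⟨pb, hpb⟩
        by_cases hv : v = u
        · subst hv
          match pa, pb with
          | Sum.inl x, _ => exact absurd hpa x.prop
          | _, Sum.inl x => exact absurd hpb x.prop
          | Sum.inr γ, Sum.inr δ =>
            by_cases hgd : γ = δ
            · subst hgd
              exact SimpleGraph.Reachable.refl _
            · exact SimpleGraph.Adj.reachable (by exact cb_inr_inr.mpr hgd)
        · have ha : pa = Sum.inl ⟨v, hv⟩ := by
            match pa with
            | Sum.inl x => simp only [Set.mem_setOf_eq, Sum.elim_inl] at hpa; subst hpa; rfl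
            | Sum.inr γ => exact absurd hpa hv
          have hb : pb = Sum.inl ⟨v, hv⟩ := by
            match pb with
            | Sum.inl x => simp only [Set.mem_setOf_eq, Sum.elim_inl] at hpb; subst hpb; rfl
            | Sum.inr γ => exact absurd hpb hv
          have heq : (⟨pa, hpa⟩ : {p // p ∈ _}) = ⟨pb, hpb⟩ :=
            Subtype.ext (ha.trans hb.symm)
          rw [heq]
      · by_cases hv : v = u
        · subst hv
          obtain ⟨w, hw⟩ := Set.nonempty_of_ncard_ne_zero (s := H.neighborSet v) (by omega)
          exact ⟨⟨Sum.inr ⟨w, hw⟩, rfl⟩⟩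
        · exact ⟨⟨Sum.inl ⟨v, hv⟩, rfl⟩⟩
    · intro v v' hvv'
      constructor
      · rintro ⟨p, hp, q, hq, hadj⟩
        match p, q with
        | Sum.inl x, Sum.inl y =>
          simp only [Set.mem_setOf_eq, Sum.elim_inl] at hp hq
          subst hp; subst hq
          exact cb_inl_inl.mp hadj
        | Sum.inl x, Sum.inr δ =>
          simp only [Set.mem_setOf_eq, Sum.elim_inl, Sum.elim_inr] at hp hq
          subst hp; subst hq
          have := cb_inl_inr.mp hadj
          rw [this]
          exact δ.prop.symm
        | Sum.inr γ, Sum.inl y =>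
          simp only [Set.mem_setOf_eq, Sum.elim_inl, Sum.elim_inr] at hp hq
          subst hp; subst hq
          have := cb_inr_inl.mp hadj
          rw [this]
          exact γ.prop
        | Sum.inr γ, Sum.inr δ =>
          simp only [Set.mem_setOf_eq, Sum.elim_inr] at hp hq
          exact absurd (hp.trans hq.symm) hvv'
      · intro hadj
        by_cases hv : v = u
        · have hadj' : H.Adj u v' := hv ▸ hadj
          have hv' : v' ≠ u := fun hc => (hc ▸ hadj').ne rfl
          exact ⟨Sum.inr ⟨v', hadj'⟩, hv, Sum.inl ⟨v', hv'⟩, rfl, cb_inr_inl.mpr rfl⟩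
        · by_cases hv' : v' = u
          · have hadj' : H.Adj u v := (hv' ▸ hadj).symm
            exact ⟨Sum.inl ⟨v, hv⟩, rfl, Sum.inr ⟨v, hadj'⟩, hv', cb_inl_inr.mpr rfl⟩
          · refine ⟨Sum.inl ⟨v, hv⟩, rfl, Sum.inl ⟨v', hv'⟩, rfl, ?_⟩
            exact cb_inl_inl.mpr hadj
  · -- not an induced subgraph
    rintro ⟨f, finj, hf⟩
    -- the projection map
    set φ : W → W := fun w => Sum.elim (fun z => z.val) (fun _ => u) (f w) with hφ
    -- Step A : vertices of degree ≥ 3 are mapped to `inl`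
    have stepA : ∀ w : W, 3 ≤ (H.neighborSet w).ncard → ∃ x, f w = Sum.inl x := by
      intro w h3
      cases hfw : f w with
      | inl x => exact ⟨x, rfl⟩
      | inr γ =>
        exfalso
        have hinj : Set.InjOn (fun w' => (f w').isLeft) (H.neighborSet w) := by
          intro w1 hw1 w2 hw2 heq
          have ha1 : (cliqueBlowup H u).Adj (Sum.inr γ) (f w1) := by
            rw [← hfw]; exact (hf w w1).mpr hw1
          have ha2 : (cliqueBlowup H u).Adj (Sum.inr γ) (f w2) := by
            rw [← hfw]; exact (hf w w2).mpr hw2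
          cases hf1 : f w1 with
          | inl z1 =>
            cases hf2 : f w2 with
            | inl z2 =>
              rw [hf1] at ha1; rw [hf2] at ha2
              have e1 := cb_inr_inl.mp ha1
              have e2 := cb_inr_inl.mp ha2
              have : z1 = z2 := Subtype.ext (e1.trans e2.symm)
              exact finj (hf1.trans (this ▸ hf2.symm))
            | inr δ2 => simp [hf1, hf2] at heq
          | inr δ1 =>
            cases hf2 : f w2 with
            | inl z2 => simp [hf1, hf2] at heq
            | inr δ2 =>
              by_cases hdd : δ1 = δ2
              · exact finj (hf1.trans (hdd ▸ hf2.symm))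
              · exfalso
                rw [hf1] at ha1; rw [hf2] at ha2
                have hadj12 : (cliqueBlowup H u).Adj (f w1) (f w2) := by
                  rw [hf1, hf2]; exact cb_inr_inr.mpr hdd
                have h12 : H.Adj w1 w2 := (hf w1 w2).mp hadj12
                exact acyclic_no_triangle hH hw1 h12 hw2
        have hcard := Set.ncard_le_ncard_of_injOn (fun w' => (f w').isLeft)
          (fun a _ => Set.mem_univ _) hinj (Set.finite_univ)
        rw [Set.ncard_univ] at hcard
        simp [Nat.card_eq_fintype_card] at hcard
        omega
    -- Step B : degrees do not decrease along φ, for inl-vertices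
    have stepB : ∀ (w : W) (x : {v : W // v ≠ u}), f w = Sum.inl x →
        (H.neighborSet w).ncard ≤ (H.neighborSet x.val).ncard := by
      intro w x hfw
      refine Set.ncard_le_ncard_of_injOn φ ?_ ?_ (Set.toFinite _)
      · intro w' hw'
        have hadj : (cliqueBlowup H u).Adj (Sum.inl x) (f w') := by
          rw [← hfw]; exact (hf w w').mpr hw'
        cases hfw' : f w' with
        | inl z =>
          rw [hfw'] at hadj
          have := cb_inl_inl.mp hadj
          simpa [hφ, hfw'] using this
        | inr δ =>
          rw [hfw'] at hadj
          have he := cb_inl_inr.mp hadj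
          have : H.Adj x.val u := by
            have := δ.prop
            rw [← he] at this
            exact this.symm
          simpa [hφ, hfw'] using this
      · intro w1 hw1 w2 hw2 heq
        have ha1 : (cliqueBlowup H u).Adj (Sum.inl x) (f w1) := by
          rw [← hfw]; exact (hf w w1).mpr hw1
        have ha2 : (cliqueBlowup H u).Adj (Sum.inl x) (f w2) := by
          rw [← hfw]; exact (hf w w2).mpr hw2
        cases hf1 : f w1 with
        | inl z1 =>
          cases hf2 : f w2 with
          | inl z2 =>
            simp only [hφ, hf1, hf2, Sum.elim_inl] at heq
            exact finj (hf1.trans ((Subtype.ext heq : z1 = z2) ▸ hf2.symm))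
          | inr δ2 =>
            simp only [hφ, hf1, hf2, Sum.elim_inl, Sum.elim_inr] at heq
            exact absurd heq z1.prop
        | inr δ1 =>
          cases hf2 : f w2 with
          | inl z2 =>
            simp only [hφ, hf1, hf2, Sum.elim_inl, Sum.elim_inr] at heq
            exact absurd heq.symm z2.prop
          | inr δ2 =>
            rw [hf1] at ha1; rw [hf2] at ha2
            have e1 := cb_inl_inr.mp ha1
            have e2 := cb_inl_inr.mp ha2
            have : δ1 = δ2 := Subtype.ext (e1.symm.trans e2)
            exact finj (hf1.trans (this ▸ hf2.symm))
    -- final pigeonhole on high-degree vertices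
    set A : Finset W := Finset.univ.filter (fun w => 3 ≤ (H.neighborSet w).ncard) with hA
    have huA : u ∈ A := by simp [hA, hdeg]
    have himg : ∀ w ∈ A, φ w ∈ A.erase u := by
      intro w hw
      rw [hA, Finset.mem_filter] at hw
      obtain ⟨x, hx⟩ := stepA w hw.2
      have hdegx := le_trans hw.2 (stepB w x hx)
      rw [Finset.mem_erase]
      constructor
      · simpa [hφ, hx] using x.prop
      · simp only [hA, Finset.mem_filter, Finset.mem_univ, true_and]
        simpa [hφ, hx] using hdegx
    have hinjA : Set.InjOn φ A := by
      intro w1 hw1 w2 hw2 heq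
      rw [hA, Finset.mem_coe, Finset.mem_filter] at hw1 hw2
      obtain ⟨x1, hx1⟩ := stepA w1 hw1.2
      obtain ⟨x2, hx2⟩ := stepA w2 hw2.2
      simp only [hφ, hx1, hx2, Sum.elim_inl] at heq
      exact finj (hx1.trans ((Subtype.ext heq : x1 = x2) ▸ hx2.symm))
    have h1 : A.card = (A.image φ).card := (Finset.card_image_of_injOn hinjA).symm
    have h2 : (A.image φ).card ≤ (A.erase u).card := by
      apply Finset.card_le_card
      intro y hy
      rw [Finset.mem_image] at hy
      obtain ⟨w, hw, rfl⟩ := hy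
      exact himg w hw
    have h3 : (A.erase u).card = A.card - 1 := Finset.card_erase_of_mem huA
    have h4 : 1 ≤ A.card := Finset.card_pos.mpr ⟨u, huA⟩
    omega
end

section
/- Let H be a disjoint union of paths, i.e., an acyclic graph in which every vertex has degree at most 2. Then for every graph G, H is an induced minor of G if and only if H is an induced subgraph of G. -/
namespace IMAux
open SimpleGraph
variable {V W : Type}

/-- Extract the subwalk between positions `i ≤ j` of a walk; its support is a
sublist of the original support. -/
lemma subwalk {G : SimpleGraph V} {u w : V} (q : G.Walk u w) :
    ∀ (i j : ℕ), i ≤ j → j ≤ q.length →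
    ∃ r : G.Walk (q.getVert i) (q.getVert j), r.length = j - i ∧ r.support.Sublist q.support := by
  induction q with
  | nil =>
    intro i j hij hj
    simp only [Walk.length_nil, Nat.le_zero] at hj
    subst hj
    have : i = 0 := Nat.le_zero.mp hij
    subst this
    exact ⟨Walk.nil, rfl, List.Sublist.refl _⟩
  | @cons a c b h p ih =>
    intro i j hij hj
    match i, j with
    | 0, 0 => exact ⟨Walk.nil, rfl, by simp [Walk.support_cons]⟩
    | 0, j+1 =>
      obtain ⟨r, hr1, hr2⟩ := ih 0 j (Nat.zero_le _) (by simpa [Walk.length_cons] using hj)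
      refine ⟨Walk.cons h ((r.copy p.getVert_zero rfl).copy rfl rfl), ?_, ?_⟩
      · show (Walk.cons h (r.copy p.getVert_zero rfl)).length = _
        simp [Walk.length_cons, hr1]
      · show (Walk.cons h (r.copy p.getVert_zero rfl)).support.Sublist _
        simp only [Walk.support_cons, Walk.support_copy]
        exact hr2.cons₂ _
    | i+1, j+1 =>
      obtain ⟨r, hr1, hr2⟩ := ih i j (by omega) (by simpa [Walk.length_cons] using hj)
      refine ⟨(r.copy rfl rfl), by simpa using hr1, ?_⟩
      simp only [Walk.support_copy, Walk.support_cons]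
      exact hr2.cons _


/-- On a path, `getVert` is injective on `[0, length]`. -/
lemma getVert_inj {G : SimpleGraph V} {u w : V} {q : G.Walk u w} (hq : q.IsPath)
    {i j : ℕ} (hi : i ≤ q.length) (hj : j ≤ q.length) (h : q.getVert i = q.getVert j) :
    i = j := by
  rcases Nat.lt_trichotomy i j with hlt | he | hlt
  · exfalso
    obtain ⟨r, hr1, hr2⟩ := subwalk q i j (le_of_lt hlt) hj
    have hnd : r.support.Nodup := hr2.nodup ((Walk.isPath_def _).mp hq)
    have hrp : (r.copy rfl h.symm).IsPath := by
      rw [Walk.isPath_def _]; simpa using hnd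
    have := (Walk.isPath_iff_eq_nil).mp hrp
    have hl : (r.copy rfl h.symm).length = 0 := by rw [this]; rfl
    simp only [Walk.length_copy] at hl
    omega
  · exact he
  · exfalso
    obtain ⟨r, hr1, hr2⟩ := subwalk q j i (le_of_lt hlt) hi
    have hnd : r.support.Nodup := hr2.nodup ((Walk.isPath_def _).mp hq)
    have hrp : (r.copy rfl h).IsPath := by
      rw [Walk.isPath_def _]; simpa using hnd
    have := (Walk.isPath_iff_eq_nil).mp hrp
    have hl : (r.copy rfl h).length = 0 := by rw [this]; rfl
    simp only [Walk.length_copy] at hl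
    omega

/-- In an acyclic graph, the two ends of a path of length at least 2 are non-adjacent. -/
lemma acyclic_no_adj {H : SimpleGraph W} (hac : H.IsAcyclic) {u v : W}
    (r : H.Walk u v) (hr : r.IsPath) (h2 : 2 ≤ r.length) : ¬ H.Adj u v := by
  intro hadj
  have huniq := isAcyclic_iff_path_unique.mp hac ⟨r, hr⟩ (Path.singleton hadj)
  have hlen : r.length = 1 := by
    have := congrArg (fun p : H.Path u v => (p : H.Walk u v).length) huniq
    simpa [Path.singleton] using this
  omega

/-- Non-consecutive vertices of a path in an acyclic graph are non-adjacent. -/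
lemma acyclic_no_chord {H : SimpleGraph W} (hac : H.IsAcyclic) {u w : W} {q : H.Walk u w}
    (hq : q.IsPath) {i j : ℕ} (hij : i + 2 ≤ j) (hj : j ≤ q.length) :
    ¬ H.Adj (q.getVert i) (q.getVert j) := by
  obtain ⟨r, hr1, hr2⟩ := subwalk q i j (by omega) hj
  have hnd : r.support.Nodup := hr2.nodup ((Walk.isPath_def _).mp hq)
  exact acyclic_no_adj hac r ((Walk.isPath_def _).mpr hnd) (by omega)


/-- From a chain of bags, extract an induced path hitting one vertex per index. -/
lemma lemA (G : SimpleGraph V) {k : ℕ} (B : Fin (k+1) → Set V)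
    (hne : ∀ i, (B i).Nonempty) (hdisj : ∀ i j, i ≠ j → Disjoint (B i) (B j))
    (hconn : ∀ i, (G.induce (B i)).Connected)
    (hedge : ∀ i j : Fin (k+1), i ≠ j →
      ((∃ x ∈ B i, ∃ y ∈ B j, G.Adj x y) ↔ ((i : ℕ)+1 = (j : ℕ) ∨ (j : ℕ)+1 = (i : ℕ)))) :
    ∃ g : Fin (k+1) → V, Function.Injective g ∧ (∀ i, g i ∈ ⋃ j, B j) ∧
      ∀ i j, G.Adj (g i) (g j) ↔ ((i : ℕ)+1 = (j : ℕ) ∨ (j : ℕ)+1 = (i : ℕ)) := by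
  classical
  set T : Set V := ⋃ j, B j with hT
  have hmemT : ∀ {x : V} {i : Fin (k+1)}, x ∈ B i → x ∈ T :=
    fun {x} {i} h => Set.mem_iUnion.mpr ⟨i, h⟩
  set G' : SimpleGraph T := G.induce T with hG'
  -- reachability within a bag
  have hbag : ∀ (i : Fin (k+1)) (x y : V) (hx : x ∈ B i) (hy : y ∈ B i),
      G'.Reachable ⟨x, hmemT hx⟩ ⟨y, hmemT hy⟩ := by
    intro i x y hx hy
    have h := (hconn i).preconnected ⟨x, hx⟩ ⟨y, hy⟩
    let φ : (G.induce (B i)) →g G' :=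
      { toFun := fun z => ⟨z.1, hmemT z.2⟩, map_rel' := fun {a b} hab => hab }
    exact h.map φ
  have hreach : ∀ (i : Fin (k+1)) (x y : V) (hx : x ∈ B 0) (hy : y ∈ B i),
      G'.Reachable ⟨x, hmemT hx⟩ ⟨y, hmemT hy⟩ := by
    intro i
    induction i using Fin.induction with
    | zero => exact fun x y hx hy => hbag 0 x y hx hy
    | succ i ihc =>
      intro x y hx hy
      have hne' : i.castSucc ≠ i.succ := by
        intro hcon
        have := congrArg (fun z : Fin (k+1) => (z : ℕ)) hcon
        simp at this
      obtain ⟨x', hx', y', hy', hadj⟩ := (hedge i.castSucc i.succ hne').mpr (by left; simp)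
      have h1 := ihc x x' hx hx'
      have h2 : G'.Adj ⟨x', hmemT hx'⟩ ⟨y', hmemT hy'⟩ := hadj
      have h3 := hbag i.succ y' y hy' hy
      exact (h1.trans h2.reachable).trans h3
  -- shortest walk from B 0 to B (last)
  obtain ⟨a, ha⟩ := hne 0
  obtain ⟨b, hb⟩ := hne (Fin.last k)
  have hr := hreach (Fin.last k) a b ha hb
  obtain ⟨q, hq⟩ := hr.exists_walk_length_eq_dist
  -- shortcuts yield contradictions
  have key : ∀ i j : ℕ, i < j → j ≤ q.length → q.getVert i ≠ q.getVert j := by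
    intro i j hij hj hcon
    obtain ⟨r1, hr11, -⟩ := subwalk q 0 i (Nat.zero_le _) (by omega)
    obtain ⟨r2, hr21, -⟩ := subwalk q j q.length hj le_rfl
    have hdl := SimpleGraph.dist_le
      ((r1.copy q.getVert_zero hcon).append (r2.copy rfl q.getVert_length))
    simp only [Walk.length_append, Walk.length_copy] at hdl
    omega
  have chord : ∀ i j : ℕ, i + 2 ≤ j → j ≤ q.length →
      ¬ G'.Adj (q.getVert i) (q.getVert j) := by
    intro i j hij hj hadj
    obtain ⟨r1, hr11, -⟩ := subwalk q 0 i (Nat.zero_le _) (by omega)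
    obtain ⟨r2, hr21, -⟩ := subwalk q j q.length hj le_rfl
    have hdl := SimpleGraph.dist_le
      ((r1.copy q.getVert_zero rfl).append (Walk.cons hadj (r2.copy rfl q.getVert_length)))
    simp only [Walk.length_append, Walk.length_copy, Walk.length_cons] at hdl
    omega
  -- bag index of each walk vertex
  have hTv : ∀ n : ℕ, ∃ i : Fin (k+1), ((q.getVert n : T) : V) ∈ B i := by
    intro n; exact Set.mem_iUnion.mp (q.getVert n).2
  choose ℓ hℓ using hTv
  have huniqB : ∀ {x : V} {i j : Fin (k+1)}, x ∈ B i → x ∈ B j → i = j := by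
    intro x i j hxi hxj
    by_contra hcon
    exact Set.disjoint_left.mp (hdisj i j hcon) hxi hxj
  have hl0 : ℓ 0 = 0 := by
    have h0 : ((q.getVert 0 : T) : V) ∈ B 0 := by rw [q.getVert_zero]; exact ha
    exact huniqB (hℓ 0) h0
  have hld : ℓ q.length = Fin.last k := by
    have h0 : ((q.getVert q.length : T) : V) ∈ B (Fin.last k) := by
      rw [q.getVert_length]; exact hb
    exact huniqB (hℓ q.length) h0
  have hstep : ∀ n : ℕ, n < q.length → (ℓ (n+1) : ℕ) ≤ (ℓ n : ℕ) + 1 := by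
    intro n hn
    by_cases hsame : ℓ n = ℓ (n+1)
    · omega
    · have hadj := q.adj_getVert_succ hn
      have hGadj : G.Adj ((q.getVert n : T) : V) ((q.getVert (n+1) : T) : V) := hadj
      have := (hedge (ℓ n) (ℓ (n+1)) hsame).mp ⟨_, hℓ n, _, hℓ (n+1), hGadj⟩
      omega
  have hclimb : ∀ n : ℕ, n ≤ q.length → (ℓ n : ℕ) ≤ n := by
    intro n
    induction n with
    | zero => intro _; simp [hl0]
    | succ m ihm => intro hm; have := hstep m (by omega); have := ihm (by omega); omega
  have hkd : k ≤ q.length := by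
    have := hclimb q.length le_rfl
    rw [hld] at this
    simpa using this
  refine ⟨fun i => ((q.getVert (i : ℕ) : T) : V), ?_, ?_, ?_⟩
  · intro i j hij
    by_contra hcon
    have : q.getVert (i : ℕ) = q.getVert (j : ℕ) := Subtype.ext hij
    rcases Nat.lt_trichotomy (i : ℕ) (j : ℕ) with h | h | h
    · exact key _ _ h (by omega) this
    · exact hcon (Fin.ext h)
    · exact key _ _ h (by omega) this.symm
  · intro i; exact Set.mem_iUnion.mpr ⟨ℓ i, hℓ i⟩
  · intro i j
    constructor
    · intro hadj
      have hGadj : G'.Adj (q.getVert (i : ℕ)) (q.getVert (j : ℕ)) := hadj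
      rcases Nat.lt_trichotomy (i : ℕ) (j : ℕ) with h | h | h
      · by_contra hcon
        push_neg at hcon
        exact chord (i : ℕ) (j : ℕ) (by omega) (by omega) hGadj
      · exfalso
        have : (q.getVert (i : ℕ)) = (q.getVert (j : ℕ)) := by rw [h]
        rw [this] at hGadj
        exact G'.irrefl hGadj
      · by_contra hcon
        push_neg at hcon
        exact chord (j : ℕ) (i : ℕ) (by omega) (by omega) hGadj.symm
    · intro hc
      rcases hc with h | h
      · have hadj := q.adj_getVert_succ (i := (i : ℕ)) (by omega)
        rw [h] at hadj
        exact hadj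
      · have hadj := q.adj_getVert_succ (i := (j : ℕ)) (by omega)
        rw [h] at hadj
        exact hadj.symm


lemma main (G : SimpleGraph V) :
    ∀ (n : ℕ) (W : Type) [Fintype W], Fintype.card W ≤ n →
    ∀ (H : SimpleGraph W), H.IsAcyclic → (∀ u, (H.neighborSet u).ncard ≤ 2) →
    ∀ X : W → Set V, IsIMModel G H X →
    ∃ f : W → V, Function.Injective f ∧ (∀ x y, G.Adj (f x) (f y) ↔ H.Adj x y) ∧
      ∀ w : W, ∃ u : W, H.Reachable u w ∧ f w ∈ X u := by
  intro n
  induction n with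
  | zero =>
    intro W _ hcard H _ _ X _
    haveI : IsEmpty W := Fintype.card_eq_zero_iff.mp (le_antisymm hcard (Nat.zero_le _))
    exact ⟨isEmptyElim, fun x => isEmptyElim x, fun x => isEmptyElim x, fun w => isEmptyElim w⟩
  | succ n ih =>
    intro W instW hcard H hac hdeg X hX
    classical
    by_cases hE : IsEmpty W
    · exact ⟨isEmptyElim, fun x => isEmptyElim x, fun x => isEmptyElim x, fun w => isEmptyElim w⟩
    haveI : Nonempty W := not_isEmpty_iff.mp hE
    obtain ⟨hX1, hX2, hX3, hX4⟩ := hX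
    -- a maximum length path q in H
    set P : ℕ → Prop := fun m => ∃ (a b : W) (p : H.Walk a b), p.IsPath ∧ p.length = m with hP
    have hP0 : P 0 := ⟨Classical.arbitrary W, Classical.arbitrary W, Walk.nil, Walk.IsPath.nil, rfl⟩
    have hbdd : ∀ m, P m → m ≤ Fintype.card W := by
      rintro m ⟨a, b, pp, hpp, hl⟩
      have := hpp.length_lt
      omega
    have hPN : P (Nat.findGreatest P (Fintype.card W)) :=
      Nat.findGreatest_spec (Nat.zero_le _) hP0
    obtain ⟨a, b, q, hq, hqN⟩ := hPN
    have hmax : ∀ (c d : W) (r : H.Walk c d), r.IsPath → r.length ≤ q.length := by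
      intro c d r hr
      by_contra hcon
      push_neg at hcon
      have h1 : r.length ≤ Fintype.card W := hbdd _ ⟨c, d, r, hr, rfl⟩
      exact absurd (⟨c, d, r, hr, rfl⟩ : P r.length)
        (Nat.findGreatest_is_greatest (P := P) (by omega) h1)
    have hmem : ∀ m : ℕ, m ≤ q.length → q.getVert m ∈ q.support :=
      fun m hm => Walk.mem_support_iff_exists_getVert.mpr ⟨m, rfl, hm⟩
    -- support is closed under adjacency
    have hclose : ∀ w ∈ q.support, ∀ y, H.Adj w y → y ∈ q.support := by
      intro w hw y hadj
      by_contra hy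
      obtain ⟨i, hgv, hi⟩ := Walk.mem_support_iff_exists_getVert.mp hw
      rcases Nat.eq_zero_or_pos i with h0 | hpos
      · subst h0
        have hwa : w = a := by rw [← hgv, q.getVert_zero]
        subst hwa
        have hpath : (Walk.cons hadj.symm q).IsPath :=
          (Walk.cons_isPath_iff _ _).mpr ⟨hq, hy⟩
        have := hmax _ _ _ hpath
        rw [Walk.length_cons] at this
        omega
      rcases Nat.lt_or_ge i q.length with hlt | hge
      · -- interior vertex
        have hprev : H.Adj (q.getVert (i-1)) (q.getVert i) := by
          have h' := q.adj_getVert_succ (i := i-1) (by omega)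
          have heq : i - 1 + 1 = i := by omega
          rwa [heq] at h'
        have hnext := q.adj_getVert_succ (i := i) hlt
        rw [hgv] at hprev hnext
        have hpn : q.getVert (i-1) ≠ q.getVert (i+1) := by
          intro hcon
          have := getVert_inj hq (i := i-1) (j := i+1) (by omega) (by omega) hcon
          omega
        have hyp : y ≠ q.getVert (i-1) := by
          intro hcon
          exact hy (by rw [hcon]; exact hmem (i-1) (by omega))
        have hyn : y ≠ q.getVert (i+1) := by
          intro hcon
          exact hy (by rw [hcon]; exact hmem (i+1) (by omega))
        have hsub : ({q.getVert (i-1), q.getVert (i+1), y} : Set W) ⊆ H.neighborSet w := by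
          intro z hz
          simp only [Set.mem_insert_iff, Set.mem_singleton_iff] at hz
          rcases hz with rfl | rfl | rfl
          · exact hprev.symm
          · exact hnext
          · exact hadj
        have h3 : ({q.getVert (i-1), q.getVert (i+1), y} : Set W).ncard = 3 := by
          have hnm : q.getVert (i-1) ∉ ({q.getVert (i+1), y} : Set W) := by
            simp only [Set.mem_insert_iff, Set.mem_singleton_iff]
            push_neg
            exact ⟨hpn, fun h => hyp h.symm⟩
          rw [Set.ncard_insert_of_notMem hnm (Set.toFinite _),
            Set.ncard_pair (fun h => hyn h.symm)]
        have hle := Set.ncard_le_ncard hsub (Set.toFinite _)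
        have := hdeg w
        omega
      · -- w = b
        have hib : i = q.length := by omega
        subst hib
        have hwb : w = b := by rw [← hgv, q.getVert_length]
        subst hwb
        have hpath : (Walk.cons hadj.symm q.reverse).IsPath := by
          refine (Walk.cons_isPath_iff _ _).mpr ⟨hq.reverse, ?_⟩
          simpa [Walk.support_reverse] using hy
        have := hmax _ _ _ hpath
        rw [Walk.length_cons, Walk.length_reverse] at this
        omega
    -- the path as a function
    set p : Fin (q.length + 1) → W := fun i => q.getVert i with hpdef
    have hpinj : Function.Injective p := by
      intro i j hij
      exact Fin.ext (getVert_inj hq (Nat.lt_succ_iff.mp i.isLt) (Nat.lt_succ_iff.mp j.isLt) hij)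
    have hpsupp : ∀ i : Fin (q.length + 1), p i ∈ q.support :=
      fun i => hmem i (Nat.lt_succ_iff.mp i.isLt)
    have hHadj : ∀ i j : Fin (q.length+1),
        H.Adj (p i) (p j) ↔ ((i:ℕ)+1 = (j:ℕ) ∨ (j:ℕ)+1 = (i:ℕ)) := by
      intro i j
      have hi := Nat.lt_succ_iff.mp i.isLt
      have hj := Nat.lt_succ_iff.mp j.isLt
      constructor
      · intro hadj
        rcases Nat.lt_trichotomy (i:ℕ) (j:ℕ) with h | h | h
        · by_contra hcon
          push_neg at hcon
          exact acyclic_no_chord hac hq (i := (i:ℕ)) (j := (j:ℕ)) (by omega) hj hadj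
        · exfalso
          have : p i = p j := congrArg p (Fin.ext h)
          rw [this] at hadj
          exact H.irrefl hadj
        · by_contra hcon
          push_neg at hcon
          exact acyclic_no_chord hac hq (i := (j:ℕ)) (j := (i:ℕ)) (by omega) hi hadj.symm
      · intro hc
        rcases hc with h | h
        · have h' := q.adj_getVert_succ (i := (i:ℕ)) (by omega)
          rw [h] at h'
          exact h'
        · have h' := q.adj_getVert_succ (i := (j:ℕ)) (by omega)
          rw [h] at h'
          exact h'.symm
    -- apply lemA
    obtain ⟨g, hginj, hgmem, hgadj⟩ := lemA G (fun i => X (p i))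
      (fun i => hX1 _)
      (fun i j hij => hX2 _ _ (fun hc => hij (hpinj hc)))
      (fun i => hX3 _)
      (fun i j hij => (hX4 (p i) (p j) (fun hc => hij (hpinj hc))).trans (hHadj i j))
    have hgbag : ∀ i : Fin (q.length+1), ∃ j, g i ∈ X (p j) :=
      fun i => Set.mem_iUnion.mp (hgmem i)
    -- the complement of the support
    set sc : Set W := {w | w ∉ q.support} with hscdef
    have hcard' : Fintype.card ↥sc ≤ n := by
      have hlt : Fintype.card ↥sc < Fintype.card W := by
        refine Fintype.card_lt_of_injective_of_notMem Subtype.val Subtype.val_injective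
          (b := a) ?_
        rw [Subtype.range_val]
        exact fun h => h q.start_mem_support
      omega
    let emb : (H.induce sc) ↪g H := SimpleGraph.Embedding.induce sc
    have hac' : (H.induce sc).IsAcyclic := by
      rw [isAcyclic_iff_path_unique]
      intro v w p1 p2
      have key := isAcyclic_iff_path_unique.mp hac
        ⟨p1.1.map emb.toHom, Walk.map_isPath_of_injective emb.injective p1.2⟩
        ⟨p2.1.map emb.toHom, Walk.map_isPath_of_injective emb.injective p2.2⟩
      have hw : p1.1.map emb.toHom = p2.1.map emb.toHom := congrArg Subtype.val key
      exact Subtype.ext (Walk.map_injective_of_injective emb.injective _ _ hw)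
    have hdeg' : ∀ u : ↥sc, ((H.induce sc).neighborSet u).ncard ≤ 2 := by
      intro u
      refine le_trans (Set.ncard_le_ncard_of_injOn Subtype.val ?_
        (Subtype.val_injective.injOn) (Set.toFinite _)) (hdeg u.1)
      intro z hz
      exact hz
    have hX' : IsIMModel G (H.induce sc) (fun u : ↥sc => X u.1) := by
      refine ⟨fun u => hX1 _, fun u v huv => hX2 _ _ (fun hc => huv (Subtype.ext hc)),
        fun u => hX3 _, ?_⟩
      intro u v huv
      exact hX4 u.1 v.1 (fun hc => huv (Subtype.ext hc))
    obtain ⟨f', hf'inj, hf'adj, hf'reach⟩ := ih ↥sc hcard' (H.induce sc) hac' hdeg' _ hX'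
    -- index of a support vertex
    have hidx : ∀ w ∈ q.support, ∃ i : Fin (q.length+1), p i = w := by
      intro w hw
      obtain ⟨m, h1, h2⟩ := Walk.mem_support_iff_exists_getVert.mp hw
      exact ⟨⟨m, by omega⟩, h1⟩
    choose idx hidxp using hidx
    set f : W → V := fun w => if h : w ∈ q.support then g (idx w h) else f' ⟨w, h⟩ with hfdef
    have hfin : ∀ w (h : w ∈ q.support), f w = g (idx w h) := fun w h => dif_pos h
    have hfout : ∀ w (h : w ∉ q.support), f w = f' ⟨w, h⟩ := fun w h => dif_neg h
    -- no H-edges, no G-edges between a support vertex's image and an outside image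
    have hsep : ∀ (w : W) (hw : w ∈ q.support) (w' : W) (hw' : w' ∉ q.support),
        f w ≠ f w' ∧ ¬ G.Adj (f w) (f w') ∧ ¬ H.Adj w w' := by
      intro w hw w' hw'
      obtain ⟨j, hj⟩ := hgbag (idx w hw)
      obtain ⟨u, hu1, hu2⟩ := hf'reach ⟨w', hw'⟩
      have hju : p j ≠ u.1 := by
        intro hc
        exact u.2 (hc ▸ hpsupp j)
      rw [hfin w hw, hfout w' hw']
      refine ⟨?_, ?_, fun hc => hw' (hclose w hw w' hc)⟩
      · intro hc
        exact Set.disjoint_left.mp (hX2 _ _ hju) hj (hc ▸ hu2)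
      · intro hc
        have hHju : H.Adj (p j) u.1 := (hX4 (p j) u.1 hju).mp ⟨_, hj, _, hu2, hc⟩
        exact u.2 (hclose (p j) (hpsupp j) u.1 hHju)
    have hreachp : ∀ i j : Fin (q.length+1), H.Reachable (p i) (p j) := by
      intro i j
      rcases le_total (i:ℕ) (j:ℕ) with h | h
      · obtain ⟨r, -, -⟩ := subwalk q i j h (Nat.lt_succ_iff.mp j.isLt)
        exact ⟨r⟩
      · obtain ⟨r, -, -⟩ := subwalk q j i h (Nat.lt_succ_iff.mp i.isLt)
        exact ⟨r.reverse⟩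
    refine ⟨f, ?_, ?_, ?_⟩
    · -- injective
      intro w w' heq
      by_cases h1 : w ∈ q.support <;> by_cases h2 : w' ∈ q.support
      · rw [hfin w h1, hfin w' h2] at heq
        rw [← hidxp w h1, ← hidxp w' h2, hginj heq]
      · exact absurd heq (hsep w h1 w' h2).1
      · exact absurd heq.symm (hsep w' h2 w h1).1
      · rw [hfout w h1, hfout w' h2] at heq
        exact congrArg Subtype.val (hf'inj heq)
    · -- adjacency
      intro x y
      by_cases h1 : x ∈ q.support <;> by_cases h2 : y ∈ q.support
      · rw [hfin x h1, hfin y h2]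
        have := (hgadj (idx x h1) (idx y h2)).trans (hHadj (idx x h1) (idx y h2)).symm
        rwa [hidxp x h1, hidxp y h2] at this
      · exact iff_of_false (hsep x h1 y h2).2.1 (hsep x h1 y h2).2.2
      · exact iff_of_false (fun hc => (hsep y h2 x h1).2.1 hc.symm)
          (fun hc => (hsep y h2 x h1).2.2 hc.symm)
      · rw [hfout x h1, hfout y h2]
        exact hf'adj ⟨x, h1⟩ ⟨y, h2⟩
    · -- reach
      intro w
      by_cases h : w ∈ q.support
      · obtain ⟨j, hj⟩ := hgbag (idx w h)
        refine ⟨p j, ?_, by rw [hfin w h]; exact hj⟩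
        have := hreachp j (idx w h)
        rwa [hidxp w h] at this
      · obtain ⟨u, hu1, hu2⟩ := hf'reach ⟨w, h⟩
        refine ⟨u.1, ?_, by rw [hfout w h]; exact hu2⟩
        exact hu1.map emb.toHom


end IMAux

open SimpleGraph in
/-- If `H` is a disjoint union of paths (acyclic with maximum degree at most 2), then
for every graph `G`, `H` is an induced minor of `G` iff it is an induced subgraph of `G`. -/
theorem stmt6 {W V : Type} [Fintype W] [Fintype V]
    (H : SimpleGraph W) (hac : H.IsAcyclic)
    (hdeg : ∀ u : W, (H.neighborSet u).ncard ≤ 2)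
    (G : SimpleGraph V) :
    IsInducedMinor H G ↔ IsInducedSubgraph H G := by
  constructor
  · rintro ⟨X, hX⟩
    obtain ⟨f, hinj, hadj, -⟩ :=
      IMAux.main G (Fintype.card W) W le_rfl H hac hdeg X hX
    exact ⟨f, hinj, hadj⟩
  · rintro ⟨f, hinj, hadj⟩
    refine ⟨fun u => {f u}, fun u => ⟨f u, rfl⟩, ?_, ?_, ?_⟩
    · intro u v huv
      exact Set.disjoint_singleton.mpr (fun hc => huv (hinj hc))
    · intro u
      haveI : Nonempty ↥({f u} : Set V) := ⟨⟨f u, rfl⟩⟩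
      constructor
      intro x y
      have hxy : x = y := Subtype.ext (x.2.trans y.2.symm)
      rw [hxy]
    · intro u v huv
      rw [← hadj u v]
      constructor
      · rintro ⟨x, rfl, y, rfl, h⟩
        exact h
      · intro h
        exact ⟨f u, rfl, f v, rfl, h⟩
end

section
/- Let k ≤ 3 and p ≥ 1 be integers and let S_{k,p} be the complete split graph with clique K of size k and independent set I of size p. Then for every graph G that contains S_{k,p} as an induced minor, there exists an induced minor model (X_w)_{w ∈ V(S_{k,p})} of S_{k,p} in G such that the bag X_w is trivial for every vertex w ∈ I (i.e., S_{k,p} is K-non-trivial). -/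
/-- The complete split graph `S_{k,p}`: a clique `K` of size `k` (the `inl` vertices),
an independent set `I` of size `p` (the `inr` vertices), and all edges between `K` and `I`. -/
def completeSplit (k p : ℕ) : SimpleGraph (Fin k ⊕ Fin p) :=
  SimpleGraph.fromRel fun x y =>
    (∃ i j : Fin k, x = Sum.inl i ∧ y = Sum.inl j) ∨
    (∃ (i : Fin k) (j : Fin p), x = Sum.inl i ∧ y = Sum.inr j)

section Aux
open SimpleGraph
variable {V : Type} {G : SimpleGraph V}

lemma reach_mono {S T : Set V} (hST : S ⊆ T) {x y : V} (hx : x ∈ S) (hy : y ∈ S)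
    (h : (G.induce S).Reachable ⟨x, hx⟩ ⟨y, hy⟩) :
    (G.induce T).Reachable ⟨x, hST hx⟩ ⟨y, hST hy⟩ :=
  Reachable.map (⟨fun v => ⟨v.1, hST v.2⟩, fun h => h⟩ : G.induce S →g G.induce T) h

lemma union_conn {A : Set V} (hA : (G.induce A).Connected) {ι : Type} (S : ι → Set V)
    (hS : ∀ j, (S j).Nonempty → (G.induce (S j)).Connected ∧ ∃ a ∈ A, ∃ y ∈ S j, G.Adj a y) :
    (G.induce (A ∪ ⋃ j, S j)).Connected := by
  set U : Set V := A ∪ ⋃ j, S j with hU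
  have hAU : A ⊆ U := Set.subset_union_left
  have key : ∀ (u : V) (hu : u ∈ U), ∃ a, ∃ ha : a ∈ A,
      (G.induce U).Reachable ⟨u, hu⟩ ⟨a, hAU ha⟩ := by
    intro u hu
    rcases hu with hu | hu
    · exact ⟨u, hu, Reachable.refl _⟩
    · rw [Set.mem_iUnion] at hu
      obtain ⟨j, hj⟩ := hu
      obtain ⟨hconn, a, ha, y, hy, hadj⟩ := hS j ⟨u, hj⟩
      have hSU : S j ⊆ U := fun v hv => Or.inr (Set.mem_iUnion.2 ⟨j, hv⟩)
      have r1 : (G.induce U).Reachable ⟨u, hSU hj⟩ ⟨y, hSU hy⟩ :=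
        reach_mono hSU hj hy (hconn.preconnected _ _)
      have r2 : (G.induce U).Adj ⟨y, hSU hy⟩ ⟨a, hAU ha⟩ := hadj.symm
      exact ⟨a, ha, r1.trans r2.reachable⟩
  obtain ⟨a0, ha0⟩ := hA.nonempty
  have : Nonempty ↥U := ⟨⟨a0, hAU ha0⟩⟩
  constructor
  intro u v
  obtain ⟨a, ha, ru⟩ := key u.1 u.2
  obtain ⟨b, hb, rv⟩ := key v.1 v.2
  have rab : (G.induce U).Reachable ⟨a, hAU ha⟩ ⟨b, hAU hb⟩ :=
    reach_mono hAU ha hb (hA.preconnected _ _)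
  exact (ru.trans rab).trans rv.symm

lemma singl_conn (x : V) : (G.induce ({x} : Set V)).Connected := by
  constructor
  intro a b
  have : a = b := Subsingleton.elim a b
  exact this ▸ SimpleGraph.Reachable.refl _

lemma list_conn : ∀ (l : List V), l ≠ [] → l.Chain' G.Adj →
    (G.induce {v | v ∈ l}).Connected
  | [], h, _ => absurd rfl h
  | [x], _, _ => by
      have : {v | v ∈ [x]} = ({x} : Set V) := by ext v; simp
      rw [this]; exact singl_conn x
  | (a :: b :: t), _, hc => by
      have hibt : (G.induce {v | v ∈ b :: t}).Connected :=
        list_conn (b :: t) (by simp) hc.tail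
      have hadj : G.Adj b a := (List.isChain_cons_cons.1 hc).1.symm
      have := union_conn hibt (ι := Unit) (fun _ => ({a} : Set V))
        (fun _ _ => ⟨singl_conn a, b, by simp, a, rfl, hadj⟩)
      have hset : ({v | v ∈ b :: t} ∪ ⋃ _ : Unit, ({a} : Set V)) = {v | v ∈ a :: b :: t} := by
        ext v; simp [or_comm]
      rwa [hset] at this

lemma exists_chain {X : Set V} (h : (G.induce X).Connected) {a b : V}
    (ha : a ∈ X) (hb : b ∈ X) :
    ∃ l : List V, l ≠ [] ∧ l.Chain' G.Adj ∧ l.Nodup ∧ (∀ v ∈ l, v ∈ X) ∧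
      l.head? = some a ∧ l.getLast? = some b := by
  haveI : DecidableEq ↥X := Classical.decEq _
  obtain ⟨w⟩ := h.preconnected ⟨a, ha⟩ ⟨b, hb⟩
  set p := w.toPath with hp
  have hnil : (p.1.support.map Subtype.val) ≠ [] := by
    intro hnil
    exact SimpleGraph.Walk.support_ne_nil _ (List.map_eq_nil_iff.mp hnil)
  refine ⟨p.1.support.map Subtype.val, hnil, ?_, ?_, ?_, ?_, ?_⟩
  · exact List.isChain_map_of_isChain Subtype.val (fun {x y} (hxy : (G.induce X).Adj x y) => hxy)
      p.1.isChain_adj_support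
  · exact p.2.support_nodup.map Subtype.val_injective
  · intro v hv
    simp only [List.mem_map] at hv
    obtain ⟨u, _, rfl⟩ := hv
    exact u.2
  · rw [p.1.support_eq_cons]; rfl
  · rw [List.getLast?_eq_getLast hnil, List.getLast_map, p.1.getLast_support]

lemma split_first (L : List V) : ∀ (M : List V), (∃ m ∈ M, m ∈ L) →
    ∃ M₁ c M₂, M = M₁ ++ c :: M₂ ∧ c ∈ L ∧ ∀ m ∈ M₁, m ∉ L := by
  intro M
  induction M with
  | nil => rintro ⟨m, hm, _⟩; simp at hm
  | cons a M' ih =>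
    intro hex
    by_cases haL : a ∈ L
    · exact ⟨[], a, M', by simp, haL, by simp⟩
    · have hex' : ∃ m ∈ M', m ∈ L := by
        obtain ⟨m, hm, hmL⟩ := hex
        rcases List.mem_cons.1 hm with rfl | hm'
        · exact absurd hmL haL
        · exact ⟨m, hm', hmL⟩
      obtain ⟨M₁, c, M₂, rfl, hcL, hM₁⟩ := ih hex'
      refine ⟨a :: M₁, c, M₂, by simp, hcL, ?_⟩
      intro m hm
      rcases List.mem_cons.1 hm with rfl | hm'
      · exact haL
      · exact hM₁ m hm'

lemma lemA {X : Set V} (hX : (G.induce X).Connected) (x : Fin 3 → V) (hx : ∀ i, x i ∈ X) :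
    ∃ c, c ∈ X ∧ ∃ S : Fin 3 → Set V,
      (∀ i, S i ⊆ X) ∧ (∀ i, c ∉ S i) ∧ (∀ i j, i ≠ j → Disjoint (S i) (S j)) ∧
      (∀ i, x i ∈ S i ∨ (S i = ∅ ∧ c = x i)) ∧
      (∀ i, (S i).Nonempty → (G.induce (S i)).Connected ∧ ∃ y ∈ S i, G.Adj c y) := by
  obtain ⟨L, hLne, hLch, hLnd, hLX, hLh, hLl⟩ := exists_chain hX (hx 0) (hx 1)
  obtain ⟨M, hMne, hMch, hMnd, hMX, hMh, hMl⟩ := exists_chain hX (hx 2) (hx 0)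
  have hx0L : x 0 ∈ L := by
    have := List.mem_of_mem_head? (l := L) (by rw [hLh]; rfl)
    exact this
  have hx0M : x 0 ∈ M := by
    have := List.mem_of_mem_getLast? (l := M) (by rw [hMl]; rfl)
    exact this
  obtain ⟨M₁, c, M₂, hMeq, hcL, hM₁L⟩ := split_first L M ⟨x 0, hx0M, hx0L⟩
  obtain ⟨L₁, L₂, hLeq⟩ := List.append_of_mem hcL
  subst hLeq hMeq
  -- basic facts
  have hLch' := List.isChain_append.1 hLch
  have hMch' := List.isChain_append.1 hMch
  have hLnd' := List.nodup_append.1 hLnd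
  refine ⟨c, hLX c (by simp), ![{v | v ∈ L₁}, {v | v ∈ L₂}, {v | v ∈ M₁}], ?_, ?_, ?_, ?_, ?_⟩
  · intro i
    fin_cases i <;>
      simp only [Matrix.cons_val_zero, Matrix.cons_val_one, Matrix.head_cons,
        Matrix.cons_val_two, Matrix.tail_cons]
    · intro v hv; exact hLX v (by simp only [List.mem_append, List.mem_cons]; exact Or.inl hv)
    · intro v hv; exact hLX v (by simp only [List.mem_append, List.mem_cons]; tauto)
    · intro v hv; exact hMX v (by simp only [List.mem_append, List.mem_cons]; tauto)
  · intro i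
    fin_cases i <;>
      simp only [Matrix.cons_val_zero, Matrix.cons_val_one, Matrix.head_cons,
        Matrix.cons_val_two, Matrix.tail_cons, Set.mem_setOf_eq]
    · exact fun hc => hLnd'.2.2 c hc c (by simp) rfl
    · exact fun hc => (List.nodup_cons.1 hLnd'.2.1).1 hc
    · exact fun hc => hM₁L c hc hcL
  · have d01 : Disjoint {v | v ∈ L₁} {v | v ∈ L₂} := by
      rw [Set.disjoint_left]
      intro v hv1 hv2
      exact hLnd'.2.2 v hv1 v (List.mem_cons.2 (Or.inr hv2)) rfl
    have d02 : Disjoint {v | v ∈ L₁} {v | v ∈ M₁} := by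
      rw [Set.disjoint_left]
      intro v hv1 hv2
      exact hM₁L v hv2 (List.mem_append.2 (Or.inl hv1))
    have d12 : Disjoint {v | v ∈ L₂} {v | v ∈ M₁} := by
      rw [Set.disjoint_left]
      intro v hv1 hv2
      exact hM₁L v hv2 (List.mem_append.2 (Or.inr (List.mem_cons.2 (Or.inr hv1))))
    intro i j hij
    fin_cases i <;> fin_cases j <;>
      simp only [Matrix.cons_val_zero, Matrix.cons_val_one, Matrix.head_cons,
        Matrix.cons_val_two, Matrix.tail_cons] <;>
      first
        | exact absurd rfl hij
        | exact (hij rfl).elim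
        | exact d01 | exact d02 | exact d12
        | exact d01.symm | exact d02.symm | exact d12.symm
  · intro i
    fin_cases i <;>
      simp only [Matrix.cons_val_zero, Matrix.cons_val_one, Matrix.head_cons,
        Matrix.cons_val_two, Matrix.tail_cons, Set.mem_setOf_eq]
    · cases L₁ with
      | nil =>
        right
        refine ⟨by ext v; simp, ?_⟩
        simp only [List.nil_append, List.head?_cons] at hLh
        exact Option.some.inj hLh
      | cons a L₁' =>
        left
        have : a = x 0 := by
          simpa using hLh
        simp [this]
    · rw [List.getLast?_append_cons] at hLl
      cases L₂ with
      | nil =>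
        right
        refine ⟨by ext v; simp, ?_⟩
        simpa using (Option.some.inj hLl)
      | cons a L₂' =>
        left
        rw [List.getLast?_cons_cons] at hLl
        exact List.mem_of_mem_getLast? (by rw [hLl]; rfl)
    · cases M₁ with
      | nil =>
        right
        refine ⟨by ext v; simp, ?_⟩
        simp only [List.nil_append, List.head?_cons] at hMh
        exact Option.some.inj hMh
      | cons a M₁' =>
        left
        have : a = x 2 := by simpa using hMh
        simp [this]
  · intro i
    fin_cases i <;>
      simp only [Matrix.cons_val_zero, Matrix.cons_val_one, Matrix.head_cons,
        Matrix.cons_val_two, Matrix.tail_cons, Set.mem_setOf_eq]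
    · rintro ⟨v, hv⟩
      have hne : L₁ ≠ [] := by rintro rfl; simp at hv
      refine ⟨list_conn L₁ hne hLch'.1, L₁.getLast hne, List.getLast_mem hne, ?_⟩
      have := hLch'.2.2 (L₁.getLast hne) (by rw [List.getLast?_eq_getLast hne]; rfl) c (by simp)
      exact this.symm
    · rintro ⟨v, hv⟩
      cases L₂ with
      | nil => simp at hv
      | cons a L₂' =>
        refine ⟨list_conn (a :: L₂') (by simp) (List.isChain_cons_cons.1 hLch'.2.1).2,
          a, by simp, (List.isChain_cons_cons.1 hLch'.2.1).1⟩
    · rintro ⟨v, hv⟩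
      have hne : M₁ ≠ [] := by rintro rfl; simp at hv
      refine ⟨list_conn M₁ hne hMch'.1, M₁.getLast hne, List.getLast_mem hne, ?_⟩
      have := hMch'.2.2 (M₁.getLast hne) (by rw [List.getLast?_eq_getLast hne]; rfl) c (by simp)
      exact this.symm

lemma cs_inl_inl {k p : ℕ} {a b : Fin k} (h : a ≠ b) :
    (completeSplit k p).Adj (Sum.inl a) (Sum.inl b) := by
  simp [completeSplit, h]

lemma cs_inl_inr {k p : ℕ} (a : Fin k) (j : Fin p) :
    (completeSplit k p).Adj (Sum.inl a) (Sum.inr j) := by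
  simp [completeSplit]

lemma cs_not_inr_inr {k p : ℕ} (j j' : Fin p) :
    ¬ (completeSplit k p).Adj (Sum.inr j) (Sum.inr j') := by
  simp [completeSplit]


end Aux

/-- For `k ≤ 3` and `p ≥ 1`, every graph `G` containing `S_{k,p}` as an induced minor
admits an induced minor model of `S_{k,p}` in which every bag of a vertex of the
independent set `I` is trivial. -/
theorem stmt10 {V : Type} [Fintype V] (k p : ℕ) (hk : k ≤ 3) (hp : 1 ≤ p)
    (G : SimpleGraph V) (him : IsInducedMinor (completeSplit k p) G) :
    ∃ X : (Fin k ⊕ Fin p) → Set V, IsIMModel G (completeSplit k p) X ∧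
      ∀ i : Fin p, ∃ x : V, X (Sum.inr i) = {x} := by
  obtain ⟨X, hne, hdisj, hconn, hiff⟩ := him
  -- terminals
  have hterm : ∀ (j : Fin p) (a : Fin k),
      ∃ t ∈ X (Sum.inr j), ∃ y ∈ X (Sum.inl a), G.Adj t y :=
    fun j a => (hiff (Sum.inr j) (Sum.inl a) (by simp)).2 (cs_inl_inr a j).symm
  choose xt hxtX hxtE using hterm
  choose v0 hv0 using fun j => hne (Sum.inr j)
  set t : Fin p → Fin 3 → V := fun j i => if h : (i : ℕ) < k then xt j ⟨i, h⟩ else v0 j with ht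
  have htX : ∀ j i, t j i ∈ X (Sum.inr j) := by
    intro j i
    by_cases h : (i : ℕ) < k
    · simp only [ht, dif_pos h]; exact hxtX j ⟨i, h⟩
    · simp only [ht, dif_neg h]; exact hv0 j
  have hlem := fun j => lemA (hconn (Sum.inr j)) (t j) (htX j)
  choose c hcX S hSsub hScnot hSdisj hSmem hSconn using hlem
  have hteq : ∀ (j : Fin p) (a : Fin k), t j (Fin.castLE hk a) = xt j a := by
    intro j a
    simp only [ht, Fin.coe_castLE, a.isLt, dif_pos]
  -- the new model
  set Y : (Fin k ⊕ Fin p) → Set V := fun w =>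
    match w with
    | Sum.inl a => X (Sum.inl a) ∪ ⋃ j, S j (Fin.castLE hk a)
    | Sum.inr j => {c j} with hY
  -- helper: edge between Y (inl a) and c j
  have edge_la : ∀ (a : Fin k) (j : Fin p), ∃ y ∈ Y (Sum.inl a), G.Adj (c j) y := by
    intro a j
    rcases hSmem j (Fin.castLE hk a) with hmem | ⟨_, hceq⟩
    · obtain ⟨_, y, hy, hadj⟩ := hSconn j (Fin.castLE hk a) ⟨_, hmem⟩
      exact ⟨y, Or.inr (Set.mem_iUnion.2 ⟨j, hy⟩), hadj⟩
    · obtain ⟨y, hyX, hadj⟩ := hxtE j a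
      rw [hteq j a] at hceq
      exact ⟨y, Or.inl hyX, hceq ▸ hadj⟩
  -- disjointness helpers
  have hSX : ∀ (j : Fin p) (i : Fin 3), S j i ⊆ X (Sum.inr j) := hSsub
  have key_ll : ∀ (a b : Fin k), a ≠ b → Disjoint (Y (Sum.inl a)) (Y (Sum.inl b)) := by
    intro a b hab
    rw [Set.disjoint_left]
    rintro z (hz1 | hz1) (hz2 | hz2)
    · exact Set.disjoint_left.1 (hdisj _ _ (by simp [hab])) hz1 hz2
    · obtain ⟨j, hj⟩ := Set.mem_iUnion.1 hz2
      exact Set.disjoint_left.1 (hdisj (Sum.inl a) (Sum.inr j) (by simp)) hz1 (hSX j _ hj)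
    · obtain ⟨j, hj⟩ := Set.mem_iUnion.1 hz1
      exact Set.disjoint_left.1 (hdisj (Sum.inl b) (Sum.inr j) (by simp)) hz2 (hSX j _ hj)
    · obtain ⟨j, hj⟩ := Set.mem_iUnion.1 hz1
      obtain ⟨j', hj'⟩ := Set.mem_iUnion.1 hz2
      rcases eq_or_ne j j' with rfl | hjj
      · have hab3 : Fin.castLE hk a ≠ Fin.castLE hk b := by
          intro h; exact hab (Fin.castLE_injective hk h)
        exact Set.disjoint_left.1 (hSdisj j _ _ hab3) hj hj'
      · exact Set.disjoint_left.1 (hdisj (Sum.inr j) (Sum.inr j') (by simp [hjj]))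
          (hSX j _ hj) (hSX j' _ hj')
  have key_lr : ∀ (a : Fin k) (j' : Fin p), Disjoint (Y (Sum.inl a)) (Y (Sum.inr j')) := by
    intro a j'
    rw [Set.disjoint_left]
    rintro z (hz1 | hz1) hz2
    · rw [hY] at hz2
      exact Set.disjoint_left.1 (hdisj (Sum.inl a) (Sum.inr j') (by simp)) hz1
        (hz2 ▸ hcX j')
    · obtain ⟨j, hj⟩ := Set.mem_iUnion.1 hz1
      have hz2' : z = c j' := hz2
      rcases eq_or_ne j j' with rfl | hjj
      · exact hScnot j _ (hz2' ▸ hj)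
      · exact Set.disjoint_left.1 (hdisj (Sum.inr j) (Sum.inr j') (by simp [hjj]))
          (hSX j _ hj) (hz2' ▸ hcX j')
  refine ⟨Y, ⟨?_, ?_, ?_, ?_⟩, fun i => ⟨c i, rfl⟩⟩
  · rintro (a | j)
    · obtain ⟨y, hy⟩ := hne (Sum.inl a)
      exact ⟨y, Or.inl hy⟩
    · exact ⟨c j, rfl⟩
  · rintro (a | j) (b | j') huv
    · exact key_ll a b (by simpa using huv)
    · exact key_lr a j'
    · exact (key_lr b j).symm
    · have hjj : j ≠ j' := by simpa using huv
      have : c j ≠ c j' := by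
        intro h
        exact Set.disjoint_left.1 (hdisj (Sum.inr j) (Sum.inr j') (by simp [hjj]))
          (hcX j) (h ▸ hcX j')
      simpa [hY] using Set.disjoint_singleton.2 this
  · rintro (a | j)
    · refine union_conn (hconn (Sum.inl a)) _ ?_
      intro j hne'
      obtain ⟨hcn, y, hy, hadj⟩ := hSconn j (Fin.castLE hk a) hne'
      refine ⟨hcn, ?_⟩
      have hmem : t j (Fin.castLE hk a) ∈ S j (Fin.castLE hk a) := by
        rcases hSmem j (Fin.castLE hk a) with h | ⟨h, _⟩
        · exact h
        · exact absurd h (Set.nonempty_iff_ne_empty.1 hne')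
      obtain ⟨w, hwX, hwadj⟩ := hxtE j a
      exact ⟨w, hwX, t j (Fin.castLE hk a), hmem, ((hteq j a) ▸ hwadj).symm⟩
    · exact singl_conn (c j)
  · rintro (a | j) (b | j') huv
    · have hab : a ≠ b := by simpa using huv
      constructor
      · intro _; exact cs_inl_inl hab
      · intro _
        obtain ⟨u, hu, w, hw, hadj⟩ := (hiff (Sum.inl a) (Sum.inl b) huv).2 (cs_inl_inl hab)
        exact ⟨u, Or.inl hu, w, Or.inl hw, hadj⟩
    · constructor
      · intro _; exact cs_inl_inr a j'
      · intro _
        obtain ⟨y, hy, hadj⟩ := edge_la a j'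
        exact ⟨y, hy, c j', rfl, hadj.symm⟩
    · constructor
      · intro _; exact (cs_inl_inr b j).symm
      · intro _
        obtain ⟨y, hy, hadj⟩ := edge_la b j
        exact ⟨c j, rfl, y, hy, hadj⟩
    · have hjj : j ≠ j' := by simpa using huv
      constructor
      · rintro ⟨u, hu, w, hw, hadj⟩
        have hu' : u = c j := hu
        have hw' : w = c j' := hw
        exact absurd ((hiff (Sum.inr j) (Sum.inr j') huv).1
          ⟨c j, hcX j, c j', hcX j', hu' ▸ hw' ▸ hadj⟩) (cs_not_inr_inr j j')
      · intro h
        exact absurd h (cs_not_inr_inr j j')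
end

section
/- Let t ≥ 2 be an integer, let G be a P_t-free graph, let H be a graph, let (X_w)_{w ∈ V(H)} be an induced minor model of H in G, and let u ∈ V(H) be such that the bag X_u is minimal. Then |X_u| ≤ 1 + deg_H(u) · (t − 2), where deg_H(u) is the degree of u in H. -/
open SimpleGraph

namespace Stmt11Aux

variable {V : Type} {G : SimpleGraph V}

/-- Take the first `n` darts of a walk. -/
def wtake {u v : V} : (p : G.Walk u v) → (n : ℕ) → G.Walk u (p.getVert n)
  | .nil, _ => .nil
  | .cons h q, 0 => SimpleGraph.Walk.nil.copy rfl (SimpleGraph.Walk.getVert_zero (.cons h q)).symm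
  | .cons h q, (n+1) => ((wtake q n).cons h).copy rfl (SimpleGraph.Walk.getVert_cons_succ _ h).symm

lemma wtake_length {u v : V} (p : G.Walk u v) (n : ℕ) :
    (wtake p n).length = min n p.length := by
  induction p generalizing n with
  | nil => simp [wtake]
  | cons h q ih =>
    cases n with
    | zero => simp [wtake]
    | succ n => simp [wtake, ih]

lemma length_drop {u v : V} (p : G.Walk u v) (n : ℕ) :
    (p.drop n).length = p.length - n := by
  induction p generalizing n with
  | nil => simp [SimpleGraph.Walk.drop]
  | cons h q ih =>
    cases n with
    | zero => simp [SimpleGraph.Walk.drop]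
    | succ n => simp [SimpleGraph.Walk.drop, ih]

lemma exists_shorter {u v : V} (p : G.Walk u v) {i j : ℕ} (hij : i < j) (hj : j ≤ p.length)
    (h : p.getVert i = p.getVert j ∨ (i + 1 < j ∧ G.Adj (p.getVert i) (p.getVert j))) :
    ∃ q : G.Walk u v, q.length < p.length := by
  rcases h with heq | ⟨hij2, hadj⟩
  · refine ⟨(wtake p i).append ((p.drop j).copy heq.symm rfl), ?_⟩
    simp [SimpleGraph.Walk.length_append, wtake_length, length_drop]
    omega
  · refine ⟨(wtake p i).append ((p.drop j).cons hadj), ?_⟩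
    simp [SimpleGraph.Walk.length_append, wtake_length, length_drop]
    omega

/-- A minimum-length walk between two nonempty sets in a connected graph; it is
vertex-injective and chordless. -/
lemma exists_good_path {α : Type} (G' : SimpleGraph α) (hc : G'.Connected)
    (S A : Set α) (hS : S.Nonempty) (hA : A.Nonempty) :
    ∃ (s a : α) (p : G'.Walk s a), s ∈ S ∧ a ∈ A ∧
      (∀ i j, i < j → j ≤ p.length → p.getVert i ≠ p.getVert j) ∧
      (∀ i j, i + 1 < j → j ≤ p.length → ¬ G'.Adj (p.getVert i) (p.getVert j)) := by
  classical
  obtain ⟨s₀, hs₀⟩ := hS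
  obtain ⟨a₀, ha₀⟩ := hA
  set L : Set ℕ := {n | ∃ s ∈ S, ∃ a ∈ A, ∃ p : G'.Walk s a, p.length = n} with hL
  have hLne : L.Nonempty := by
    obtain ⟨p⟩ := hc.preconnected s₀ a₀
    exact ⟨p.length, s₀, hs₀, a₀, ha₀, p, rfl⟩
  obtain ⟨s, hs, a, ha, p, hp⟩ := Nat.sInf_mem hLne
  have hmin : ∀ q : G'.Walk s a, ¬ q.length < p.length := by
    intro q hq
    have : q.length ∈ L := ⟨s, hs, a, ha, q, rfl⟩
    have := Nat.sInf_le this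
    omega
  refine ⟨s, a, p, hs, ha, ?_, ?_⟩
  · intro i j hij hj heq
    obtain ⟨q, hq⟩ := exists_shorter p hij hj (Or.inl heq)
    exact hmin q hq
  · intro i j hij hj hadj
    obtain ⟨q, hq⟩ := exists_shorter p (by omega) hj (Or.inr ⟨hij, hadj⟩)
    exact hmin q hq

lemma induce_singleton_connected (G : SimpleGraph V) (x : V) :
    (G.induce {x}).Connected := by
  have : Nonempty ↥({x} : Set V) := ⟨⟨x, rfl⟩⟩
  refine ⟨fun a b => ?_⟩
  have hab : a = b := Subtype.ext (a.2.trans b.2.symm)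
  exact hab ▸ SimpleGraph.Reachable.refl a


end Stmt11Aux


namespace Stmt11Aux

/-- `IsInducedSubgraph` copied locally for lemma development (will reuse real one). -/
lemma length_le_of_chordless {V : Type} (G : SimpleGraph V) {k : ℕ}
    (hPt : ¬ ∃ f : Fin (k+2) → V, Function.Injective f ∧
      ∀ x y : Fin (k+2), G.Adj (f x) (f y) ↔ (SimpleGraph.pathGraph (k+2)).Adj x y)
    {U : Set V} {s a : ↥U} (p : (G.induce U).Walk s a)
    (hinj : ∀ i j, i < j → j ≤ p.length → p.getVert i ≠ p.getVert j)
    (hchord : ∀ i j, i + 1 < j → j ≤ p.length → ¬ (G.induce U).Adj (p.getVert i) (p.getVert j)) :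
    p.length ≤ k := by
  by_contra hlen
  push_neg at hlen
  have hlen' : k + 1 ≤ p.length := hlen
  apply hPt
  refine ⟨fun i => ↑(p.getVert i), ?_, ?_⟩
  · intro i j hf
    by_contra hne
    have hval : p.getVert (i : ℕ) = p.getVert (j : ℕ) := Subtype.ext hf
    rcases lt_trichotomy (i : ℕ) (j : ℕ) with h | h | h
    · exact hinj _ _ h (by omega) hval
    · exact hne (Fin.ext h)
    · exact hinj _ _ h (by omega) hval.symm
  · intro x y
    constructor
    · intro h
      have h' : (G.induce U).Adj (p.getVert (x : ℕ)) (p.getVert (y : ℕ)) := h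
      rw [SimpleGraph.pathGraph_adj]
      by_contra hxy
      push_neg at hxy
      obtain ⟨h1, h2⟩ := hxy
      rcases lt_trichotomy (x : ℕ) (y : ℕ) with hc | hc | hc
      · exact hchord _ _ (by omega) (by omega) h'
      · have hxyeq : p.getVert (x : ℕ) = p.getVert (y : ℕ) := by rw [hc]
        rw [hxyeq] at h'
        exact (G.induce U).irrefl h'
      · exact hchord _ _ (by omega) (by omega) h'.symm
    · intro h
      rw [SimpleGraph.pathGraph_adj] at h
      rcases h with h | h
      · have : (x:ℕ) < p.length := by omega
        have := p.adj_getVert_succ this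
        rw [show (x:ℕ)+1 = (y:ℕ) from h] at this
        exact this
      · have : (y:ℕ) < p.length := by omega
        have := p.adj_getVert_succ this
        rw [show (y:ℕ)+1 = (x:ℕ) from h] at this
        exact this.symm

end Stmt11Aux

/-- Let `t ≥ 2`, let `G` be a `P_t`-free graph (no induced path on `t` vertices), let
`X` be an induced minor model of `H` in `G`, and let `u` be a vertex of `H` whose bag
is minimal. Then `|X u| ≤ 1 + deg_H(u) * (t - 2)`. -/
theorem stmt11 {V W : Type} [Fintype V] [Fintype W] [DecidableEq W]
    (t : ℕ) (ht : 2 ≤ t)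
    (G : SimpleGraph V) (hPt : ¬ IsInducedSubgraph (SimpleGraph.pathGraph t) G)
    (H : SimpleGraph W) (X : W → Set V) (hX : IsIMModel G H X)
    (u : W) (hmin : MinimalBag G H X u) :
    (X u).ncard ≤ 1 + (H.neighborSet u).ncard * (t - 2) := by
  classical
  obtain ⟨k, rfl⟩ : ∃ k, t = k + 2 := ⟨t - 2, by omega⟩
  obtain ⟨h1, h2, h3, h4⟩ := hX
  have hPt' : ¬ ∃ f : Fin (k+2) → V, Function.Injective f ∧
      ∀ x y : Fin (k+2), G.Adj (f x) (f y) ↔ (SimpleGraph.pathGraph (k+2)).Adj x y := hPt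
  -- main induction: good connected subsets hitting any finite set of neighbors of u
  have key : ∀ (N' : Finset W), (∀ v ∈ N', H.Adj u v) → ∃ S : Set V,
      S ⊆ X u ∧ S.Nonempty ∧ (G.induce S).Connected ∧
      (∀ v ∈ N', ∃ x ∈ S, ∃ y ∈ X v, G.Adj x y) ∧ S.ncard ≤ 1 + N'.card * k := by
    intro N'
    induction N' using Finset.induction_on with
    | empty =>
      intro _
      obtain ⟨x0, hx0⟩ := h1 u
      exact ⟨{x0}, by simpa using hx0, ⟨x0, rfl⟩, Stmt11Aux.induce_singleton_connected G x0,
        by simp, by simp⟩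
    | @insert v N' hv ih =>
      intro hall
      have hadjuv : H.Adj u v := hall v (Finset.mem_insert_self v N')
      obtain ⟨S, hSsub, hSne, hSconn, hShit, hScard⟩ :=
        ih (fun w hw => hall w (Finset.mem_insert_of_mem hw))
      have hneuv : u ≠ v := H.ne_of_adj hadjuv
      set A' : Set ↥(X u) := {x | ∃ y ∈ X v, G.Adj ↑x y} with hA'
      have hA'ne : A'.Nonempty := by
        obtain ⟨x, hx, y, hy, hxy⟩ := (h4 u v hneuv).mpr hadjuv
        exact ⟨⟨x, hx⟩, y, hy, hxy⟩
      have hSpre : (Subtype.val ⁻¹' S : Set ↥(X u)).Nonempty := by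
        obtain ⟨x, hx⟩ := hSne
        exact ⟨⟨x, hSsub hx⟩, hx⟩
      obtain ⟨s, a, p, hs, ha, hinj, hchord⟩ :=
        Stmt11Aux.exists_good_path (G.induce (X u)) (h3 u) _ A' hSpre hA'ne
      have hplen : p.length ≤ k := Stmt11Aux.length_le_of_chordless G hPt' p hinj hchord
      set T : Set V := Subtype.val '' {x : ↥(X u) | x ∈ p.support} with hT
      have hsT : (s : V) ∈ T := ⟨s, p.start_mem_support, rfl⟩
      have hsS : (s : V) ∈ S := hs
      have hTsub : T ⊆ X u := by
        rintro x ⟨⟨x', hx'⟩, _, rfl⟩; exact hx'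
      refine ⟨S ∪ T, Set.union_subset hSsub hTsub,
        hSne.mono Set.subset_union_left, ?_, ?_, ?_⟩
      · -- connectedness
        have hTeq : T = {x : V |
            x ∈ (p.map (SimpleGraph.Embedding.induce (X u)).toHom).support} := by
          ext x
          rw [Set.mem_setOf_eq, SimpleGraph.Walk.support_map, List.mem_map]
          constructor
          · rintro ⟨x', hx', rfl⟩; exact ⟨x', hx', rfl⟩
          · rintro ⟨x', hx', rfl⟩; exact ⟨x', hx', rfl⟩
        have hTconn : (G.induce T).Connected := by
          rw [hTeq]
          exact (p.map (SimpleGraph.Embedding.induce (X u)).toHom).connected_induce_support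
        exact SimpleGraph.induce_union_connected hSconn.preconnected hTconn.preconnected ⟨(s : V), hsS, hsT⟩
      · -- hitting
        intro w hw
        rcases Finset.mem_insert.mp hw with rfl | hw'
        · obtain ⟨y, hy, hxy⟩ := ha
          exact ⟨(a : V), Or.inr ⟨a, p.end_mem_support, rfl⟩, y, hy, hxy⟩
        · obtain ⟨x, hx, y, hy, hxy⟩ := hShit w hw'
          exact ⟨x, Or.inl hx, y, hy, hxy⟩
      · -- cardinality
        have hT1 : T.ncard ≤ p.length + 1 := by
          calc T.ncard ≤ {x : ↥(X u) | x ∈ p.support}.ncard :=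
                Set.ncard_image_le (Set.toFinite _)
            _ = p.support.toFinset.card := by
                rw [← Set.ncard_coe_finset]; congr 1; ext x; simp
            _ ≤ p.support.length := List.toFinset_card_le _
            _ = p.length + 1 := p.length_support
        have hT2 : (T \ {(s : V)}).ncard = T.ncard - 1 :=
          Set.ncard_diff_singleton_of_mem hsT
        have hsub2 : T \ S ⊆ T \ {(s : V)} := by
          rintro x ⟨hxT, hxS⟩
          exact ⟨hxT, fun hx => hxS (by rwa [Set.mem_singleton_iff.mp hx])⟩
        have hU1 : (S ∪ T).ncard ≤ S.ncard + (T \ S).ncard := by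
          rw [← Set.union_diff_self]
          exact Set.ncard_union_le _ _
        have hU2 : (T \ S).ncard ≤ (T \ {(s : V)}).ncard :=
          Set.ncard_le_ncard hsub2 (Set.toFinite _)
        have hcard : (insert v N').card = N'.card + 1 := Finset.card_insert_of_notMem hv
        have hmul : (N'.card + 1) * k = N'.card * k + k := by ring
        rw [hcard, hmul]
        omega
  set N : Finset W := (Set.toFinite (H.neighborSet u)).toFinset with hN
  have hNcard : (H.neighborSet u).ncard = N.card := Set.ncard_eq_toFinset_card _
  have hNmem : ∀ w, w ∈ N ↔ H.Adj u w := fun w => by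
    rw [hN, Set.Finite.mem_toFinset, SimpleGraph.mem_neighborSet]
  obtain ⟨S, hSsub, hSne, hSconn, hShit, hScard⟩ := key N (fun v hv => (hNmem v).mp hv)
  have hmodel : IsIMModel G H (Function.update X u S) := by
    refine ⟨?_, ?_, ?_, ?_⟩
    · intro w
      by_cases hw : w = u
      · rw [hw, Function.update_self]; exact hSne
      · rw [Function.update_of_ne hw]; exact h1 w
    · intro v w hvw
      by_cases hv : v = u <;> by_cases hw : w = u
      · exact absurd (hv.trans hw.symm) hvw
      · rw [hv, Function.update_self, Function.update_of_ne hw]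
        exact (h2 u w (by rw [← hv]; exact hvw)).mono_left hSsub
      · rw [hw, Function.update_self, Function.update_of_ne hv]
        exact (h2 v u (by rw [← hw]; exact hvw)).mono_right hSsub
      · rw [Function.update_of_ne hv, Function.update_of_ne hw]
        exact h2 v w hvw
    · intro w
      by_cases hw : w = u
      · rw [hw, Function.update_self]; exact hSconn
      · rw [Function.update_of_ne hw]; exact h3 w
    · intro v w hvw
      by_cases hv : v = u <;> by_cases hw : w = u
      · exact absurd (hv.trans hw.symm) hvw
      · have hvw' : u ≠ w := by rw [← hv]; exact hvw
        rw [hv, Function.update_self, Function.update_of_ne hw]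
        constructor
        · rintro ⟨x, hx, y, hy, hxy⟩
          exact (h4 u w hvw').mp ⟨x, hSsub hx, y, hy, hxy⟩
        · intro hadj
          exact hShit w ((hNmem w).mpr hadj)
      · rw [hw, Function.update_self, Function.update_of_ne hv]
        constructor
        · rintro ⟨x, hx, y, hy, hxy⟩
          exact ((h4 u v (Ne.symm hv)).mp ⟨y, hSsub hy, x, hx, hxy.symm⟩).symm
        · intro hadj
          obtain ⟨x, hx, y, hy, hxy⟩ := hShit v ((hNmem v).mpr hadj.symm)
          exact ⟨y, hy, x, hx, hxy.symm⟩
      · rw [Function.update_of_ne hv, Function.update_of_ne hw]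
        exact h4 v w hvw
  have hSeq : S = X u := by
    by_contra hne2
    exact hmin S (Set.ssubset_iff_subset_ne.mpr ⟨hSsub, hne2⟩) hmodel
  have hk : k + 2 - 2 = k := by omega
  rw [hk, hNcard, ← hSeq]
  exact hScard
end

section
/- Let t ≥ 2 be an integer, let G be a P_t-free graph and let H be a graph that is an induced minor of G. Then there exists an induced minor model (X_w)_{w ∈ V(H)} of H in G in which every bag has size at most 1 + (|V(H)| − 1) · (t − 2). -/
private lemma dist_start_getVert_le {V : Type} {G : SimpleGraph V} (hc : G.Connected) :
    ∀ {x y : V} (p : G.Walk x y) (k : ℕ), G.dist x (p.getVert k) ≤ k := by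
  intro x y p
  induction p with
  | nil => intro k; cases k <;> simp [SimpleGraph.Walk.getVert, SimpleGraph.dist_self]
  | @cons x b y h q ih =>
    intro k
    cases k with
    | zero => simp [SimpleGraph.Walk.getVert_zero, SimpleGraph.dist_self]
    | succ k =>
      rw [SimpleGraph.Walk.getVert_cons_succ]
      calc G.dist x (q.getVert k) ≤ G.dist x b + G.dist b (q.getVert k) := hc.dist_triangle
        _ ≤ 1 + k := by
            gcongr
            · exact SimpleGraph.dist_le (SimpleGraph.Walk.cons h SimpleGraph.Walk.nil)
            · exact ih k
        _ = k + 1 := by omega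

private lemma dist_getVert_end_le {V : Type} {G : SimpleGraph V} :
    ∀ {x y : V} (p : G.Walk x y) (k : ℕ), G.dist (p.getVert k) y ≤ p.length - k := by
  intro x y p
  induction p with
  | nil => intro k; cases k <;> simp [SimpleGraph.Walk.getVert, SimpleGraph.dist_self]
  | @cons x b y h q ih =>
    intro k
    cases k with
    | zero =>
      simpa using SimpleGraph.dist_le (SimpleGraph.Walk.cons h q)
    | succ k =>
      rw [SimpleGraph.Walk.getVert_cons_succ]
      simpa using ih k

private lemma dist_start_getVert_eq {V : Type} {G : SimpleGraph V} (hc : G.Connected)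
    {x y : V} (p : G.Walk x y) (hp : p.length = G.dist x y) {k : ℕ} (hk : k ≤ p.length) :
    G.dist x (p.getVert k) = k := by
  have h1 := dist_start_getVert_le hc p k
  have h2 := dist_getVert_end_le p k
  have h3 : G.dist x y ≤ G.dist x (p.getVert k) + G.dist (p.getVert k) y :=
    hc.dist_triangle
  omega

private lemma induce_dist_le {V : Type} {t : ℕ} (ht : 2 ≤ t) {G : SimpleGraph V}
    (hPt : ¬ IsInducedSubgraph (SimpleGraph.pathGraph t) G)
    {Y : Set V} (hc : (G.induce Y).Connected) (x y : Y) :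
    (G.induce Y).dist x y ≤ t - 2 := by
  by_contra hlt
  set K := G.induce Y with hKdef
  have hd : t - 1 ≤ K.dist x y := by omega
  obtain ⟨p, hp⟩ := (hc x y).exists_walk_length_eq_dist
  have hlen : t - 1 ≤ p.length := by omega
  have hdeq : ∀ k : ℕ, k ≤ p.length → K.dist x (p.getVert k) = k :=
    fun k hk => dist_start_getVert_eq hc p hp hk
  have hcoe : ∀ i : Fin t, (i : ℕ) ≤ p.length := fun i => le_trans (by omega) hlen
  apply hPt
  refine ⟨fun i => (p.getVert i).val, ?_, ?_⟩
  · intro i j hij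
    have : p.getVert i = p.getVert j := Subtype.val_injective hij
    have h1 : (i : ℕ) = (j : ℕ) := by
      rw [← hdeq i (hcoe i), ← hdeq j (hcoe j), this]
    exact Fin.ext h1
  · intro i j
    constructor
    · intro hadj
      have hK : K.Adj (p.getVert i) (p.getVert j) := by
        simp only [hKdef, SimpleGraph.comap_adj, Function.Embedding.coe_subtype]
        exact hadj
      have h1 : K.dist (p.getVert i) (p.getVert j) ≤ 1 :=
        SimpleGraph.dist_le (SimpleGraph.Walk.cons hK SimpleGraph.Walk.nil)
      have h2 : K.dist x (p.getVert j) ≤ K.dist x (p.getVert i) + 1 :=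
        le_trans (hc.dist_triangle (v := p.getVert i)) (by omega)
      have h3 : K.dist x (p.getVert i) ≤ K.dist x (p.getVert j) + 1 :=
        le_trans (hc.dist_triangle (v := p.getVert j)) (by
          rw [SimpleGraph.dist_comm (u := p.getVert i)] at h1; omega)
      rw [hdeq i (hcoe i), hdeq j (hcoe j)] at h2 h3
      have hne : (i : ℕ) ≠ (j : ℕ) := by
        intro h
        exact (SimpleGraph.Adj.ne hadj) (by rw [Fin.ext h])
      rw [SimpleGraph.pathGraph_adj]
      omega
    · intro hadj
      rw [SimpleGraph.pathGraph_adj] at hadj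
      have key : ∀ k : ℕ, k + 1 ≤ p.length →
          G.Adj (p.getVert k).val (p.getVert (k+1)).val := by
        intro k hk
        have := p.adj_getVert_succ (by omega : k < p.length)
        simpa only [hKdef, SimpleGraph.comap_adj, Function.Embedding.coe_subtype] using this
      rcases hadj with h | h
      · have := key i (by rw [h]; exact hcoe j)
        rwa [h] at this
      · have := key j (by rw [h]; exact hcoe i)
        rw [h] at this
        exact this.symm

private lemma reach_of_walk_support {V : Type} {G : SimpleGraph V} {Z : Set V} :
    ∀ {x y : V} (p : G.Walk x y), (∀ z ∈ p.support, z ∈ Z) →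
      ∀ (hx : x ∈ Z) (hy : y ∈ Z), (G.induce Z).Reachable ⟨x, hx⟩ ⟨y, hy⟩ := by
  intro x y p
  induction p with
  | nil => intro _ hx hy; rfl
  | @cons x b y h q ih =>
    intro hsup hx hy
    have hb : b ∈ Z := hsup b (by simp)
    have hadj : (G.induce Z).Adj ⟨x, hx⟩ ⟨b, hb⟩ := by
      simp only [SimpleGraph.comap_adj, Function.Embedding.coe_subtype]
      exact h
    exact hadj.reachable.trans (ih (fun z hz => hsup z (by simp [hz])) hb hy)

/-- Let `t ≥ 2`, let `G` be a `P_t`-free graph (no induced path on `t` vertices), and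
let `H` be an induced minor of `G`. Then there is an induced minor model of `H` in `G`
in which every bag has size at most `1 + (|V(H)| - 1) * (t - 2)`. -/
theorem stmt12 {V W : Type} [Fintype V] [Fintype W]
    (t : ℕ) (ht : 2 ≤ t)
    (G : SimpleGraph V) (hPt : ¬ IsInducedSubgraph (SimpleGraph.pathGraph t) G)
    (H : SimpleGraph W) (him : IsInducedMinor H G) :
    ∃ X : W → Set V, IsIMModel G H X ∧
      ∀ w : W, (X w).ncard ≤ 1 + (Fintype.card W - 1) * (t - 2) := by
  classical
  set S : Set ℕ := {n | ∃ X : W → Set V, IsIMModel G H X ∧ ∑ w, (X w).ncard = n} with hSdef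
  have hS : S.Nonempty := by
    obtain ⟨X0, h0⟩ := him
    exact ⟨∑ w, (X0 w).ncard, X0, h0, rfl⟩
  obtain ⟨X, hX, hXsum⟩ := Nat.sInf_mem hS
  have hmin : ∀ X' : W → Set V, IsIMModel G H X' → sInf S ≤ ∑ w, (X' w).ncard :=
    fun X' h => Nat.sInf_le ⟨X', h, rfl⟩
  refine ⟨X, hX, fun u => ?_⟩
  obtain ⟨hne, hdisj, hconn, hadjiff⟩ := hX
  obtain ⟨y0, hy0⟩ := hne u
  have hKc : (G.induce (X u)).Connected := hconn u
  set N : Finset W := Finset.univ.filter (fun v => H.Adj u v) with hN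
  have hmemN : ∀ v, v ∈ N ↔ H.Adj u v := by intro v; simp [hN]
  have huN : u ∉ N := by simp [hN]
  -- attachment vertices
  have hatt : ∀ v : N, ∃ a : (X u), ∃ c, c ∈ X (v : W) ∧ G.Adj a c := by
    rintro ⟨v, hv⟩
    have hvadj : H.Adj u v := (hmemN v).1 hv
    obtain ⟨x, hx, y, hy, hxy⟩ := (hadjiff u v (H.ne_of_adj hvadj)).2 hvadj
    exact ⟨⟨x, hx⟩, y, hy, hxy⟩
  choose a c hc hac using hatt
  -- short walks from y0 to the attachment vertices, inside the bag
  have hwalks : ∀ v : N, ∃ qv : G.Walk y0 (a v).val,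
      qv.length ≤ t - 2 ∧ ∀ z ∈ qv.support, z ∈ X u := by
    intro v
    obtain ⟨p, hp⟩ := (hKc ⟨y0, hy0⟩ (a v)).exists_walk_length_eq_dist
    have hplen : p.length ≤ t - 2 := by
      rw [hp]; exact induce_dist_le ht hPt hKc _ _
    refine ⟨p.map (SimpleGraph.Embedding.induce (X u)).toHom, ?_, ?_⟩
    · exact (SimpleGraph.Walk.length_map _ _).trans_le hplen
    · intro z hz
      erw [SimpleGraph.Walk.support_map] at hz
      obtain ⟨z', _, rfl⟩ := List.mem_map.1 hz
      exact z'.2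
  choose q hqlen hqmem using hwalks
  set F : N → Finset V := fun v => (q v).support.toFinset with hF
  set Z : Finset V := insert y0 (Finset.univ.biUnion (fun v : N => (F v).erase y0)) with hZ
  have hy0Z : y0 ∈ Z := Finset.mem_insert_self _ _
  have hFZ : ∀ v : N, ∀ z ∈ (q v).support, z ∈ Z := by
    intro v z hz
    rcases eq_or_ne z y0 with rfl | hne'
    · exact hy0Z
    · refine Finset.mem_insert_of_mem (Finset.mem_biUnion.2 ⟨v, Finset.mem_univ v, ?_⟩)
      exact Finset.mem_erase.2 ⟨hne', List.mem_toFinset.2 hz⟩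
  have hZX : (↑Z : Set V) ⊆ X u := by
    intro z hz
    rw [Finset.mem_coe, hZ, Finset.mem_insert] at hz
    rcases hz with rfl | hz
    · exact hy0
    · obtain ⟨v, _, hv⟩ := Finset.mem_biUnion.1 hz
      exact hqmem v z (List.mem_toFinset.1 (Finset.mem_of_mem_erase hv))
  have hy0Z' : y0 ∈ (↑Z : Set V) := hy0Z
  have haZ : ∀ v : N, (a v).val ∈ (↑Z : Set V) :=
    fun v => hFZ v _ (SimpleGraph.Walk.end_mem_support _)
  -- connectivity of the shrunken bag
  have hreach : ∀ z (hz : z ∈ (↑Z : Set V)),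
      (G.induce (↑Z : Set V)).Reachable ⟨y0, hy0Z'⟩ ⟨z, hz⟩ := by
    intro z hz
    have : z ∈ Z := hz
    rw [hZ, Finset.mem_insert] at this
    rcases this with rfl | hmem
    · rfl
    · obtain ⟨v, _, hv⟩ := Finset.mem_biUnion.1 hmem
      have hzsup : z ∈ (q v).support := List.mem_toFinset.1 (Finset.mem_of_mem_erase hv)
      refine reach_of_walk_support ((q v).takeUntil z hzsup) ?_ hy0Z' hz
      intro w hw
      exact hFZ v w ((q v).support_takeUntil_subset hzsup hw)
  have hZconn : (G.induce (↑Z : Set V)).Connected := by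
    rw [SimpleGraph.connected_iff]
    refine ⟨fun A B => ((hreach A.1 A.2).symm.trans (hreach B.1 B.2)), ⟨⟨y0, hy0Z'⟩⟩⟩
  -- the updated family is still a model
  set X' : W → Set V := Function.update X u (↑Z : Set V) with hX'def
  have hX'u : X' u = (↑Z : Set V) := Function.update_self _ _ _
  have hX'w : ∀ w, w ≠ u → X' w = X w := fun w hw => Function.update_of_ne hw _ _
  have hmodel : IsIMModel G H X' := by
    refine ⟨?_, ?_, ?_, ?_⟩
    · intro w
      rcases eq_or_ne w u with h | h
      · rw [h, hX'u]; exact ⟨y0, hy0Z'⟩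
      · rw [hX'w w h]; exact hne w
    · intro v w hvw
      rcases eq_or_ne v u with hv | hv
      · rw [hv] at hvw ⊢
        rw [hX'u, hX'w w (Ne.symm hvw)]
        exact (hdisj u w hvw).mono_left hZX
      · rcases eq_or_ne w u with hw | hw
        · rw [hw] at hvw ⊢
          rw [hX'u, hX'w v hvw]
          exact (hdisj v u hvw).mono_right hZX
        · rw [hX'w v hv, hX'w w hw]; exact hdisj v w hvw
    · intro w
      rcases eq_or_ne w u with h | h
      · rw [h, hX'u]; exact hZconn
      · rw [hX'w w h]; exact hconn w
    · intro v w hvw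
      rcases eq_or_ne v u with hv | hv
      · rw [hv] at hvw ⊢
        rw [hX'u, hX'w w (Ne.symm hvw)]
        constructor
        · rintro ⟨x, hx, y, hy, hxy⟩
          exact (hadjiff u w hvw).1 ⟨x, hZX hx, y, hy, hxy⟩
        · intro h
          have hwN : w ∈ N := (hmemN w).2 h
          exact ⟨(a ⟨w, hwN⟩).val, haZ ⟨w, hwN⟩, c ⟨w, hwN⟩, hc ⟨w, hwN⟩, hac ⟨w, hwN⟩⟩
      · rcases eq_or_ne w u with hw | hw
        · rw [hw] at hvw ⊢
          rw [hX'u, hX'w v hvw]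
          constructor
          · rintro ⟨x, hx, y, hy, hxy⟩
            exact (hadjiff v u hvw).1 ⟨x, hx, y, hZX hy, hxy⟩
          · intro h
            have hvN : v ∈ N := (hmemN v).2 h.symm
            exact ⟨c ⟨v, hvN⟩, hc ⟨v, hvN⟩, (a ⟨v, hvN⟩).val, haZ ⟨v, hvN⟩,
              (hac ⟨v, hvN⟩).symm⟩
        · rw [hX'w v hv, hX'w w hw]; exact hadjiff v w hvw
  -- by minimality, the bag equals Z
  have hZeq : (↑Z : Set V) = X u := by
    by_contra hneq
    have hss : (↑Z : Set V) ⊂ X u := hZX.ssubset_of_ne hneq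
    have hlt : ∑ w, (X' w).ncard < ∑ w, (X w).ncard := by
      apply Finset.sum_lt_sum
      · intro w _
        rcases eq_or_ne w u with rfl | h
        · rw [hX'u]; exact Set.ncard_le_ncard hZX (Set.toFinite _)
        · rw [hX'w w h]
      · exact ⟨u, Finset.mem_univ u, by
          rw [hX'u]; exact Set.ncard_lt_ncard hss (Set.toFinite _)⟩
    have h1 := hmin X' hmodel
    omega
  -- cardinality bound
  rw [← hZeq, Set.ncard_coe_finset]
  have hterm : ∀ v : N, ((F v).erase y0).card ≤ t - 2 := by
    intro v
    have hy0F : y0 ∈ F v := List.mem_toFinset.2 ((q v).start_mem_support)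
    have hFcard : (F v).card ≤ (t - 2) + 1 := by
      calc (F v).card ≤ (q v).support.length := List.toFinset_card_le _
        _ = (q v).length + 1 := SimpleGraph.Walk.length_support _
        _ ≤ (t - 2) + 1 := by have := hqlen v; omega
    rw [Finset.card_erase_of_mem hy0F]
    omega
  have hNcard : N.card ≤ Fintype.card W - 1 := by
    have h1 : N ⊆ Finset.univ.erase u := by
      intro x hx
      exact Finset.mem_erase.2 ⟨fun h => huN (h ▸ hx), Finset.mem_univ x⟩
    calc N.card ≤ (Finset.univ.erase u).card := Finset.card_le_card h1
      _ = Fintype.card W - 1 := by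
          rw [Finset.card_erase_of_mem (Finset.mem_univ u), Finset.card_univ]
  calc Z.card ≤ (Finset.univ.biUnion (fun v : N => (F v).erase y0)).card + 1 :=
        Finset.card_insert_le _ _
    _ ≤ (∑ v : N, ((F v).erase y0).card) + 1 := by
        have := Finset.card_biUnion_le
          (s := (Finset.univ : Finset N)) (t := fun v : N => (F v).erase y0)
        omega
    _ ≤ (∑ _v : N, (t - 2)) + 1 := by
        have := Finset.sum_le_sum (fun v (_ : v ∈ Finset.univ) => hterm v)
        omega
    _ = Fintype.card N * (t - 2) + 1 := by rw [Finset.sum_const, smul_eq_mul, Finset.card_univ]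
    _ = N.card * (t - 2) + 1 := by rw [Fintype.card_coe]
    _ ≤ (Fintype.card W - 1) * (t - 2) + 1 := by
        have := Nat.mul_le_mul_right (t - 2) hNcard
        omega
    _ = 1 + (Fintype.card W - 1) * (t - 2) := by omega
end

section
/- Let G be a subdivision of the complete bipartite graph K_{3,3}. Then the Full House K̂4 is an induced minor of G if and only if at least one edge of K_{3,3} is subdivided in G, i.e., G is not isomorphic to K_{3,3} itself. -/
/-- The graph obtained from the graph on `U` with edges `E 0, …, E (m-1)` by replacing
the edge `E i` by a path with `n i` internal (subdivision) vertices; for `n i = 0` the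
edge `E i` is kept as it is. This produces exactly the subdivisions of that graph. -/
def subdivGraph {U : Type} (m : ℕ) (E : Fin m → U × U) (n : Fin m → ℕ) :
    SimpleGraph (U ⊕ Σ i : Fin m, Fin (n i)) :=
  SimpleGraph.fromRel fun x y =>
    (∃ i : Fin m, n i = 0 ∧ x = Sum.inl (E i).1 ∧ y = Sum.inl (E i).2) ∨
    (∃ (i : Fin m) (j : Fin (n i)), (j : ℕ) = 0 ∧
      x = Sum.inl (E i).1 ∧ y = Sum.inr ⟨i, j⟩) ∨
    (∃ (i : Fin m) (j : Fin (n i)), (j : ℕ) = n i - 1 ∧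
      x = Sum.inr ⟨i, j⟩ ∧ y = Sum.inl (E i).2) ∨
    (∃ (i : Fin m) (j k : Fin (n i)), (j : ℕ) + 1 = (k : ℕ) ∧
      x = Sum.inr ⟨i, j⟩ ∧ y = Sum.inr ⟨i, k⟩)

/-- The Full House `K̂₄`: the complete graph on the vertices `0, 1, 2, 3` together with
the vertex `4` adjacent exactly to `0` and `1`. -/
def fullHouse : SimpleGraph (Fin 5) :=
  SimpleGraph.fromRel fun x y =>
    ((x : ℕ) < 4 ∧ (y : ℕ) < 4) ∨ (x = 4 ∧ (y = 0 ∨ y = 1))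

/-- The edges of the complete bipartite graph `K₃₃` on `Fin 6`, with parts `{0, 1, 2}`
and `{3, 4, 5}`. -/
def k33Edges : Fin 9 → Fin 6 × Fin 6 :=
  ![(0, 3), (0, 4), (0, 5), (1, 3), (1, 4), (1, 5), (2, 3), (2, 4), (2, 5)]

open Sum SimpleGraph

/-! ### Basic facts -/

lemma fh_adj_iff (u v : Fin 5) : fullHouse.Adj u v ↔ (u ≠ v ∧
    ((((u : ℕ) < 4 ∧ (v : ℕ) < 4) ∨ (u = 4 ∧ (v = 0 ∨ v = 1))) ∨
     (((v : ℕ) < 4 ∧ (u : ℕ) < 4) ∨ (v = 4 ∧ (u = 0 ∨ u = 1))))) := by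
  rw [fullHouse, SimpleGraph.fromRel_adj]

instance : DecidableRel fullHouse.Adj := fun u v => decidable_of_iff' _ (fh_adj_iff u v)

def eA (j : Fin 9) : Fin 6 := (k33Edges j).1
def eB (j : Fin 9) : Fin 6 := (k33Edges j).2

def lab (i : Fin 9) (v : Fin 6) : Fin 5 :=
  if (v : ℕ) < 3 then
    (if v = eA i then 1 else if (v : ℕ) = ((eA i : ℕ) + 1) % 3 then 0 else 2)
  else
    (if v = eB i then 0 else if (v : ℕ) = ((eB i : ℕ) - 3 + 1) % 3 + 3 then 1 else 3)

def cvx (i : Fin 9) (u : Fin 5) : Fin 6 :=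
  if u = 1 then eA i
  else if u = 0 then ⟨((eA i : ℕ) + 1) % 3, by omega⟩
  else if u = 2 then ⟨((eA i : ℕ) + 2) % 3, by omega⟩
  else ⟨((eB i : ℕ) - 3 + 2) % 3 + 3, by omega⟩

lemma eA_ne_eB : ∀ j, eA j ≠ eB j := by decide
lemma D1 : ∀ i j, lab i (eA j) = lab i (eB j) ∨
    fullHouse.Adj (lab i (eA j)) (lab i (eB j)) := by decide
lemma DlabA1 : ∀ i, lab i (eA i) = 1 := by decide
lemma DlabB0 : ∀ i, lab i (eB i) = 0 := by decide
lemma Dlabne4 : ∀ i v, lab i v ≠ 4 := by decide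
lemma DinjA : ∀ (i : Fin 9) (v : Fin 6) (u : Fin 5), (v : ℕ) < 3 → lab i v = u →
    v = cvx i u := by decide
lemma Dcvx : ∀ (i : Fin 9) (u : Fin 5), (u : ℕ) < 4 → lab i (cvx i u) = u := by decide
lemma DB3 : ∀ (i : Fin 9) (v : Fin 6), 3 ≤ (v : ℕ) → lab i v = 3 → v = cvx i 3 := by decide
lemma DBedge : ∀ (i : Fin 9) (v : Fin 6) (u : Fin 5), 3 ≤ (v : ℕ) → lab i v = u → u ≠ 3 →
    ∃ j, j ≠ i ∧ eA j = cvx i u ∧ eB j = v := by decide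
lemma D2 : ∀ (i : Fin 9) (u v : Fin 5), (u : ℕ) < 4 → (v : ℕ) < 4 → u ≠ v →
    ∃ j, j ≠ i ∧ ((lab i (eA j) = u ∧ lab i (eB j) = v) ∨
      (lab i (eA j) = v ∧ lab i (eB j) = u)) := by decide
lemma DeAlt3 : ∀ j, (eA j : ℕ) < 3 := by decide
lemma DeBge3 : ∀ j, 3 ≤ (eB j : ℕ) := by decide

/-! ### Adjacency lemmas for the subdivided graph -/

variable {n : Fin 9 → ℕ}

lemma adj00 (j : Fin 9) (h : n j = 0) :
    (subdivGraph 9 k33Edges n).Adj (inl (eA j)) (inl (eB j)) := by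
  rw [subdivGraph, SimpleGraph.fromRel_adj]
  exact ⟨by simpa using eA_ne_eB j, Or.inl (Or.inl ⟨j, h, rfl, rfl⟩)⟩

lemma adjFirst (j : Fin 9) (h : 0 < n j) :
    (subdivGraph 9 k33Edges n).Adj (inl (eA j)) (inr ⟨j, ⟨0, h⟩⟩) := by
  rw [subdivGraph, SimpleGraph.fromRel_adj]
  exact ⟨by simp, Or.inl (Or.inr (Or.inl ⟨j, ⟨0, h⟩, rfl, rfl, rfl⟩))⟩

lemma adjLast (j : Fin 9) (h : 0 < n j) :
    (subdivGraph 9 k33Edges n).Adj (inr ⟨j, ⟨n j - 1, by omega⟩⟩) (inl (eB j)) := by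
  rw [subdivGraph, SimpleGraph.fromRel_adj]
  exact ⟨by simp, Or.inl (Or.inr (Or.inr (Or.inl ⟨j, ⟨n j - 1, by omega⟩, rfl, rfl, rfl⟩)))⟩

lemma adjStep (j : Fin 9) (t : ℕ) (h : t + 1 < n j) :
    (subdivGraph 9 k33Edges n).Adj (inr ⟨j, ⟨t, by omega⟩⟩) (inr ⟨j, ⟨t + 1, h⟩⟩) := by
  rw [subdivGraph, SimpleGraph.fromRel_adj]
  refine ⟨?_, Or.inl (Or.inr (Or.inr (Or.inr ⟨j, ⟨t, by omega⟩, ⟨t+1, h⟩, rfl, rfl, rfl⟩)))⟩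
  intro hc
  simp at hc

lemma adj_rec {x y : Fin 6 ⊕ Σ i : Fin 9, Fin (n i)}
    (h : (subdivGraph 9 k33Edges n).Adj x y) (P : Prop)
    (h1 : ∀ j : Fin 9, x = inl (eA j) → y = inl (eB j) → P)
    (h1' : ∀ j : Fin 9, y = inl (eA j) → x = inl (eB j) → P)
    (h2 : ∀ (j : Fin 9) (t : Fin (n j)), x = inl (eA j) → y = inr ⟨j, t⟩ → P)
    (h2' : ∀ (j : Fin 9) (t : Fin (n j)), y = inl (eA j) → x = inr ⟨j, t⟩ → P)
    (h3 : ∀ (j : Fin 9) (t : Fin (n j)), (t : ℕ) = n j - 1 → x = inr ⟨j, t⟩ → y = inl (eB j) → P)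
    (h3' : ∀ (j : Fin 9) (t : Fin (n j)), (t : ℕ) = n j - 1 → y = inr ⟨j, t⟩ → x = inl (eB j) → P)
    (h4 : ∀ (j : Fin 9) (t s : Fin (n j)), (t : ℕ) + 1 = (s : ℕ) → x = inr ⟨j, t⟩ → y = inr ⟨j, s⟩ → P)
    (h4' : ∀ (j : Fin 9) (t s : Fin (n j)), (t : ℕ) + 1 = (s : ℕ) → y = inr ⟨j, t⟩ → x = inr ⟨j, s⟩ → P) : P := by
  rw [subdivGraph, SimpleGraph.fromRel_adj] at h
  obtain ⟨-, h | h⟩ := h <;>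
  rcases h with ⟨j, -, hx, hy⟩ | ⟨j, t, ht, hx, hy⟩ | ⟨j, t, ht, hx, hy⟩ | ⟨j, t, s, ht, hx, hy⟩
  · exact h1 j hx hy
  · exact h2 j t hx hy
  · exact h3 j t ht hx hy
  · exact h4 j t s ht hx hy
  · exact h1' j hx hy
  · exact h2' j t hx hy
  · exact h3' j t ht hx hy
  · exact h4' j t s ht hx hy

/-! ### The labelling -/

def ell (n : Fin 9 → ℕ) (i : Fin 9) : (Fin 6 ⊕ Σ j : Fin 9, Fin (n j)) → Fin 5
  | Sum.inl v => lab i v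
  | Sum.inr ⟨j, t⟩ => if j = i ∧ (t : ℕ) = n i - 1 then 4 else lab i (eA j)

@[simp] lemma ell_inl (i : Fin 9) (v : Fin 6) : ell n i (inl v) = lab i v := rfl
@[simp] lemma ell_inr (i j : Fin 9) (t : Fin (n j)) :
    ell n i (inr ⟨j, t⟩) = if j = i ∧ (t : ℕ) = n i - 1 then 4 else lab i (eA j) := rfl

lemma ellKey (i : Fin 9) {x y : Fin 6 ⊕ Σ j : Fin 9, Fin (n j)}
    (h : (subdivGraph 9 k33Edges n).Adj x y) :
    ell n i x = ell n i y ∨ fullHouse.Adj (ell n i x) (ell n i y) := by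
  have sym : ∀ {a b : Fin 5}, (a = b ∨ fullHouse.Adj a b) → (b = a ∨ fullHouse.Adj b a) :=
    fun h => h.imp Eq.symm SimpleGraph.Adj.symm
  refine adj_rec h _ ?_ ?_ ?_ ?_ ?_ ?_ ?_ ?_ <;> intros j
  case refine_1 => rintro hx hy; subst hx; subst hy; simpa using D1 i j
  case refine_2 => rintro hx hy; subst hx; subst hy; exact sym (by simpa using D1 i j)
  case refine_3 =>
    rintro t hx hy; subst hx; subst hy
    simp only [ell_inl, ell_inr]
    by_cases hc : j = i ∧ (t : ℕ) = n i - 1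
    · rw [if_pos hc, hc.1, DlabA1 i]; exact Or.inr (by decide)
    · rw [if_neg hc]; exact Or.inl rfl
  case refine_4 =>
    rintro t hx hy; subst hx; subst hy
    refine sym ?_
    simp only [ell_inl, ell_inr]
    by_cases hc : j = i ∧ (t : ℕ) = n i - 1
    · rw [if_pos hc, hc.1, DlabA1 i]; exact Or.inr (by decide)
    · rw [if_neg hc]; exact Or.inl rfl
  case refine_5 =>
    rintro t ht hx hy; subst hx; subst hy
    simp only [ell_inl, ell_inr]
    by_cases hc : j = i ∧ (t : ℕ) = n i - 1
    · rw [if_pos hc]; obtain ⟨rfl, -⟩ := hc; rw [DlabB0 j]; exact Or.inr (by decide)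
    · rw [if_neg hc]; exact D1 i j
  case refine_6 =>
    rintro t ht hx hy; subst hx; subst hy
    refine sym ?_
    simp only [ell_inl, ell_inr]
    by_cases hc : j = i ∧ (t : ℕ) = n i - 1
    · rw [if_pos hc]; obtain ⟨rfl, -⟩ := hc; rw [DlabB0 j]; exact Or.inr (by decide)
    · rw [if_neg hc]; exact D1 i j
  case refine_7 =>
    rintro t s hts hx hy; subst hx; subst hy
    simp only [ell_inr]
    have hxne : ¬ (j = i ∧ (t : ℕ) = n i - 1) := by
      rintro ⟨rfl, ht⟩
      have := s.isLt; omega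
    rw [if_neg hxne]
    by_cases hc : j = i ∧ (s : ℕ) = n i - 1
    · rw [if_pos hc, hc.1, DlabA1 i]; exact Or.inr (by decide)
    · rw [if_neg hc]; exact Or.inl rfl
  case refine_8 =>
    rintro t s hts hx hy; subst hx; subst hy
    refine sym ?_
    simp only [ell_inr]
    have hxne : ¬ (j = i ∧ (t : ℕ) = n i - 1) := by
      rintro ⟨rfl, ht⟩
      have := s.isLt; omega
    rw [if_neg hxne]
    by_cases hc : j = i ∧ (s : ℕ) = n i - 1
    · rw [if_pos hc, hc.1, DlabA1 i]; exact Or.inr (by decide)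
    · rw [if_neg hc]; exact Or.inl rfl

/-! ### Reachability within bags -/

lemma induce_adj' {s : Set (Fin 6 ⊕ Σ j : Fin 9, Fin (n j))}
    {x y : Fin 6 ⊕ Σ j : Fin 9, Fin (n j)} (hx : x ∈ s) (hy : y ∈ s)
    (h : (subdivGraph 9 k33Edges n).Adj x y) :
    ((subdivGraph 9 k33Edges n).induce s).Adj ⟨x, hx⟩ ⟨y, hy⟩ := h

lemma reach_to_A (s : Set (Fin 6 ⊕ Σ j : Fin 9, Fin (n j))) (j : Fin 9)
    (hA : inl (eA j) ∈ s) :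
    ∀ (t : ℕ) (ht : t < n j)
      (hall : ∀ (t' : ℕ) (h2 : t' < n j), t' ≤ t → inr ⟨j, ⟨t', h2⟩⟩ ∈ s),
    ((subdivGraph 9 k33Edges n).induce s).Reachable
      ⟨inr ⟨j, ⟨t, ht⟩⟩, hall t ht le_rfl⟩ ⟨inl (eA j), hA⟩ := by
  intro t
  induction t with
  | zero =>
    intro ht hall
    exact (induce_adj' _ _ (adjFirst j ht).symm).reachable
  | succ t ih =>
    intro ht hall
    have h1 : ((subdivGraph 9 k33Edges n).induce s).Adj
        ⟨inr ⟨j, ⟨t + 1, ht⟩⟩, hall (t+1) ht le_rfl⟩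
        ⟨inr ⟨j, ⟨t, by omega⟩⟩, hall t (by omega) (by omega)⟩ :=
      induce_adj' _ _ (adjStep j t ht).symm
    exact h1.reachable.trans (ih (by omega) (fun t' h2 h3 => hall t' h2 (by omega)))

/-! ### The model -/

lemma model_of_subdiv (n : Fin 9 → ℕ) (i : Fin 9) (hi : n i ≠ 0) :
    IsInducedMinor fullHouse (subdivGraph 9 k33Edges n) := by
  classical
  set S := subdivGraph 9 k33Edges n with hS
  refine ⟨fun u => {w | ell n i w = u}, ?_, ?_, ?_, ?_⟩
  · -- nonempty
    intro u
    by_cases hu : u = 4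
    · subst hu
      refine ⟨inr ⟨i, ⟨n i - 1, by omega⟩⟩, ?_⟩
      simp
    · have hu4 : (u : ℕ) < 4 := by
        have := u.isLt
        have : (u : ℕ) ≠ 4 := fun h => hu (Fin.ext h)
        omega
      exact ⟨inl (cvx i u), by simp [Dcvx i u hu4]⟩
  · -- disjoint
    intro u v huv
    rw [Set.disjoint_left]
    intro x hx hy
    exact huv (hx.symm.trans hy)
  · -- connected
    intro u
    rw [connected_iff_exists_forall_reachable]
    by_cases hu : u = 4
    · subst hu
      have hc : (inr ⟨i, ⟨n i - 1, by omega⟩⟩ : Fin 6 ⊕ Σ j : Fin 9, Fin (n j)) ∈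
          {w | ell n i w = 4} := by simp
      refine ⟨⟨_, hc⟩, ?_⟩
      rintro ⟨x, hx⟩
      have : x = inr ⟨i, ⟨n i - 1, by omega⟩⟩ := by
        match x with
        | inl v => exact absurd hx (Dlabne4 i v)
        | inr ⟨j, t⟩ =>
          have hx' : ell n i (inr ⟨j, t⟩) = 4 := hx
          simp only [ell_inr] at hx'
          by_cases hcc : j = i ∧ (t : ℕ) = n i - 1
          · obtain ⟨rfl, ht⟩ := hcc
            congr 1
            exact Sigma.ext rfl (heq_of_eq (Fin.ext ht))
          · rw [if_neg hcc] at hx'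
            exact absurd hx' (Dlabne4 i (eA j))
      subst this
      exact Reachable.refl _
    · have hu4 : (u : ℕ) < 4 := by
        have := u.isLt
        have : (u : ℕ) ≠ 4 := fun h => hu (Fin.ext h)
        omega
      have hcmem : (inl (cvx i u) : Fin 6 ⊕ Σ j : Fin 9, Fin (n j)) ∈
          {w | ell n i w = u} := by simp [Dcvx i u hu4]
      refine ⟨⟨_, hcmem⟩, ?_⟩
      rintro ⟨x, hx⟩
      refine Reachable.symm ?_
      -- reach from x to the center
      match x with
      | inl v =>
        have hxv : lab i v = u := hx
        by_cases hv3 : (v : ℕ) < 3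
        · have : v = cvx i u := DinjA i v u hv3 hxv
          subst this
          exact Reachable.refl _
        · -- v is a B-vertex
          by_cases hu3 : u = 3
          · have : v = cvx i 3 := DB3 i v (by omega) (by rw [hxv, hu3])
            subst hu3
            subst this
            exact Reachable.refl _
          · obtain ⟨j, hji, hjA, hjB⟩ := DBedge i v u (by omega) hxv hu3
            have hlabAj : lab i (eA j) = u := by rw [hjA]; exact Dcvx i u hu4
            have hAmem : (inl (eA j) : Fin 6 ⊕ Σ j : Fin 9, Fin (n j)) ∈
                {w | ell n i w = u} := hlabAj
            have hceq : (⟨inl (cvx i u), hcmem⟩ :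
                {w | ell n i w = u}) = ⟨inl (eA j), hAmem⟩ := by simp [hjA]
            by_cases hnj : n j = 0
            · have hadj : (subdivGraph 9 k33Edges n).Adj (inl v) (inl (eA j)) := by
                rw [← hjB]; exact (adj00 j hnj).symm
              rw [hceq]
              exact (induce_adj' hx hAmem hadj).reachable
            · -- go through the internal path of edge j
              have hmemall : ∀ (t' : ℕ) (h2 : t' < n j),
                  (inr ⟨j, ⟨t', h2⟩⟩ : Fin 6 ⊕ Σ j : Fin 9, Fin (n j)) ∈
                    {w | ell n i w = u} := by
                intro t' h2
                simp only [Set.mem_setOf_eq, ell_inr]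
                rw [if_neg (by rintro ⟨rfl, -⟩; exact hji rfl)]
                exact hlabAj
              have r1 : ((subdivGraph 9 k33Edges n).induce {w | ell n i w = u}).Reachable
                  ⟨inr ⟨j, ⟨n j - 1, by omega⟩⟩, hmemall _ _⟩ ⟨inl (eA j), hAmem⟩ :=
                reach_to_A _ j hAmem (n j - 1) (by omega) (fun t' h2 _ => hmemall t' h2)
              have r2 : ((subdivGraph 9 k33Edges n).induce {w | ell n i w = u}).Adj
                  ⟨inr ⟨j, ⟨n j - 1, by omega⟩⟩, hmemall _ _⟩ ⟨inl v, hx⟩ := by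
                refine induce_adj' _ _ ?_
                rw [← hjB]
                exact adjLast j (by omega)
              rw [hceq]
              exact (r2.symm.reachable).trans r1
      | inr ⟨j, t⟩ =>
        have hx' : ell n i (inr ⟨j, t⟩) = u := hx
        simp only [ell_inr] at hx'
        by_cases hcc : j = i ∧ (t : ℕ) = n i - 1
        · rw [if_pos hcc] at hx'
          exact absurd hx'.symm hu
        · rw [if_neg hcc] at hx'
          have hjA : eA j = cvx i u := DinjA i (eA j) u (DeAlt3 j) hx'
          have hmemall : ∀ (t' : ℕ) (h2 : t' < n j), t' ≤ (t : ℕ) →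
              (inr ⟨j, ⟨t', h2⟩⟩ : Fin 6 ⊕ Σ j : Fin 9, Fin (n j)) ∈
                {w | ell n i w = u} := by
            intro t' h2 hle
            simp only [Set.mem_setOf_eq, ell_inr]
            rw [if_neg ?_]
            · exact hx'
            rintro ⟨rfl, ht'⟩
            have h1 : (t : ℕ) ≠ n j - 1 := fun hh => hcc ⟨rfl, hh⟩
            have := t.isLt
            omega
          have hAmem : (inl (eA j) : Fin 6 ⊕ Σ j : Fin 9, Fin (n j)) ∈
              {w | ell n i w = u} := hx'
          have r1 := reach_to_A {w | ell n i w = u} j hAmem (t : ℕ) t.isLt hmemall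
          have : (⟨inl (cvx i u), hcmem⟩ :
              {w | ell n i w = u}) = ⟨inl (eA j), hAmem⟩ := by simp [hjA]
          rw [this]
          exact r1
  · -- adjacency condition
    have edge_j : ∀ j : Fin 9, j ≠ i → ∃ x y, S.Adj x y ∧
        ell n i x = lab i (eA j) ∧ ell n i y = lab i (eB j) := by
      intro j hj
      by_cases hnj : n j = 0
      · exact ⟨inl (eA j), inl (eB j), adj00 j hnj, rfl, rfl⟩
      · refine ⟨inr ⟨j, ⟨n j - 1, by omega⟩⟩, inl (eB j), adjLast j (by omega), ?_, rfl⟩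
        simp only [ell_inr]
        rw [if_neg (by rintro ⟨rfl, -⟩; exact hj rfl)]
    have edge40 : ∃ x y, S.Adj x y ∧ ell n i x = 4 ∧ ell n i y = 0 := by
      exact ⟨inr ⟨i, ⟨n i - 1, by omega⟩⟩, inl (eB i), adjLast i (by omega), by simp,
        by simp [DlabB0 i]⟩
    have edge14 : ∃ x y, S.Adj x y ∧ ell n i x = 1 ∧ ell n i y = 4 := by
      by_cases h1 : n i = 1
      · refine ⟨inl (eA i), inr ⟨i, ⟨0, by omega⟩⟩, adjFirst i (by omega),
          by simp [DlabA1 i], ?_⟩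
        simp only [ell_inr]
        split_ifs with hcond
        · rfl
        · exact absurd ⟨by trivial, show (0 : ℕ) = n i - 1 by omega⟩ hcond
      · have h2 : 2 ≤ n i := by omega
        refine ⟨_, _, adjStep (n := n) i (n i - 2) (by omega), ?_, ?_⟩
        · simp only [ell_inr]
          split_ifs with hcond
          · obtain ⟨-, h⟩ := hcond
            have h' : n i - 2 = n i - 1 := h
            omega
          · exact DlabA1 i
        · simp only [ell_inr]
          split_ifs with hcond
          · rfl
          · exact absurd ⟨by trivial, show n i - 2 + 1 = n i - 1 by omega⟩ hcond
    intro u v hne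
    constructor
    · rintro ⟨x, hx, y, hy, hadj⟩
      have hx' : ell n i x = u := hx
      have hy' : ell n i y = v := hy
      rcases ellKey i hadj with h | h
      · exact absurd (hx'.symm.trans (h.trans hy')) hne
      · rwa [hx', hy'] at h
    · intro hadj
      rw [fh_adj_iff] at hadj
      obtain ⟨-, hcase⟩ := hadj
      have main : (u : ℕ) < 4 → (v : ℕ) < 4 →
          (∃ x ∈ {w | ell n i w = u}, ∃ y ∈ {w | ell n i w = v}, S.Adj x y) := by
        intro hu hv
        obtain ⟨j, hji, hor⟩ := D2 i u v hu hv hne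
        obtain ⟨x, y, hadj', hx, hy⟩ := edge_j j hji
        rcases hor with ⟨h1, h2⟩ | ⟨h1, h2⟩
        · exact ⟨x, hx.trans h1, y, hy.trans h2, hadj'⟩
        · exact ⟨y, hy.trans h2, x, hx.trans h1, hadj'.symm⟩
      rcases hcase with (⟨hu, hv⟩ | ⟨hu, hv⟩) | (⟨hv, hu⟩ | ⟨hv, hu⟩)
      · exact main hu hv
      · subst hu
        rcases hv with rfl | rfl
        · obtain ⟨x, y, hadj', hx, hy⟩ := edge40
          exact ⟨x, hx, y, hy, hadj'⟩
        · obtain ⟨x, y, hadj', hx, hy⟩ := edge14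
          exact ⟨y, hy, x, hx, hadj'.symm⟩
      · exact main hu hv
      · subst hv
        rcases hu with rfl | rfl
        · obtain ⟨x, y, hadj', hx, hy⟩ := edge40
          exact ⟨y, hy, x, hx, hadj'.symm⟩
        · obtain ⟨x, y, hadj', hx, hy⟩ := edge14
          exact ⟨x, hx, y, hy, hadj'⟩

/-! ### Transport along isomorphisms -/

def isoInduce {V' W' : Type} {G : SimpleGraph V'} {H : SimpleGraph W'} (e : G ≃g H)
    (s : Set W') : G.induce (⇑e ⁻¹' s) ≃g H.induce s where
  toEquiv := e.toEquiv.subtypeEquiv (fun a => Iff.rfl)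
  map_rel_iff' := by intro a b; exact e.map_adj_iff

lemma IsInducedMinor.of_iso {V' W' U' : Type} {G : SimpleGraph V'} {G' : SimpleGraph W'}
    (e : G ≃g G') (H : SimpleGraph U') (h : IsInducedMinor H G) : IsInducedMinor H G' := by
  obtain ⟨X, hne, hdisj, hconn, hadj⟩ := h
  refine ⟨fun u => ⇑e.symm ⁻¹' (X u), ?_, ?_, ?_, ?_⟩
  · intro u
    obtain ⟨x, hx⟩ := hne u
    exact ⟨e x, by simp [hx]⟩
  · intro u v huv
    exact (hdisj u v huv).preimage _
  · intro u
    exact ((isoInduce e.symm (X u)).connected_iff).2 (hconn u)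
  · intro u v huv
    rw [← hadj u v huv]
    constructor
    · rintro ⟨x, hx, y, hy, ha⟩
      exact ⟨e.symm x, hx, e.symm y, hy, e.symm.map_adj_iff.mpr ha⟩
    · rintro ⟨x, hx, y, hy, ha⟩
      refine ⟨e x, by simpa using hx, e y, by simpa using hy, e.map_adj_iff.mpr ha⟩

/-! ### No model when nothing is subdivided -/

lemma sum_aux (f : Fin 5 → ℕ) (h1 : ∀ w, 1 ≤ f w) (h6 : ∑ w, f w ≤ 6)
    {u v : Fin 5} (huv : u ≠ v) (h2u : 2 ≤ f u) (h2v : 2 ≤ f v) : False := by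
  have e1 : f u + ∑ w ∈ Finset.univ.erase u, f w = ∑ w, f w :=
    Finset.add_sum_erase _ f (Finset.mem_univ u)
  have hvmem : v ∈ Finset.univ.erase u := Finset.mem_erase.2 ⟨Ne.symm huv, Finset.mem_univ v⟩
  have e2 : f v + ∑ w ∈ (Finset.univ.erase u).erase v, f w = ∑ w ∈ Finset.univ.erase u, f w :=
    Finset.add_sum_erase _ f hvmem
  have hcard : ((Finset.univ.erase u).erase v).card = 3 := by
    rw [Finset.card_erase_of_mem hvmem, Finset.card_erase_of_mem (Finset.mem_univ u),
      Finset.card_univ]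
    rfl
  have e3 : 3 ≤ ∑ w ∈ (Finset.univ.erase u).erase v, f w := by
    have := Finset.card_nsmul_le_sum ((Finset.univ.erase u).erase v) f 1
      (fun x _ => h1 x)
    rw [hcard] at this
    simpa using this
  omega

lemma no_model (n : Fin 9 → ℕ) (h0 : ∀ j, n j = 0) :
    ¬ IsInducedMinor fullHouse (subdivGraph 9 k33Edges n) := by
  classical
  rintro ⟨X, hne, hdisj, hconn, hadj⟩
  have hadjpart : ∀ x y, (subdivGraph 9 k33Edges n).Adj x y →
      ∃ a b : Fin 6, x = inl a ∧ y = inl b ∧ ((a : ℕ) < 3 ↔ ¬ ((b : ℕ) < 3)) := by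
    intro x y hxy
    have hF : ∀ (j : Fin 9) (t : Fin (n j)), False := by
      intro j t
      have := t.isLt
      have := h0 j
      omega
    refine adj_rec hxy _ ?_ ?_ ?_ ?_ ?_ ?_ ?_ ?_
    · intro j hx hy
      refine ⟨eA j, eB j, hx, hy, ?_⟩
      have := DeAlt3 j; have := DeBge3 j
      constructor <;> intro <;> omega
    · intro j hx hy
      refine ⟨eB j, eA j, hy, hx, ?_⟩
      have := DeAlt3 j; have := DeBge3 j
      constructor <;> intro h <;> omega
    · exact fun j t _ _ => absurd (hF j t) (by simp)
    · exact fun j t _ _ => absurd (hF j t) (by simp)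
    · exact fun j t _ _ _ => absurd (hF j t) (by simp)
    · exact fun j t _ _ _ => absurd (hF j t) (by simp)
    · exact fun j t s _ _ _ => absurd (hF j t) (by simp)
    · exact fun j t s _ _ _ => absurd (hF j t) (by simp)
  set F : Fin 5 → Finset (Fin 6 ⊕ Σ j : Fin 9, Fin (n j)) :=
    fun u => (Set.toFinite (X u)).toFinset with hF
  have hmemF : ∀ u x, x ∈ F u ↔ x ∈ X u := fun u x => Set.Finite.mem_toFinset _
  have hdisjF : ∀ u v, u ≠ v → Disjoint (F u) (F v) := by
    intro u v huv
    rw [Finset.disjoint_left]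
    intro x hx hy
    exact Set.disjoint_left.1 (hdisj u v huv) ((hmemF u x).1 hx) ((hmemF v x).1 hy)
  have hcardW : Fintype.card (Fin 6 ⊕ Σ j : Fin 9, Fin (n j)) = 6 := by
    simp [h0]
  have hsum : ∑ u, (F u).card ≤ 6 := by
    rw [← Finset.card_biUnion (fun u _ v _ huv => hdisjF u v huv)]
    calc (Finset.univ.biUnion F).card ≤ Fintype.card _ := Finset.card_le_univ _
    _ = 6 := hcardW
  have hone : ∀ u, 1 ≤ (F u).card := by
    intro u
    refine Finset.card_pos.mpr ?_
    obtain ⟨x, hx⟩ := hne u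
    exact ⟨x, (hmemF u x).2 hx⟩
  have hkey : ∀ u v : Fin 5, u ≠ v → (F u).card = 1 ∨ (F v).card = 1 := by
    intro u v huv
    by_contra hcon
    push_neg at hcon
    obtain ⟨h1, h2⟩ := hcon
    exact sum_aux (fun u => (F u).card) hone hsum huv
      (show 2 ≤ (F u).card by have := hone u; omega)
      (show 2 ≤ (F v).card by have := hone v; omega)
  have hsingle : ∀ u : Fin 5, (F u).card = 1 → ∃ x, ∀ y, y ∈ X u ↔ y = x := by
    intro u hu
    obtain ⟨x, hx⟩ := Finset.card_eq_one.1 hu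
    refine ⟨x, fun y => ?_⟩
    rw [← hmemF u y, hx, Finset.mem_singleton]
  have tri : ∀ a b c : Fin 5, a ≠ b → a ≠ c → b ≠ c →
      (a : ℕ) < 4 → (b : ℕ) < 4 → (c : ℕ) < 4 →
      (F a).card = 1 → (F b).card = 1 → (F c).card = 1 → False := by
    intro a b c hab hac hbc ha hb hc h1 h2 h3
    obtain ⟨x, hx⟩ := hsingle a h1
    obtain ⟨y, hy⟩ := hsingle b h2
    obtain ⟨z, hz⟩ := hsingle c h3
    have getAdj : ∀ (u v : Fin 5) (p q : Fin 6 ⊕ Σ j : Fin 9, Fin (n j)), u ≠ v →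
        (u : ℕ) < 4 → (v : ℕ) < 4 →
        (∀ w, w ∈ X u ↔ w = p) → (∀ w, w ∈ X v ↔ w = q) →
        (subdivGraph 9 k33Edges n).Adj p q := by
      intro u v p q huv hu hv hp hq
      have fha : fullHouse.Adj u v := by
        rw [fh_adj_iff]
        exact ⟨huv, Or.inl (Or.inl ⟨hu, hv⟩)⟩
      obtain ⟨x', hx', y', hy', hxy⟩ := (hadj u v huv).2 fha
      rwa [(hp x').1 hx', (hq y').1 hy'] at hxy
    obtain ⟨p1, p2, hxe, hye, hiff1⟩ := hadjpart x y (getAdj a b x y hab ha hb hx hy)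
    obtain ⟨p2', p3, hye', hze, hiff2⟩ := hadjpart y z (getAdj b c y z hbc hb hc hy hz)
    obtain ⟨p1', p3', hxe', hze', hiff3⟩ := hadjpart x z (getAdj a c x z hac ha hc hx hz)
    rw [hxe] at hxe'
    rw [hye] at hye'
    rw [hze] at hze'
    have hp1 : p1' = p1 := (Sum.inl.inj hxe').symm
    have hp2 : p2' = p2 := (Sum.inl.inj hye').symm
    have hp3 : p3' = p3 := (Sum.inl.inj hze').symm
    rw [hp1, hp3] at hiff3
    rw [hp2] at hiff2
    tauto
  rcases hkey 0 1 (by decide) with h | h <;> rcases hkey 2 3 (by decide) with h' | h'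
  · rcases hkey 1 3 (by decide) with h'' | h''
    · exact tri 0 2 1 (by decide) (by decide) (by decide)
        (by decide) (by decide) (by decide) h h' h''
    · exact tri 0 2 3 (by decide) (by decide) (by decide)
        (by decide) (by decide) (by decide) h h' h''
  · rcases hkey 1 2 (by decide) with h'' | h''
    · exact tri 0 3 1 (by decide) (by decide) (by decide)
        (by decide) (by decide) (by decide) h h' h''
    · exact tri 0 3 2 (by decide) (by decide) (by decide)
        (by decide) (by decide) (by decide) h h' h''
  · rcases hkey 0 3 (by decide) with h'' | h''
    · exact tri 1 2 0 (by decide) (by decide) (by decide)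
        (by decide) (by decide) (by decide) h h' h''
    · exact tri 1 2 3 (by decide) (by decide) (by decide)
        (by decide) (by decide) (by decide) h h' h''
  · rcases hkey 0 2 (by decide) with h'' | h''
    · exact tri 1 3 0 (by decide) (by decide) (by decide)
        (by decide) (by decide) (by decide) h h' h''
    · exact tri 1 3 2 (by decide) (by decide) (by decide)
        (by decide) (by decide) (by decide) h h' h''


/-- Let `G` be a subdivision of `K₃₃`. Then the Full House is an induced minor of `G`
if and only if at least one edge of `K₃₃` is subdivided in `G`. -/
theorem stmt14 {V : Type} [Fintype V] (G : SimpleGraph V) (n : Fin 9 → ℕ)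
    (iso : G ≃g subdivGraph 9 k33Edges n) :
    IsInducedMinor fullHouse G ↔ ∃ i : Fin 9, n i ≠ 0 := by
  constructor
  · intro h
    by_contra hno
    push_neg at hno
    exact no_model n (by simpa using hno) (IsInducedMinor.of_iso iso fullHouse h)
  · rintro ⟨i, hi⟩
    exact IsInducedMinor.of_iso iso.symm fullHouse (model_of_subdiv n i hi)
end
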